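/- arXiv:2001.01070 — 11 statements merged into one kernel-verified Lean document; each statement's English description precedes it below -/
import Mathlib

section
/- Let Φ : ℝ → [0,∞) be a convex function, let l ≤ n be a positive integer, and let φ_1,…,φ_n be random variables on a probability space with A_k ≤ φ_k ≤ B_k almost surely, where A_k < 0 < B_k. Then there exist random variables ξ_1,…,ξ_n on some probability space such that each ξ_k takes only the values A_k and B_k, E[ξ_k] = 0, the ξ_k are 𝔐_l-independent, and for every choice of real coefficients a_1,…,a_n one has E[Φ(∑_{k=1}^n a_k φ_k)] ≤ (1 + μ(φ,𝔐_l)) · E[Φ(∑_{k=1}^n a_k ξ_k)]. -/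
open MeasureTheory ProbabilityTheory Finset

set_option linter.unusedSectionVars false

/-- `ξ` is `𝔐_l`-independent: for every nonempty index set `S` of cardinality at most `l`,
the family `{ξ_j : j ∈ S}` is mutually independent. -/
def MlIndepFun {Ω : Type*} [MeasurableSpace Ω] (P : Measure Ω) {n : ℕ} (l : ℕ)
    (ξ : Fin n → Ω → ℝ) : Prop :=
  ∀ S : Finset (Fin n), S.Nonempty → S.card ≤ l →
    iIndepFun (fun j : S => ξ j) P

/-- The multiplicative error `μ(φ, 𝔐_l)` of a system `φ` over the family of nonempty
subsets of `{1,…,n}` of cardinality at most `l`. -/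
noncomputable def multError {Ω : Type*} [MeasurableSpace Ω] (P : Measure Ω) {n : ℕ} (l : ℕ)
    (A B : Fin n → ℝ) (φ : Fin n → Ω → ℝ) : ℝ :=
  ∑ S ∈ Finset.univ.powerset.filter (fun S : Finset (Fin n) => S.Nonempty ∧ S.card ≤ l),
    (∏ j ∈ S, min (-(A j)) (B j))⁻¹ * |∫ ω, ∏ j ∈ S, φ j ω ∂P|

namespace Stmt0Aux

variable {Ω : Type*} [MeasurableSpace Ω]

/-- value of the extreme random variable -/
def vv {n : ℕ} (A B : Fin n → ℝ) (j : Fin n) (b : Bool) : ℝ := if b then B j else A j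

/-- one-coordinate Bernoulli weights -/
noncomputable def gg {n : ℕ} (A B : Fin n → ℝ) (j : Fin n) (b : Bool) : ℝ :=
  if b then -A j / (B j - A j) else B j / (B j - A j)

noncomputable def lam {n : ℕ} (A B : Fin n → ℝ) (φ : Fin n → Ω → ℝ) (k : Fin n) (ω : Ω) : ℝ :=
  max 0 (min 1 ((φ k ω - A k) / (B k - A k)))

noncomputable def th {n : ℕ} (A B : Fin n → ℝ) (φ : Fin n → Ω → ℝ) (k : Fin n) (ω : Ω)
    (b : Bool) : ℝ :=
  if b then lam A B φ k ω else 1 - lam A B φ k ω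

noncomputable def num {n : ℕ} (P : Measure Ω) (A B : Fin n → ℝ) (φ : Fin n → Ω → ℝ)
    (s : Fin n → Bool) : ℝ :=
  ∫ ω, ∏ k, th A B φ k ω (s k) ∂P

noncomputable def II {n : ℕ} (P : Measure Ω) (φ : Fin n → Ω → ℝ) (T : Finset (Fin n)) : ℝ :=
  ∫ ω, ∏ j ∈ T, φ j ω ∂P

def Msets (n l : ℕ) : Finset (Finset (Fin n)) :=
  Finset.univ.powerset.filter (fun S : Finset (Fin n) => S.Nonempty ∧ S.card ≤ l)

noncomputable def rho {n : ℕ} (P : Measure Ω) (l : ℕ) (A B : Fin n → ℝ) (φ : Fin n → Ω → ℝ)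
    (s : Fin n → Bool) : ℝ :=
  (∏ j, gg A B j (s j)) *
    ∑ T ∈ Msets n l, (∏ j ∈ T, min (-A j) (B j))⁻¹ *
      (|II P φ T| - II P φ T * ∏ j ∈ T, vv A B j (s j) / max (-A j) (B j))

noncomputable def nu {n : ℕ} (P : Measure Ω) (l : ℕ) (A B : Fin n → ℝ) (φ : Fin n → Ω → ℝ)
    (s : Fin n → Bool) : ℝ :=
  num P A B φ s + rho P l A B φ s

section Algebra

variable {n : ℕ} {A B : Fin n → ℝ} (hA : ∀ k, A k < 0) (hB : ∀ k, 0 < B k)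
include hA hB

lemma hBA (k : Fin n) : (0:ℝ) < B k - A k := by have := hA k; have := hB k; linarith

lemma hM (k : Fin n) : (0:ℝ) < max (-A k) (B k) := lt_max_of_lt_right (hB k)

lemma hC (k : Fin n) : (0:ℝ) < min (-A k) (B k) := lt_min (by linarith [hA k]) (hB k)

lemma abs_vv_le (j : Fin n) (b : Bool) : |vv A B j b| ≤ max (-A j) (B j) := by
  cases b with
  | false =>
      have : vv A B j false = A j := rfl
      rw [this, abs_of_neg (hA j)]
      exact le_max_left _ _
  | true =>
      have : vv A B j true = B j := rfl
      rw [this, abs_of_pos (hB j)]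
      exact le_max_right _ _

lemma gg_nonneg (j : Fin n) (b : Bool) : 0 ≤ gg A B j b := by
  cases b with
  | false => exact div_nonneg (hB j).le (hBA hA hB j).le
  | true => exact div_nonneg (by linarith [hA j]) (hBA hA hB j).le

lemma g1 (j : Fin n) : gg A B j true + gg A B j false = 1 := by
  have hd := (hBA hA hB j).ne'
  show -A j / (B j - A j) + B j / (B j - A j) = 1
  rw [← add_div]
  rw [show -A j + B j = B j - A j by ring]
  exact div_self hd

lemma g2 (j : Fin n) : gg A B j true * vv A B j true + gg A B j false * vv A B j false = 0 := by
  have hd := (hBA hA hB j).ne'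
  show -A j / (B j - A j) * B j + B j / (B j - A j) * A j = 0
  field_simp
  ring

lemma g3 (j : Fin n) :
    gg A B j true * (vv A B j true / max (-A j) (B j)) +
      gg A B j false * (vv A B j false / max (-A j) (B j)) = 0 := by
  have h := g2 hA hB j
  rw [mul_div_assoc', mul_div_assoc', ← add_div, h, zero_div]

lemma g4 (j : Fin n) :
    gg A B j true * (vv A B j true / max (-A j) (B j) * vv A B j true) +
      gg A B j false * (vv A B j false / max (-A j) (B j) * vv A B j false) =
      min (-A j) (B j) := by
  have hmm : min (-A j) (B j) * max (-A j) (B j) = -A j * B j := min_mul_max _ _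
  have hM' := (hM hA hB j).ne'
  have hd := (hBA hA hB j).ne'
  have e : ∀ x y : ℝ, x * (y / max (-A j) (B j) * y) = x * y * y / max (-A j) (B j) := by
    intro x y; ring
  rw [e, e, ← add_div]
  have inner : gg A B j true * vv A B j true * vv A B j true +
      gg A B j false * vv A B j false * vv A B j false = -A j * B j := by
    show -A j / (B j - A j) * B j * B j + B j / (B j - A j) * A j * A j = -A j * B j
    field_simp
    ring
  rw [inner, ← hmm, mul_div_assoc, div_self hM', mul_one]

omit hA hB in
lemma sum_fun_prod (f : Fin n → Bool → ℝ) :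
    ∑ s : Fin n → Bool, ∏ k, f k (s k) = ∏ k, (f k true + f k false) := by
  classical
  calc ∑ s : Fin n → Bool, ∏ k, f k (s k)
      = ∑ s ∈ Fintype.piFinset (fun _ : Fin n => (univ : Finset Bool)), ∏ k, f k (s k) := by
        rw [Fintype.piFinset_univ]
    _ = ∏ k, ∑ b, f k b := (Finset.prod_univ_sum _ _).symm
    _ = ∏ k, (f k true + f k false) := by simp

lemma sum_gg_prod (T' T : Finset (Fin n)) :
    ∑ s : Fin n → Bool, (∏ j, gg A B j (s j)) *
        ((∏ j ∈ T', vv A B j (s j) / max (-A j) (B j)) * ∏ j ∈ T, vv A B j (s j)) =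
      if T' = T then ∏ j ∈ T, min (-A j) (B j) else 0 := by
  classical
  have key : ∀ s : Fin n → Bool,
      (∏ j, gg A B j (s j)) *
        ((∏ j ∈ T', vv A B j (s j) / max (-A j) (B j)) * ∏ j ∈ T, vv A B j (s j)) =
      ∏ j, (gg A B j (s j) *
        ((if j ∈ T' then vv A B j (s j) / max (-A j) (B j) else 1) *
          (if j ∈ T then vv A B j (s j) else 1))) := by
    intro s
    rw [Finset.prod_mul_distrib, Finset.prod_mul_distrib, Finset.prod_ite_mem,
      Finset.prod_ite_mem, univ_inter, univ_inter]
  simp_rw [key]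
  rw [sum_fun_prod (fun j b => gg A B j b *
    ((if j ∈ T' then vv A B j b / max (-A j) (B j) else 1) * (if j ∈ T then vv A B j b else 1)))]
  by_cases hTT : T' = T
  · subst hTT
    rw [if_pos rfl]
    calc ∏ k, (gg A B k true * ((if k ∈ T' then vv A B k true / max (-A k) (B k) else 1) *
            if k ∈ T' then vv A B k true else 1) +
          gg A B k false * ((if k ∈ T' then vv A B k false / max (-A k) (B k) else 1) *
            if k ∈ T' then vv A B k false else 1))
        = ∏ k, (if k ∈ T' then min (-A k) (B k) else 1) := by
          refine Finset.prod_congr rfl (fun j _ => ?_)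
          by_cases hj : j ∈ T'
          · simp only [hj, if_true]
            exact g4 hA hB j
          · simp only [hj, if_false, mul_one, one_mul]
            exact g1 hA hB j
      _ = ∏ j ∈ univ ∩ T', min (-A j) (B j) := Finset.prod_ite_mem _ _ _
      _ = ∏ j ∈ T', min (-A j) (B j) := by rw [univ_inter]
  · rw [if_neg hTT]
    have : ∃ j, (j ∈ T' ∧ j ∉ T) ∨ (j ∈ T ∧ j ∉ T') := by
      by_contra hc
      push_neg at hc
      exact hTT (Finset.ext fun j => ⟨(hc j).1, (hc j).2⟩)
    obtain ⟨j, hj⟩ := this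
    refine Finset.prod_eq_zero (Finset.mem_univ j) ?_
    rcases hj with ⟨h1, h2⟩ | ⟨h1, h2⟩
    · simp only [h1, h2, if_true, if_false, mul_one]
      exact g3 hA hB j
    · simp only [h1, h2, if_true, if_false, one_mul]
      exact g2 hA hB j

omit hA hB in
lemma sum_th_prod {φ : Fin n → Ω → ℝ} (ω : Ω) (T : Finset (Fin n)) :
    ∑ s : Fin n → Bool, (∏ k, th A B φ k ω (s k)) * ∏ j ∈ T, vv A B j (s j) =
      ∏ j ∈ T, (lam A B φ j ω * B j + (1 - lam A B φ j ω) * A j) := by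
  classical
  have key : ∀ s : Fin n → Bool,
      (∏ k, th A B φ k ω (s k)) * ∏ j ∈ T, vv A B j (s j) =
      ∏ j, (th A B φ j ω (s j) * (if j ∈ T then vv A B j (s j) else 1)) := by
    intro s
    rw [Finset.prod_mul_distrib, Finset.prod_ite_mem, univ_inter]
  simp_rw [key]
  rw [sum_fun_prod (fun j b => th A B φ j ω b * (if j ∈ T then vv A B j b else 1))]
  calc ∏ k, ((th A B φ k ω true * if k ∈ T then vv A B k true else 1) +
        th A B φ k ω false * if k ∈ T then vv A B k false else 1)
      = ∏ k, (if k ∈ T then lam A B φ k ω * B k + (1 - lam A B φ k ω) * A k else 1) := by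
        refine Finset.prod_congr rfl (fun j _ => ?_)
        by_cases hj : j ∈ T
        · simp only [hj, if_true]
          show lam A B φ j ω * B j + (1 - lam A B φ j ω) * A j = _
          rfl
        · simp only [hj, if_false, mul_one]
          show lam A B φ j ω + (1 - lam A B φ j ω) = 1
          ring
    _ = ∏ j ∈ univ ∩ T, (lam A B φ j ω * B j + (1 - lam A B φ j ω) * A j) :=
        Finset.prod_ite_mem _ _ _
    _ = ∏ j ∈ T, (lam A B φ j ω * B j + (1 - lam A B φ j ω) * A j) := by rw [univ_inter]

end Algebra


section Measure

variable {n : ℕ} {A B : Fin n → ℝ} {P : Measure Ω} {φ : Fin n → Ω → ℝ}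
variable (hA : ∀ k, A k < 0) (hB : ∀ k, 0 < B k)

lemma lam_nonneg (k : Fin n) (ω : Ω) : 0 ≤ lam A B φ k ω := le_max_left _ _

lemma lam_le_one (k : Fin n) (ω : Ω) : lam A B φ k ω ≤ 1 :=
  max_le zero_le_one (min_le_left _ _)

lemma th_nonneg (k : Fin n) (ω : Ω) (b : Bool) : 0 ≤ th A B φ k ω b := by
  cases b
  · exact sub_nonneg.2 (lam_le_one k ω)
  · exact lam_nonneg k ω

lemma th_le_one (k : Fin n) (ω : Ω) (b : Bool) : th A B φ k ω b ≤ 1 := by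
  cases b
  · have := lam_nonneg (A := A) (B := B) (φ := φ) k ω
    show 1 - lam A B φ k ω ≤ 1
    linarith
  · exact lam_le_one k ω

lemma lam_meas (hφm : ∀ k, Measurable (φ k)) (k : Fin n) : Measurable (lam A B φ k) := by
  apply Measurable.max measurable_const
  apply Measurable.min measurable_const
  exact ((hφm k).sub measurable_const).div_const _

lemma W_meas (hφm : ∀ k, Measurable (φ k)) (s : Fin n → Bool) :
    Measurable (fun ω => ∏ k, th A B φ k ω (s k)) := by
  apply Finset.measurable_prod
  intro k _
  cases hs : s k
  · exact measurable_const.sub (lam_meas hφm k)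
  · exact lam_meas hφm k

lemma W_int [IsProbabilityMeasure P] (hφm : ∀ k, Measurable (φ k)) (s : Fin n → Bool) :
    Integrable (fun ω => ∏ k, th A B φ k ω (s k)) P := by
  refine Integrable.mono' (integrable_const 1) ((W_meas hφm s).aestronglyMeasurable)
    (Filter.Eventually.of_forall fun ω => ?_)
  have h0 : 0 ≤ ∏ k, th A B φ k ω (s k) :=
    Finset.prod_nonneg fun k _ => th_nonneg k ω (s k)
  rw [Real.norm_of_nonneg h0]
  exact Finset.prod_le_one (fun k _ => th_nonneg k ω (s k)) (fun k _ => th_le_one k ω (s k))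

include hA hB in
lemma lam_eq (hφm : ∀ k, Measurable (φ k))
    {ω : Ω} (hω : ∀ k, A k ≤ φ k ω ∧ φ k ω ≤ B k) (k : Fin n) :
    lam A B φ k ω * B k + (1 - lam A B φ k ω) * A k = φ k ω := by
  have hd := hBA hA hB k
  have hl : lam A B φ k ω = (φ k ω - A k) / (B k - A k) := by
    unfold lam
    rw [min_eq_right, max_eq_right]
    · exact div_nonneg (by linarith [(hω k).1]) hd.le
    · rw [div_le_one hd]; linarith [(hω k).2]
  rw [hl]
  field_simp
  ring

include hA hB in
lemma sum_num_moment [IsProbabilityMeasure P] (hφm : ∀ k, Measurable (φ k))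
    (hφb : ∀ k, ∀ᵐ ω ∂P, A k ≤ φ k ω ∧ φ k ω ≤ B k) (T : Finset (Fin n)) :
    ∑ s : Fin n → Bool, num P A B φ s * ∏ j ∈ T, vv A B j (s j) =
      ∫ ω, ∏ j ∈ T, φ j ω ∂P := by
  unfold num
  have e1 : ∀ s : Fin n → Bool,
      (∫ ω, ∏ k, th A B φ k ω (s k) ∂P) * ∏ j ∈ T, vv A B j (s j) =
      ∫ ω, (∏ k, th A B φ k ω (s k)) * ∏ j ∈ T, vv A B j (s j) ∂P := by
    intro s
    rw [integral_mul_const]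
  simp_rw [e1]
  rw [← integral_finset_sum _ (fun s _ => (W_int hφm s).mul_const _)]
  have hb : ∀ᵐ ω ∂P, ∀ k, A k ≤ φ k ω ∧ φ k ω ≤ B k := (ae_all_iff).2 hφb
  refine integral_congr_ae ?_
  filter_upwards [hb] with ω hω
  rw [sum_th_prod ω T]
  exact Finset.prod_congr rfl fun j _ => lam_eq hA hB hφm hω j

include hA hB in
lemma sum_rho_moment (T₀ : Finset (Fin n)) {l : ℕ} :
    ∑ s : Fin n → Bool, rho P l A B φ s * ∏ j ∈ T₀, vv A B j (s j) =
      (if T₀ = ∅ then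
        ∑ T ∈ Msets n l, (∏ j ∈ T, min (-A j) (B j))⁻¹ * |II P φ T| else 0)
      - (if T₀ ∈ Msets n l then II P φ T₀ else 0) := by
  classical
  unfold rho
  have e1 : ∀ s : Fin n → Bool,
      ((∏ j, gg A B j (s j)) *
        ∑ T ∈ Msets n l, (∏ j ∈ T, min (-A j) (B j))⁻¹ *
          (|II P φ T| - II P φ T * ∏ j ∈ T, vv A B j (s j) / max (-A j) (B j))) *
        ∏ j ∈ T₀, vv A B j (s j) =
      ∑ T ∈ Msets n l,
        ((∏ j ∈ T, min (-A j) (B j))⁻¹ * |II P φ T| *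
          ((∏ j, gg A B j (s j)) * ((∏ j ∈ (∅ : Finset (Fin n)), vv A B j (s j) / max (-A j) (B j)) * ∏ j ∈ T₀, vv A B j (s j)))
        - (∏ j ∈ T, min (-A j) (B j))⁻¹ * II P φ T *
          ((∏ j, gg A B j (s j)) * ((∏ j ∈ T, vv A B j (s j) / max (-A j) (B j)) * ∏ j ∈ T₀, vv A B j (s j)))) := by
    intro s
    rw [Finset.mul_sum, Finset.sum_mul]
    refine Finset.sum_congr rfl fun T _ => ?_
    rw [Finset.prod_empty]
    ring
  simp_rw [e1]
  rw [Finset.sum_comm]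
  have e2 : ∀ T ∈ Msets n l,
      (∑ s : Fin n → Bool,
        ((∏ j ∈ T, min (-A j) (B j))⁻¹ * |II P φ T| *
          ((∏ j, gg A B j (s j)) * ((∏ j ∈ (∅ : Finset (Fin n)), vv A B j (s j) / max (-A j) (B j)) * ∏ j ∈ T₀, vv A B j (s j)))
        - (∏ j ∈ T, min (-A j) (B j))⁻¹ * II P φ T *
          ((∏ j, gg A B j (s j)) * ((∏ j ∈ T, vv A B j (s j) / max (-A j) (B j)) * ∏ j ∈ T₀, vv A B j (s j))))) =
      (∏ j ∈ T, min (-A j) (B j))⁻¹ * |II P φ T| * (if (∅ : Finset (Fin n)) = T₀ then ∏ j ∈ T₀, min (-A j) (B j) else 0)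
      - (∏ j ∈ T, min (-A j) (B j))⁻¹ * II P φ T * (if T = T₀ then ∏ j ∈ T₀, min (-A j) (B j) else 0) := by
    intro T _
    rw [Finset.sum_sub_distrib, ← Finset.mul_sum, ← Finset.mul_sum,
      sum_gg_prod hA hB ∅ T₀, sum_gg_prod hA hB T T₀]
  rw [Finset.sum_congr rfl e2, Finset.sum_sub_distrib]
  congr 1
  · by_cases h0 : T₀ = ∅
    · subst h0
      simp
    · rw [if_neg h0]
      refine Finset.sum_eq_zero fun T _ => ?_
      rw [if_neg (fun h => h0 h.symm), mul_zero]
  · by_cases h0 : T₀ ∈ Msets n l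
    · rw [if_pos h0, Finset.sum_eq_single T₀]
      · have hne := (Finset.prod_pos fun j _ => hC hA hB j :
          (0:ℝ) < ∏ j ∈ T₀, min (-A j) (B j)).ne'
        rw [if_pos (rfl : T₀ = T₀)]
        field_simp
      · intro T _ hne
        rw [if_neg hne, mul_zero]
      · intro h
        exact absurd h0 h
    · rw [if_neg h0]
      refine Finset.sum_eq_zero fun T hT => ?_
      rw [if_neg, mul_zero]
      intro h
      exact h0 (h ▸ hT)

include hA hB in
lemma sum_nu [IsProbabilityMeasure P] (hφm : ∀ k, Measurable (φ k))
    (hφb : ∀ k, ∀ᵐ ω ∂P, A k ≤ φ k ω ∧ φ k ω ≤ B k) (l : ℕ) :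
    ∑ s : Fin n → Bool, nu P l A B φ s =
      1 + ∑ T ∈ Msets n l, (∏ j ∈ T, min (-A j) (B j))⁻¹ * |II P φ T| := by
  unfold nu
  rw [Finset.sum_add_distrib]
  have h1 : ∑ s : Fin n → Bool, num P A B φ s = 1 := by
    have h := sum_num_moment hA hB hφm hφb (∅ : Finset (Fin n))
    simpa using h
  have h2 := sum_rho_moment hA hB (P := P) (φ := φ) (∅ : Finset (Fin n)) (l := l)
  have hnm : (∅ : Finset (Fin n)) ∉ Msets n l := by
    simp [Msets]
  rw [if_pos rfl, if_neg hnm, sub_zero] at h2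
  simp only [Finset.prod_empty, mul_one] at h2
  rw [h1, h2]

include hA hB in
lemma sum_nu_moment [IsProbabilityMeasure P] (hφm : ∀ k, Measurable (φ k))
    (hφb : ∀ k, ∀ᵐ ω ∂P, A k ≤ φ k ω ∧ φ k ω ≤ B k) {l : ℕ}
    (T : Finset (Fin n)) (hT : T.Nonempty) (hTl : T.card ≤ l) :
    ∑ s : Fin n → Bool, nu P l A B φ s * ∏ j ∈ T, vv A B j (s j) = 0 := by
  unfold nu
  simp_rw [add_mul]
  rw [Finset.sum_add_distrib, sum_num_moment hA hB hφm hφb T, sum_rho_moment hA hB T]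
  have hne : T ≠ ∅ := hT.ne_empty
  have hmem : T ∈ Msets n l := by
    simp only [Msets, Finset.mem_filter, Finset.mem_powerset]
    exact ⟨Finset.subset_univ T, hT, hTl⟩
  rw [if_neg hne, if_pos hmem]
  unfold II
  ring

include hA hB in
lemma rho_nonneg {l : ℕ} (s : Fin n → Bool) : 0 ≤ rho P l A B φ s := by
  unfold rho
  refine mul_nonneg (Finset.prod_nonneg fun j _ => gg_nonneg hA hB j (s j)) ?_
  refine Finset.sum_nonneg fun T _ => mul_nonneg ?_ ?_
  · exact inv_nonneg.2 (Finset.prod_nonneg fun j _ => (hC hA hB j).le)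
  · rw [sub_nonneg]
    calc II P φ T * ∏ j ∈ T, vv A B j (s j) / max (-A j) (B j)
        ≤ |II P φ T * ∏ j ∈ T, vv A B j (s j) / max (-A j) (B j)| := le_abs_self _
      _ = |II P φ T| * |∏ j ∈ T, vv A B j (s j) / max (-A j) (B j)| := abs_mul _ _
      _ ≤ |II P φ T| * 1 := by
          refine mul_le_mul_of_nonneg_left ?_ (abs_nonneg _)
          rw [Finset.abs_prod]
          refine Finset.prod_le_one (fun j _ => abs_nonneg _) (fun j _ => ?_)
          rw [abs_div, abs_of_pos (hM hA hB j), div_le_one (hM hA hB j)]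
          exact abs_vv_le hA hB j (s j)
      _ = |II P φ T| := mul_one _

lemma num_nonneg (s : Fin n → Bool) : 0 ≤ num P A B φ s :=
  integral_nonneg fun ω => Finset.prod_nonneg fun k _ => th_nonneg k ω (s k)

include hA hB in
lemma nu_nonneg {l : ℕ} (s : Fin n → Bool) : 0 ≤ nu P l A B φ s :=
  add_nonneg (num_nonneg s) (rho_nonneg hA hB s)

include hA hB in
lemma sum_nu_indicator [IsProbabilityMeasure P] (hφm : ∀ k, Measurable (φ k))
    (hφb : ∀ k, ∀ᵐ ω ∂P, A k ≤ φ k ω ∧ φ k ω ≤ B k) {l : ℕ}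
    (t : Finset (Fin n)) (ht : t.card ≤ l) (Fb : Fin n → Finset Bool) :
    ∑ s : Fin n → Bool, nu P l A B φ s * ∏ j ∈ t, (if s j ∈ Fb j then (1:ℝ) else 0) =
      (1 + ∑ T ∈ Msets n l, (∏ j ∈ T, min (-A j) (B j))⁻¹ * |II P φ T|) *
        ∏ j ∈ t, ∑ b ∈ Fb j, gg A B j b := by
  classical
  have hind : ∀ (j : Fin n) (sb : Bool), (if sb ∈ Fb j then (1:ℝ) else 0) =
      (∑ b ∈ Fb j, gg A B j b) +
        (∑ b ∈ Fb j, (if b then (1:ℝ) else -1) / (B j - A j)) * vv A B j sb := by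
    intro j sb
    have hd := (hBA hA hB j).ne'
    have hu : ∀ b : Bool, gg A B j b + (if b then (1:ℝ) else -1) / (B j - A j) * vv A B j sb
        = if b = sb then 1 else 0 := by
      intro b
      cases b <;> cases sb <;>
        simp only [gg, vv, if_true, if_false, Bool.true_eq_false, Bool.false_eq_true] <;>
        field_simp <;> ring
    calc (if sb ∈ Fb j then (1:ℝ) else 0)
        = ∑ b ∈ Fb j, (if b = sb then (1:ℝ) else 0) := by
          rw [Finset.sum_ite_eq' (Fb j) sb (fun _ => (1:ℝ))]
      _ = ∑ b ∈ Fb j, (gg A B j b + (if b then (1:ℝ) else -1) / (B j - A j) * vv A B j sb) := by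
          exact Finset.sum_congr rfl fun b _ => (hu b).symm
      _ = _ := by
          rw [Finset.sum_add_distrib, ← Finset.sum_mul]
  simp_rw [hind]
  set c : Fin n → ℝ := fun j => ∑ b ∈ Fb j, gg A B j b with hc
  set d : Fin n → ℝ := fun j => ∑ b ∈ Fb j, (if b then (1:ℝ) else -1) / (B j - A j) with hdd
  have hprod : ∀ s : Fin n → Bool, ∏ j ∈ t, (c j + d j * vv A B j (s j)) =
      ∑ T ∈ t.powerset, (∏ j ∈ T, c j) * ∏ j ∈ t \ T, (d j * vv A B j (s j)) :=
    fun s => Finset.prod_add _ _ t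
  have hprod' : ∀ s : Fin n → Bool, ∏ j ∈ t, (∑ b ∈ Fb j, gg A B j b +
      (∑ b ∈ Fb j, (if b then (1:ℝ) else -1) / (B j - A j)) * vv A B j (s j)) =
      ∑ T ∈ t.powerset, (∏ j ∈ T, c j) * ∏ j ∈ t \ T, (d j * vv A B j (s j)) := hprod
  simp_rw [hprod', Finset.mul_sum]
  rw [Finset.sum_comm]
  have inner : ∀ T ∈ t.powerset,
      (∑ s : Fin n → Bool, nu P l A B φ s *
        ((∏ j ∈ T, c j) * ∏ j ∈ t \ T, (d j * vv A B j (s j)))) =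
      if T = t then (∏ j ∈ t, c j) *
        (1 + ∑ T' ∈ Msets n l, (∏ j ∈ T', min (-A j) (B j))⁻¹ * |II P φ T'|) else 0 := by
    intro T hT
    rcases eq_or_ne T t with h | h
    · subst h
      rw [if_pos rfl, Finset.sdiff_self]
      simp only [Finset.prod_empty, mul_one]
      rw [← Finset.sum_mul, sum_nu hA hB hφm hφb l]
      ring
    · rw [if_neg h]
      have hsub : T ⊆ t := Finset.mem_powerset.1 hT
      have hne : (t \ T).Nonempty :=
        Finset.sdiff_nonempty.2 fun hsub' => h (Finset.Subset.antisymm hsub hsub')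
      have hcard : (t \ T).card ≤ l := le_trans (Finset.card_le_card (Finset.sdiff_subset)) ht
      have e : ∀ s : Fin n → Bool,
          nu P l A B φ s * ((∏ j ∈ T, c j) * ∏ j ∈ t \ T, (d j * vv A B j (s j))) =
          ((∏ j ∈ T, c j) * ∏ j ∈ t \ T, d j) *
            (nu P l A B φ s * ∏ j ∈ t \ T, vv A B j (s j)) := by
        intro s
        rw [Finset.prod_mul_distrib]
        ring
      simp_rw [e]
      rw [← Finset.mul_sum, sum_nu_moment hA hB hφm hφb (t \ T) hne hcard, mul_zero]
  rw [Finset.sum_congr rfl inner, Finset.sum_ite_eq' t.powerset t, if_pos (Finset.mem_powerset_self t)]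
  ring

end Measure



end Stmt0Aux

theorem stmt_0 {Ω : Type*} [MeasurableSpace Ω] (P : Measure Ω) [IsProbabilityMeasure P]
    (n l : ℕ) (hl : 1 ≤ l) (hln : l ≤ n)
    (Φ : ℝ → ℝ) (hΦ : ConvexOn ℝ Set.univ Φ) (hΦ0 : ∀ x, 0 ≤ Φ x)
    (A B : Fin n → ℝ) (hA : ∀ k, A k < 0) (hB : ∀ k, 0 < B k)
    (φ : Fin n → Ω → ℝ) (hφm : ∀ k, Measurable (φ k))
    (hφb : ∀ k, ∀ᵐ ω ∂P, A k ≤ φ k ω ∧ φ k ω ≤ B k) :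
    ∃ (Ω' : Type) (_ : MeasurableSpace Ω') (Q : Measure Ω') (_ : IsProbabilityMeasure Q)
      (ξ : Fin n → Ω' → ℝ),
      (∀ k, Measurable (ξ k)) ∧
      (∀ k, ∀ ω, ξ k ω = A k ∨ ξ k ω = B k) ∧
      (∀ k, ∫ ω, ξ k ω ∂Q = 0) ∧
      MlIndepFun Q l ξ ∧
      ∀ a : Fin n → ℝ,
        ∫ ω, Φ (∑ k, a k * φ k ω) ∂P ≤
          (1 + multError P l A B φ) * ∫ ω, Φ (∑ k, a k * ξ k ω) ∂Q := by
  classical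
  set με := multError P l A B φ with hμe
  have hMEeq : με =
      ∑ T ∈ Stmt0Aux.Msets n l, (∏ j ∈ T, min (-A j) (B j))⁻¹ * |Stmt0Aux.II P φ T| := rfl
  have hμ0 : 0 ≤ με := by
    rw [hMEeq]
    exact Finset.sum_nonneg fun T _ => mul_nonneg
      (inv_nonneg.2 (Finset.prod_nonneg fun j _ => (Stmt0Aux.hC hA hB j).le)) (abs_nonneg _)
  have h1μ : (0:ℝ) < 1 + με := by linarith
  have hν0 : ∀ s : Fin n → Bool, 0 ≤ Stmt0Aux.nu P l A B φ s :=
    fun s => Stmt0Aux.nu_nonneg hA hB s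
  have hνsum : ∑ s : Fin n → Bool, Stmt0Aux.nu P l A B φ s = 1 + με := by
    rw [hMEeq]
    exact Stmt0Aux.sum_nu hA hB hφm hφb l
  letI mΩ' : MeasurableSpace (Fin n → Bool) := ⊤
  haveI hsc : MeasurableSingletonClass (Fin n → Bool) :=
    ⟨fun _ => MeasurableSpace.measurableSet_top⟩
  set Q : Measure (Fin n → Bool) := (ENNReal.ofReal (1 + με))⁻¹ •
    ∑ s : Fin n → Bool, ENNReal.ofReal (Stmt0Aux.nu P l A B φ s) • Measure.dirac s with hQ
  have QA : ∀ E : Set (Fin n → Bool),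
      Q E = ENNReal.ofReal ((1 + με)⁻¹ *
        ∑ s : Fin n → Bool, if s ∈ E then Stmt0Aux.nu P l A B φ s else 0) := by
    intro E
    have hnn : ∀ s ∈ (Finset.univ : Finset (Fin n → Bool)),
        0 ≤ (if s ∈ E then Stmt0Aux.nu P l A B φ s else 0) := by
      intro s _
      by_cases hs : s ∈ E
      · rw [if_pos hs]; exact hν0 s
      · rw [if_neg hs]
    rw [ENNReal.ofReal_mul (by positivity), ENNReal.ofReal_inv_of_pos h1μ,
      ENNReal.ofReal_sum_of_nonneg hnn, hQ, Measure.smul_apply, smul_eq_mul,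
      Measure.finset_sum_apply]
    congr 1
    refine Finset.sum_congr rfl fun s _ => ?_
    rw [Measure.smul_apply, smul_eq_mul,
      Measure.dirac_apply' _ MeasurableSpace.measurableSet_top]
    by_cases hs : s ∈ E
    · rw [Set.indicator_of_mem hs, if_pos hs, Pi.one_apply, mul_one]
    · rw [Set.indicator_of_notMem hs, if_neg hs, mul_zero, ENNReal.ofReal_zero]
  have QI : ∀ f : (Fin n → Bool) → ℝ, ∫ s, f s ∂Q =
      (1 + με)⁻¹ * ∑ s : Fin n → Bool, Stmt0Aux.nu P l A B φ s * f s := by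
    intro f
    rw [hQ, integral_smul_measure,
      integral_finset_sum_measure (fun s _ => (Integrable.of_finite).smul_measure
        ENNReal.ofReal_ne_top)]
    simp_rw [integral_smul_measure, integral_dirac, ENNReal.toReal_ofReal (hν0 _), smul_eq_mul]
    rw [ENNReal.toReal_inv, ENNReal.toReal_ofReal h1μ.le]
  haveI hQP : IsProbabilityMeasure Q := by
    constructor
    rw [QA Set.univ]
    simp only [Set.mem_univ, if_true]
    rw [hνsum, inv_mul_cancel₀ h1μ.ne', ENNReal.ofReal_one]
  refine ⟨Fin n → Bool, mΩ', Q, hQP, fun k s => Stmt0Aux.vv A B k (s k), ?_, ?_, ?_, ?_, ?_⟩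
  · intro k
    exact fun _ _ => trivial
  · intro k s
    cases hsk : s k
    · left
      simp [Stmt0Aux.vv, hsk]
    · right
      simp [Stmt0Aux.vv, hsk]
  · intro k
    rw [QI]
    have h := Stmt0Aux.sum_nu_moment hA hB hφm hφb ({k} : Finset (Fin n))
      (Finset.singleton_nonempty k) (by simpa using hl)
    simp only [Finset.prod_singleton] at h
    rw [h, mul_zero]
  · -- independence
    intro S hSne hSl
    rw [ProbabilityTheory.iIndepFun_iff_measure_inter_preimage_eq_mul]
    intro F sets hsets
    set Fb : Fin n → Finset Bool := fun j =>
      if h : j ∈ S then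
        (if (⟨j, h⟩ : {x // x ∈ S}) ∈ F then
          Finset.univ.filter (fun b => Stmt0Aux.vv A B j b ∈ sets ⟨j, h⟩) else Finset.univ)
      else Finset.univ with hFb
    set t : Finset (Fin n) := F.image Subtype.val with htdef
    have htcard : t.card ≤ l := by
      rw [htdef, Finset.card_image_of_injective _ Subtype.val_injective]
      calc F.card ≤ Fintype.card {x // x ∈ S} := Finset.card_le_univ F
        _ = S.card := Fintype.card_coe S
        _ ≤ l := hSl
    have hFbmem : ∀ (i : {x // x ∈ S}), i ∈ F → ∀ b : Bool,
        (b ∈ Fb (↑i : Fin n) ↔ Stmt0Aux.vv A B (↑i) b ∈ sets i) := by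
      intro i hi b
      have h1 : (↑i : Fin n) ∈ S := i.2
      have h2 : (⟨(↑i : Fin n), h1⟩ : {x // x ∈ S}) = i := Subtype.coe_eta i h1
      rw [hFb]
      simp only [dif_pos h1, h2, if_pos hi, Finset.mem_filter, Finset.mem_univ, true_and]
    have hgsum : ∀ (t' : Finset (Fin n)), t'.card ≤ l →
        ∑ s : Fin n → Bool, (if ∀ j ∈ t', s j ∈ Fb j then Stmt0Aux.nu P l A B φ s else 0) =
          (1 + με) * ∏ j ∈ t', ∑ b ∈ Fb j, Stmt0Aux.gg A B j b := by
      intro t' ht'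
      have e : ∀ s : Fin n → Bool,
          (if ∀ j ∈ t', s j ∈ Fb j then Stmt0Aux.nu P l A B φ s else 0) =
          Stmt0Aux.nu P l A B φ s * ∏ j ∈ t', (if s j ∈ Fb j then (1:ℝ) else 0) := by
        intro s
        by_cases hs : ∀ j ∈ t', s j ∈ Fb j
        · rw [if_pos hs, Finset.prod_eq_one (fun j hj => if_pos (hs j hj)), mul_one]
        · push_neg at hs
          obtain ⟨j, hj, hsj⟩ := hs
          rw [if_neg (by push_neg; exact ⟨j, hj, hsj⟩),
            Finset.prod_eq_zero hj (if_neg hsj : (if s j ∈ Fb j then (1:ℝ) else 0) = 0),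
            mul_zero]
      rw [Finset.sum_congr rfl (fun s _ => e s),
        Stmt0Aux.sum_nu_indicator hA hB hφm hφb t' ht' Fb, ← hMEeq]
    have hL : Q (⋂ i ∈ F, (fun s : Fin n → Bool => Stmt0Aux.vv A B (↑i) (s ↑i)) ⁻¹' sets i) =
        ENNReal.ofReal (∏ j ∈ t, ∑ b ∈ Fb j, Stmt0Aux.gg A B j b) := by
      rw [QA]
      have hseteq : ∀ s : Fin n → Bool,
          s ∈ (⋂ i ∈ F, (fun s : Fin n → Bool => Stmt0Aux.vv A B (↑i) (s ↑i)) ⁻¹' sets i) ↔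
          (∀ j ∈ t, s j ∈ Fb j) := by
        intro s
        rw [Set.mem_iInter₂]
        constructor
        · intro h j hj
          rw [htdef] at hj
          obtain ⟨i, hiF, rfl⟩ := Finset.mem_image.1 hj
          rw [hFbmem i hiF]
          exact h i hiF
        · intro h i hiF
          have hj : (↑i : Fin n) ∈ t := by
            rw [htdef]; exact Finset.mem_image_of_mem _ hiF
          have := h (↑i) hj
          rw [hFbmem i hiF] at this
          exact this
      have : ∀ s : Fin n → Bool,
          (if s ∈ (⋂ i ∈ F, (fun s : Fin n → Bool => Stmt0Aux.vv A B (↑i) (s ↑i)) ⁻¹' sets i)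
            then Stmt0Aux.nu P l A B φ s else 0) =
          (if ∀ j ∈ t, s j ∈ Fb j then Stmt0Aux.nu P l A B φ s else 0) := by
        intro s
        by_cases hs : ∀ j ∈ t, s j ∈ Fb j
        · rw [if_pos ((hseteq s).2 hs), if_pos hs]
        · rw [if_neg (fun hmem => hs ((hseteq s).1 hmem)), if_neg hs]
      rw [Finset.sum_congr rfl (fun s _ => this s), hgsum t htcard,
        inv_mul_cancel_left₀ h1μ.ne']
    have hR : ∀ i ∈ F,
        Q ((fun s : Fin n → Bool => Stmt0Aux.vv A B (↑i : Fin n) (s ↑i)) ⁻¹' sets i) =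
        ENNReal.ofReal (∑ b ∈ Fb (↑i : Fin n), Stmt0Aux.gg A B (↑i) b) := by
      intro i hi
      rw [QA]
      have hone : ({(↑i : Fin n)} : Finset (Fin n)).card ≤ l := by simpa using hl
      have e : ∀ s : Fin n → Bool,
          (if s ∈ (fun s : Fin n → Bool => Stmt0Aux.vv A B (↑i : Fin n) (s ↑i)) ⁻¹' sets i
            then Stmt0Aux.nu P l A B φ s else 0) =
          (if ∀ j ∈ ({(↑i : Fin n)} : Finset (Fin n)), s j ∈ Fb j
            then Stmt0Aux.nu P l A B φ s else 0) := by
        intro s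
        have hmemiff : s ∈ (fun s : Fin n → Bool =>
            Stmt0Aux.vv A B (↑i : Fin n) (s ↑i)) ⁻¹' sets i ↔ s (↑i) ∈ Fb (↑i : Fin n) :=
          (hFbmem i hi (s ↑i)).symm
        by_cases hs : s (↑i : Fin n) ∈ Fb (↑i : Fin n)
        · rw [if_pos (hmemiff.2 hs), if_pos (by simpa using hs)]
        · rw [if_neg (fun hmem => hs (hmemiff.1 hmem)), if_neg (by simpa using hs)]
      rw [Finset.sum_congr rfl (fun s _ => e s), hgsum _ hone, Finset.prod_singleton,
        inv_mul_cancel_left₀ h1μ.ne']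
    rw [hL, Finset.prod_congr rfl hR,
      ← ENNReal.ofReal_prod_of_nonneg
        (fun i _ => Finset.sum_nonneg fun b _ => Stmt0Aux.gg_nonneg hA hB _ b)]
    congr 1
    rw [htdef, Finset.prod_image (fun x _ y _ h => Subtype.val_injective h)]
  · -- the comparison inequality
    intro a
    rw [QI (fun s => Φ (∑ k, a k * Stmt0Aux.vv A B k (s k))), ← mul_assoc,
      mul_inv_cancel₀ h1μ.ne', one_mul]
    by_cases hInt : Integrable (fun ω => Φ (∑ k, a k * φ k ω)) P
    · have hint2 : Integrable (fun ω => ∑ s : Fin n → Bool,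
          (∏ k, Stmt0Aux.th A B φ k ω (s k)) *
            Φ (∑ k, a k * Stmt0Aux.vv A B k (s k))) P :=
        integrable_finset_sum _ (fun s _ => (Stmt0Aux.W_int hφm s).mul_const _)
      have step1 : ∫ ω, Φ (∑ k, a k * φ k ω) ∂P ≤
          ∫ ω, ∑ s : Fin n → Bool, (∏ k, Stmt0Aux.th A B φ k ω (s k)) *
            Φ (∑ k, a k * Stmt0Aux.vv A B k (s k)) ∂P := by
        refine integral_mono_ae hInt hint2 ?_
        filter_upwards [ae_all_iff.2 hφb] with ω hω
        have hw1 : ∑ s : Fin n → Bool, ∏ k, Stmt0Aux.th A B φ k ω (s k) = 1 := by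
          have h := Stmt0Aux.sum_th_prod (A := A) (B := B) (φ := φ) ω (∅ : Finset (Fin n))
          simpa using h
        have hmean : ∑ s : Fin n → Bool, (∏ k, Stmt0Aux.th A B φ k ω (s k)) •
            (∑ k, a k * Stmt0Aux.vv A B k (s k)) = ∑ k, a k * φ k ω := by
          simp_rw [smul_eq_mul, Finset.mul_sum]
          rw [Finset.sum_comm]
          refine Finset.sum_congr rfl fun k _ => ?_
          have h1 : ∑ s : Fin n → Bool,
              (∏ j, Stmt0Aux.th A B φ j ω (s j)) * Stmt0Aux.vv A B k (s k) = φ k ω := by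
            have h2 := Stmt0Aux.sum_th_prod (A := A) (B := B) (φ := φ) ω
              ({k} : Finset (Fin n))
            simp only [Finset.prod_singleton] at h2
            rw [h2]
            exact Stmt0Aux.lam_eq hA hB hφm hω k
          calc ∑ s : Fin n → Bool, (∏ j, Stmt0Aux.th A B φ j ω (s j)) *
                (a k * Stmt0Aux.vv A B k (s k))
              = a k * ∑ s : Fin n → Bool,
                (∏ j, Stmt0Aux.th A B φ j ω (s j)) * Stmt0Aux.vv A B k (s k) := by
                rw [Finset.mul_sum]
                exact Finset.sum_congr rfl fun s _ => by ring
            _ = a k * φ k ω := by rw [h1]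
        calc Φ (∑ k, a k * φ k ω)
            = Φ (∑ s : Fin n → Bool, (∏ k, Stmt0Aux.th A B φ k ω (s k)) •
                (∑ k, a k * Stmt0Aux.vv A B k (s k))) := by rw [hmean]
          _ ≤ ∑ s : Fin n → Bool, (∏ k, Stmt0Aux.th A B φ k ω (s k)) •
                Φ (∑ k, a k * Stmt0Aux.vv A B k (s k)) :=
              hΦ.map_sum_le
                (fun s _ => Finset.prod_nonneg fun k _ => Stmt0Aux.th_nonneg k ω (s k))
                hw1 (fun _ _ => Set.mem_univ _)
          _ = ∑ s : Fin n → Bool, (∏ k, Stmt0Aux.th A B φ k ω (s k)) *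
                Φ (∑ k, a k * Stmt0Aux.vv A B k (s k)) := by
              exact Finset.sum_congr rfl fun s _ => smul_eq_mul _ _
      have step2 : ∫ ω, ∑ s : Fin n → Bool, (∏ k, Stmt0Aux.th A B φ k ω (s k)) *
            Φ (∑ k, a k * Stmt0Aux.vv A B k (s k)) ∂P =
          ∑ s : Fin n → Bool, Stmt0Aux.num P A B φ s *
            Φ (∑ k, a k * Stmt0Aux.vv A B k (s k)) := by
        rw [integral_finset_sum _ (fun s _ => (Stmt0Aux.W_int hφm s).mul_const _)]
        exact Finset.sum_congr rfl fun s _ => integral_mul_const _ _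
      have step3 : ∑ s : Fin n → Bool, Stmt0Aux.num P A B φ s *
            Φ (∑ k, a k * Stmt0Aux.vv A B k (s k)) ≤
          ∑ s : Fin n → Bool, Stmt0Aux.nu P l A B φ s *
            Φ (∑ k, a k * Stmt0Aux.vv A B k (s k)) := by
        refine Finset.sum_le_sum fun s _ => ?_
        have hrho : 0 ≤ Stmt0Aux.rho P l A B φ s := Stmt0Aux.rho_nonneg hA hB s
        have hnu : Stmt0Aux.nu P l A B φ s =
            Stmt0Aux.num P A B φ s + Stmt0Aux.rho P l A B φ s := rfl
        rw [hnu, add_mul]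
        have := mul_nonneg hrho (hΦ0 (∑ k, a k * Stmt0Aux.vv A B k (s k)))
        linarith
      calc ∫ ω, Φ (∑ k, a k * φ k ω) ∂P
          ≤ ∫ ω, ∑ s : Fin n → Bool, (∏ k, Stmt0Aux.th A B φ k ω (s k)) *
              Φ (∑ k, a k * Stmt0Aux.vv A B k (s k)) ∂P := step1
        _ = ∑ s : Fin n → Bool, Stmt0Aux.num P A B φ s *
              Φ (∑ k, a k * Stmt0Aux.vv A B k (s k)) := step2
        _ ≤ ∑ s : Fin n → Bool, Stmt0Aux.nu P l A B φ s *
              Φ (∑ k, a k * Stmt0Aux.vv A B k (s k)) := step3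
    · rw [integral_undef hInt]
      exact Finset.sum_nonneg fun s _ => mul_nonneg (hν0 s) (hΦ0 _)
end

section
/- Let Φ : ℝ → [0,∞) be a convex function, let l ≤ n be a positive integer, and let φ_1,…,φ_n be an 𝔐_l-multiplicative system of random variables with ‖φ_k‖_∞ ≤ 1 for all k. Then there exist 𝔐_l-independent Rademacher random variables r_1,…,r_n on some probability space such that for every choice of real coefficients a_1,…,a_n one has E[Φ(∑_{k=1}^n a_k φ_k)] ≤ E[Φ(∑_{k=1}^n a_k r_k)]. -/
open MeasureTheory ProbabilityTheory

/-- `r` is a Rademacher random variable: it takes the values `+1` and `-1`,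
each with probability `1/2`. -/
def IsRademacher {Ω : Type*} [MeasurableSpace Ω] (Q : Measure Ω) (r : Ω → ℝ) : Prop :=
  (∀ ω, r ω = 1 ∨ r ω = -1) ∧ Q {ω | r ω = 1} = 1/2 ∧ Q {ω | r ω = -1} = 1/2

/-!
Identify `Bool` with `{±1}` via `boolSign`. For `|x k| ≤ 1` the weights
`signWeight x s = ∏ k, (1 + s k * x k) / 2` form a probability vector on sign vectors `s`
with barycentre `x`, so Jensen's inequality gives
`Φ (∑ a k * x k) ≤ ∑ s, signWeight x s * Φ (∑ a k * s k)`. Taking `x = φ · ω` and integrating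
over `ω`, the right-hand side becomes `E_Q Φ (∑ a k * r k)` for the mixture `Q` of these product
laws. Expanding `∏ k ∈ T, (α k + β k * φ k)` into monomials shows that multiplicativity of `φ`
on sets of size at most `l` makes every marginal of `Q` on at most `l` coordinates uniform,
so the coordinates of `Q` are `𝔐_l`-independent Rademacher variables.
-/

open Finset

noncomputable def boolSign (b : Bool) : ℝ := if b then 1 else -1

noncomputable def boolMean (f : Bool → ℝ) : ℝ := (f true + f false) / 2

noncomputable def signWeight {n : ℕ} (x : Fin n → ℝ) (s : Fin n → Bool) : ℝ :=
  ∏ k, (1 + boolSign (s k) * x k) / 2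

section SignWeight

lemma boolMean_indicator_nonneg (B : Set Bool) : 0 ≤ boolMean (B.indicator 1) := by
  unfold boolMean
  have := Set.indicator_nonneg (fun _ _ => zero_le_one) (s := B) (f := (1 : Bool → ℝ))
  linarith [this true, this false]

variable {n : ℕ}

lemma one_add_boolSign_mul_mem_Icc {x : ℝ} (hx : |x| ≤ 1) (b : Bool) :
    1 + boolSign b * x ∈ Set.Icc (0 : ℝ) 2 := by
  obtain ⟨h₁, h₂⟩ := abs_le.1 hx
  cases b <;> simp only [boolSign, Set.mem_Icc] <;> constructor <;> norm_num <;> linarith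

lemma sum_signWeight_mul_prod (x : Fin n → ℝ) (T : Finset (Fin n)) (f : Fin n → Bool → ℝ) :
    ∑ s, signWeight x s * ∏ k ∈ T, f k (s k) =
      ∏ k ∈ T, (boolMean (f k) + (f k true - f k false) / 2 * x k) := by
  classical
  let g : Fin n → Bool → ℝ := fun k b => (1 + boolSign b * x k) / 2 * if k ∈ T then f k b else 1
  calc ∑ s, signWeight x s * ∏ k ∈ T, f k (s k) = ∑ s : Fin n → Bool, ∏ k, g k (s k) := by
        simp only [g, signWeight, prod_mul_distrib, prod_ite_mem, univ_inter]
    _ = ∏ k, (g k true + g k false) := by rw [← Fintype.prod_sum]; simp only [Fintype.sum_bool]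
    _ = ∏ k, if k ∈ T then boolMean (f k) + (f k true - f k false) / 2 * x k else 1 := by
        refine prod_congr rfl fun k _ => ?_
        by_cases hk : k ∈ T <;> simp only [g, boolSign, boolMean, hk, if_true, if_false,
          Bool.false_eq_true] <;> ring
    _ = _ := by rw [prod_ite_mem, univ_inter]

lemma sum_signWeight (x : Fin n → ℝ) : ∑ s, signWeight x s = 1 := by
  simpa using sum_signWeight_mul_prod x ∅ fun _ _ => 1

lemma sum_signWeight_mul_boolSign (x : Fin n → ℝ) (k : Fin n) :
    ∑ s, signWeight x s * boolSign (s k) = x k := by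
  simpa [boolMean, boolSign] using sum_signWeight_mul_prod x {k} fun _ => boolSign

lemma signWeight_nonneg {x : Fin n → ℝ} (hx : ∀ k, |x k| ≤ 1) (s : Fin n → Bool) :
    0 ≤ signWeight x s :=
  prod_nonneg fun k _ => div_nonneg (one_add_boolSign_mul_mem_Icc (hx k) (s k)).1 zero_le_two

lemma ConvexOn.map_sum_le_sum_signWeight_mul {Φ : ℝ → ℝ} (hΦ : ConvexOn ℝ Set.univ Φ)
    {x : Fin n → ℝ} (hx : ∀ k, |x k| ≤ 1) (a : Fin n → ℝ) :
    Φ (∑ k, a k * x k) ≤ ∑ s, signWeight x s * Φ (∑ k, a k * boolSign (s k)) := by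
  have hsum : ∑ k, a k * x k = ∑ s, signWeight x s • ∑ k, a k * boolSign (s k) := by
    simp only [← sum_signWeight_mul_boolSign x, mul_sum, smul_eq_mul]
    rw [sum_comm]
    exact sum_congr rfl fun _ _ => sum_congr rfl fun _ _ => by ring
  rw [hsum]
  exact hΦ.map_sum_le (fun s _ => signWeight_nonneg hx s) (sum_signWeight x) fun _ _ => trivial

end SignWeight

section Multiplicative

variable {Ω : Type*} [MeasurableSpace Ω] {P : Measure Ω}

lemma integrable_finset_prod_of_abs_le_one [IsFiniteMeasure P] {ι : Type*} (s : Finset ι)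
    {f : ι → Ω → ℝ} (hfm : ∀ i ∈ s, AEStronglyMeasurable (f i) P)
    (hfb : ∀ i ∈ s, ∀ᵐ ω ∂P, |f i ω| ≤ 1) :
    Integrable (fun ω => ∏ i ∈ s, f i ω) P := by
  refine .of_bound (by simpa only [← prod_apply] using s.aestronglyMeasurable_prod hfm) 1 ?_
  filter_upwards [(Filter.eventually_all_finset s).2 hfb] with ω hω
  rw [Real.norm_eq_abs, abs_prod]
  exact prod_le_one (fun i _ => abs_nonneg _) hω

variable [IsProbabilityMeasure P] {n : ℕ} {φ : Fin n → Ω → ℝ}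

lemma integral_prod_add_mul_eq_prod {T : Finset (Fin n)}
    (hφm : ∀ k, AEStronglyMeasurable (φ k) P) (hφb : ∀ k, ∀ᵐ ω ∂P, |φ k ω| ≤ 1)
    (hmult : ∀ U ⊆ T, U.Nonempty → ∫ ω, ∏ k ∈ U, φ k ω ∂P = 0) (α β : Fin n → ℝ) :
    ∫ ω, ∏ k ∈ T, (α k + β k * φ k ω) ∂P = ∏ k ∈ T, α k := by
  classical
  have hexpand : ∀ ω, ∏ k ∈ T, (α k + β k * φ k ω) =
      ∑ U ∈ T.powerset, ((∏ k ∈ U, β k) * ∏ k ∈ T \ U, α k) * ∏ k ∈ U, φ k ω := fun ω => by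
    simp_rw [add_comm (α _), prod_add, prod_mul_distrib]
    exact sum_congr rfl fun _ _ => by ring
  simp_rw [hexpand]
  rw [integral_finsetSum _ fun U _ => (integrable_finset_prod_of_abs_le_one U
    (fun k _ => hφm k) fun k _ => hφb k).const_mul _]
  simp_rw [integral_const_mul]
  rw [sum_eq_single_of_mem ∅ (empty_mem_powerset T)]
  · simp
  · intro U hU hne
    rw [hmult U (mem_powerset.1 hU) (nonempty_iff_ne_empty.2 hne), mul_zero]

end Multiplicative

/-- The law on sign vectors obtained by averaging over `ω` the product measure whose
`k`-th coordinate is `true` with probability `(1 + φ k ω) / 2`. -/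
noncomputable def signMixture {Ω : Type*} [MeasurableSpace Ω] (P : Measure Ω) {n : ℕ}
    (φ : Fin n → Ω → ℝ) : Measure (Fin n → Bool) :=
  ∑ s, ENNReal.ofReal (∫ ω, signWeight (φ · ω) s ∂P) • Measure.dirac s

section SignMixture

variable {Ω : Type*} [MeasurableSpace Ω] {P : Measure Ω} {n : ℕ} {φ : Fin n → Ω → ℝ}

instance : IsFiniteMeasure (signMixture P φ) :=
  ⟨by simp [signMixture, Measure.finsetSum_apply, ENNReal.sum_lt_top]⟩

lemma integrable_signWeight [IsFiniteMeasure P] (hφm : ∀ k, AEStronglyMeasurable (φ k) P)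
    (hφb : ∀ k, ∀ᵐ ω ∂P, |φ k ω| ≤ 1) (s : Fin n → Bool) :
    Integrable (fun ω => signWeight (φ · ω) s) P := by
  refine integrable_finset_prod_of_abs_le_one _ (fun k _ => by fun_prop) fun k _ => ?_
  filter_upwards [hφb k] with ω hω
  obtain ⟨h₀, h₂⟩ := one_add_boolSign_mul_mem_Icc hω (s k)
  rw [abs_le]
  constructor <;> linarith

lemma integral_signMixture [IsFiniteMeasure P] (hφm : ∀ k, AEStronglyMeasurable (φ k) P)
    (hφb : ∀ k, ∀ᵐ ω ∂P, |φ k ω| ≤ 1) (g : (Fin n → Bool) → ℝ) :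
    ∫ s, g s ∂signMixture P φ = ∫ ω, ∑ s, signWeight (φ · ω) s * g s ∂P := by
  have hq : ∀ s, 0 ≤ ∫ ω, signWeight (φ · ω) s ∂P := fun s => integral_nonneg_of_ae <| by
    filter_upwards [ae_all_iff.2 hφb] with ω hω using signWeight_nonneg hω s
  have hsingleton : ∀ s, (signMixture P φ).real {s} = ∫ ω, signWeight (φ · ω) s ∂P := by
    intro s
    simp [signMixture, measureReal_def, Measure.finsetSum_apply, Measure.dirac_apply',
      Set.indicator, hq]
  rw [integral_fintype .of_finite, integral_finsetSum _ fun s _ =>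
    (integrable_signWeight hφm hφb s).mul_const _]
  simp_rw [integral_mul_const, hsingleton, smul_eq_mul]

variable [IsProbabilityMeasure P]

lemma isProbabilityMeasure_signMixture (hφm : ∀ k, AEStronglyMeasurable (φ k) P)
    (hφb : ∀ k, ∀ᵐ ω ∂P, |φ k ω| ≤ 1) : IsProbabilityMeasure (signMixture P φ) := by
  constructor
  have h := integral_signMixture hφm hφb fun _ => 1
  simp only [integral_const, smul_eq_mul, mul_one, sum_signWeight, probReal_univ] at h
  rw [← ofReal_measureReal, h, ENNReal.ofReal_one]

lemma integral_prod_signMixture (hφm : ∀ k, AEStronglyMeasurable (φ k) P)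
    (hφb : ∀ k, ∀ᵐ ω ∂P, |φ k ω| ≤ 1) {T : Finset (Fin n)}
    (hmult : ∀ U ⊆ T, U.Nonempty → ∫ ω, ∏ k ∈ U, φ k ω ∂P = 0) (f : Fin n → Bool → ℝ) :
    ∫ s, ∏ k ∈ T, f k (s k) ∂signMixture P φ = ∏ k ∈ T, boolMean (f k) := by
  simp_rw [integral_signMixture hφm hφb, sum_signWeight_mul_prod]
  exact integral_prod_add_mul_eq_prod hφm hφb hmult _ _

lemma signMixture_cylinder (hφm : ∀ k, AEStronglyMeasurable (φ k) P)
    (hφb : ∀ k, ∀ᵐ ω ∂P, |φ k ω| ≤ 1) {T : Finset (Fin n)}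
    (hmult : ∀ U ⊆ T, U.Nonempty → ∫ ω, ∏ k ∈ U, φ k ω ∂P = 0) (B : Fin n → Set Bool) :
    signMixture P φ {s | ∀ k ∈ T, s k ∈ B k} =
      ENNReal.ofReal (∏ k ∈ T, boolMean ((B k).indicator 1)) := by
  rw [← ofReal_measureReal, ← integral_indicator_one (.of_discrete),
    ← integral_prod_signMixture hφm hφb hmult]
  congr 1
  refine integral_congr_ae (.of_forall fun s => ?_)
  simp [Set.indicator, prod_boole]

lemma signMixture_coord_mem (hφm : ∀ k, AEStronglyMeasurable (φ k) P)
    (hφb : ∀ k, ∀ᵐ ω ∂P, |φ k ω| ≤ 1) {k : Fin n} (hk : ∫ ω, φ k ω ∂P = 0) (B : Set Bool) :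
    signMixture P φ {s | s k ∈ B} = ENNReal.ofReal (boolMean (B.indicator 1)) := by
  have hmult : ∀ U ⊆ {k}, U.Nonempty → ∫ ω, ∏ j ∈ U, φ j ω ∂P = 0 := fun U hU hne => by
    simpa [hne.subset_singleton_iff.1 hU] using hk
  simpa using signMixture_cylinder hφm hφb hmult fun _ => B

lemma isRademacher_signMixture (hφm : ∀ k, AEStronglyMeasurable (φ k) P)
    (hφb : ∀ k, ∀ᵐ ω ∂P, |φ k ω| ≤ 1) {k : Fin n} (hk : ∫ ω, φ k ω ∂P = 0) :
    IsRademacher (signMixture P φ) fun s => boolSign (s k) := by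
  have hcoord (b : Bool) : signMixture P φ {s | boolSign (s k) = boolSign b} = 1 / 2 := by
    have hset :
        {s : Fin n → Bool | boolSign (s k) = boolSign b} = {s | s k ∈ ({b} : Set Bool)} := by
      ext s; cases s k <;> cases b <;> norm_num [boolSign]
    rw [hset, signMixture_coord_mem hφm hφb hk]
    cases b <;> norm_num [boolMean, ENNReal.ofReal_div_of_pos]
  exact ⟨fun s => by cases h : s k <;> simp [boolSign, h], hcoord true, hcoord false⟩

lemma mlIndepFun_signMixture (hφm : ∀ k, AEStronglyMeasurable (φ k) P)
    (hφb : ∀ k, ∀ᵐ ω ∂P, |φ k ω| ≤ 1) {l : ℕ}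
    (hmult : ∀ S : Finset (Fin n), S.Nonempty → S.card ≤ l → ∫ ω, ∏ j ∈ S, φ j ω ∂P = 0) :
    MlIndepFun (signMixture P φ) l fun k s => boolSign (s k) := by
  intro S _ hSl
  refine iIndepFun.comp (f := fun (j : S) (s : Fin n → Bool) => s j) ?_ (fun _ => boolSign)
    fun _ => .of_discrete
  rw [iIndepFun_iff_measure_inter_preimage_eq_mul]
  intro t sets _
  classical
  let B : Fin n → Set Bool := Function.extend Subtype.val sets fun _ => Set.univ
  have hB (k : Fin n) (hk : k ∈ S) : B k = sets ⟨k, hk⟩ :=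
    Subtype.val_injective.extend_apply _ _ ⟨k, hk⟩
  let T := t.map (Function.Embedding.subtype _)
  have hT : ∀ U ⊆ T, U.Nonempty → ∫ ω, ∏ j ∈ U, φ j ω ∂P = 0 := fun U hU hne =>
    hmult U hne <| (card_le_card hU).trans <| by
      simpa [T] using (card_le_univ t).trans (Fintype.card_coe S).le |>.trans hSl
  have hset : ⋂ j ∈ t, (fun s : Fin n → Bool => s j) ⁻¹' sets j = {s | ∀ k ∈ T, s k ∈ B k} := by
    ext s; simp +contextual [T, hB]
  rw [hset, signMixture_cylinder hφm hφb hT,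
    ENNReal.ofReal_prod_of_nonneg fun k _ => boolMean_indicator_nonneg _, prod_map]
  refine prod_congr rfl fun j hjt => ?_
  have hmean : ∫ ω, φ j ω ∂P = 0 := by
    simpa using hT {↑j} (by simpa [T] using hjt) (singleton_nonempty _)
  rw [← hB _ j.2, ← signMixture_coord_mem hφm hφb hmean]
  rfl

end SignMixture

theorem stmt_1_general {Ω : Type*} [MeasurableSpace Ω] (P : Measure Ω) [IsProbabilityMeasure P]
    (n l : ℕ) (hl : 1 ≤ l)
    (Φ : ℝ → ℝ) (hΦ : ConvexOn ℝ Set.univ Φ) (hΦ0 : ∀ x, 0 ≤ Φ x)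
    (φ : Fin n → Ω → ℝ) (hφm : ∀ k, Measurable (φ k))
    (hφb : ∀ k, ∀ᵐ ω ∂P, |φ k ω| ≤ 1)
    (hmult : ∀ S : Finset (Fin n), S.Nonempty → S.card ≤ l →
      ∫ ω, ∏ j ∈ S, φ j ω ∂P = 0) :
    ∃ (Ω' : Type) (_ : MeasurableSpace Ω') (Q : Measure Ω') (_ : IsProbabilityMeasure Q)
      (r : Fin n → Ω' → ℝ),
      (∀ k, Measurable (r k)) ∧
      (∀ k, IsRademacher Q (r k)) ∧
      MlIndepFun Q l r ∧
      ∀ a : Fin n → ℝ,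
        ∫ ω, Φ (∑ k, a k * φ k ω) ∂P ≤ ∫ ω, Φ (∑ k, a k * r k ω) ∂Q := by
  have hφm' (k : Fin n) : AEStronglyMeasurable (φ k) P := (hφm k).aestronglyMeasurable
  have hmean (k : Fin n) : ∫ ω, φ k ω ∂P = 0 := by
    simpa using hmult {k} (singleton_nonempty k) (by simpa using hl)
  refine ⟨Fin n → Bool, inferInstance, signMixture P φ,
    isProbabilityMeasure_signMixture hφm' hφb, fun k s => boolSign (s k),
    fun k => .of_discrete, fun k => isRademacher_signMixture hφm' hφb (hmean k),
    mlIndepFun_signMixture hφm' hφb hmult, fun a => ?_⟩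
  rw [integral_signMixture hφm' hφb]
  refine integral_mono_of_nonneg (.of_forall fun ω => hΦ0 _)
    (integrable_finsetSum _ fun s _ => (integrable_signWeight hφm' hφb s).mul_const _) ?_
  filter_upwards [ae_all_iff.2 hφb] with ω hω using hΦ.map_sum_le_sum_signWeight_mul hω a

theorem stmt_1 {Ω : Type*} [MeasurableSpace Ω] (P : Measure Ω) [IsProbabilityMeasure P]
    (n l : ℕ) (hl : 1 ≤ l) (hln : l ≤ n)
    (Φ : ℝ → ℝ) (hΦ : ConvexOn ℝ Set.univ Φ) (hΦ0 : ∀ x, 0 ≤ Φ x)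
    (φ : Fin n → Ω → ℝ) (hφm : ∀ k, Measurable (φ k))
    (hφb : ∀ k, ∀ᵐ ω ∂P, |φ k ω| ≤ 1)
    (hmult : ∀ S : Finset (Fin n), S.Nonempty → S.card ≤ l →
      ∫ ω, ∏ j ∈ S, φ j ω ∂P = 0) :
    ∃ (Ω' : Type) (_ : MeasurableSpace Ω') (Q : Measure Ω') (_ : IsProbabilityMeasure Q)
      (r : Fin n → Ω' → ℝ),
      (∀ k, Measurable (r k)) ∧
      (∀ k, IsRademacher Q (r k)) ∧
      MlIndepFun Q l r ∧
      ∀ a : Fin n → ℝ,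
        ∫ ω, Φ (∑ k, a k * φ k ω) ∂P ≤ ∫ ω, Φ (∑ k, a k * r k ω) ∂Q :=
  stmt_1_general P n l hl Φ hΦ hΦ0 φ hφm hφb hmult
end

section
/- Let p be an even integer with 2 ≤ p ≤ n and let φ_1,…,φ_n be an 𝔐_p-multiplicative system of random variables with ‖φ_k‖_∞ ≤ 1 for all k. Then for every choice of real coefficients a_1,…,a_n one has ‖∑_{k=1}^n a_k φ_k‖_p ≤ ((p−1)!!)^{1/p} · (∑_{k=1}^n a_k²)^{1/2}, where (p−1)!! = 1·3·5⋯(p−1). -/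
open MeasureTheory Finset Function
open scoped BigOperators

/-!
For `x ∈ [-1, 1]ⁿ` let `ε` be independent signs with `𝔼 ε_k = x_k`. By Jensen,
`(∑ a_k x_k)^p ≤ 𝔼 (∑ a_k ε_k)^p`, and the right side is a polynomial in `x` whose monomials
`∏_{k ∈ S} x_k` have `#S ≤ p`. Substituting `x = φ(ω)` and integrating, multiplicativity kills
every nonconstant monomial, so `𝔼 (∑ a_k φ_k)^p` is at most the value of that polynomial at
`x = 0`: the `p`-th moment of a Rademacher sum. Flipping one sign at a time shows that these
moments satisfy the recursion `M_{q+2} ≤ (q + 1) (∑ a_k²) M_q` of Gaussian moments, which gives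
`(p - 1)‼ (∑ a_k²)^{p/2}`.
-/

namespace Khintchine

variable {ι : Type*} [Fintype ι]

def sgn (b : Bool) : ℝ := if b then 1 else -1

@[simp] lemma sgn_true : sgn true = 1 := rfl
@[simp] lemma sgn_false : sgn false = -1 := rfl

/-- The probability of the sign pattern `ε` when the signs are independent with means `x k`. -/
noncomputable def coinWeight (x : ι → ℝ) (ε : ι → Bool) : ℝ :=
  ∏ k, (1 + sgn (ε k) * x k) / 2

def signedSum (a : ι → ℝ) (ε : ι → Bool) : ℝ :=
  ∑ k, a k * sgn (ε k)

lemma coinWeight_nonneg {x : ι → ℝ} (hx : ∀ k, |x k| ≤ 1) (ε : ι → Bool) :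
    0 ≤ coinWeight x ε :=
  prod_nonneg fun k _ => by
    have := abs_le.1 (hx k)
    cases ε k <;> simp only [sgn_true, sgn_false] <;> linarith

variable [DecidableEq ι]

lemma sum_bool_mul_sgn_pow (x : ℝ) (c : ℕ) :
    ∑ b : Bool, (1 + sgn b * x) / 2 * sgn b ^ c = if Even c then 1 else x := by
  rw [Fintype.sum_bool, sgn_true, sgn_false]
  rcases Nat.even_or_odd c with h | h
  · rw [if_pos h, h.neg_one_pow]; ring
  · rw [if_neg (Nat.not_even_iff_odd.2 h), h.neg_one_pow]; ring

lemma sum_coinWeight_mul_prod_sgn_pow (x : ι → ℝ) (c : ι → ℕ) :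
    ∑ ε, coinWeight x ε * ∏ k, sgn (ε k) ^ c k = ∏ k, if Even (c k) then 1 else x k := by
  simp_rw [coinWeight, ← prod_mul_distrib, ← sum_bool_mul_sgn_pow]
  exact (Fintype.prod_sum fun k b => (1 + sgn b * x k) / 2 * sgn b ^ c k).symm

lemma sum_coinWeight (x : ι → ℝ) : ∑ ε, coinWeight x ε = 1 := by
  simpa using sum_coinWeight_mul_prod_sgn_pow x 0

lemma sum_coinWeight_mul_sgn (x : ι → ℝ) (k : ι) :
    ∑ ε, coinWeight x ε * sgn (ε k) = x k := by
  simpa [prod_pow_boole, apply_ite Even, ite_not] using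
    sum_coinWeight_mul_prod_sgn_pow x fun j => if k = j then 1 else 0

lemma sum_coinWeight_mul_signedSum (x a : ι → ℝ) :
    ∑ ε, coinWeight x ε * signedSum a ε = ∑ k, a k * x k := by
  simp_rw [signedSum, mul_sum, mul_left_comm (coinWeight x _)]
  rw [sum_comm]
  simp_rw [← mul_sum, sum_coinWeight_mul_sgn]

lemma pow_sum_mul_le_sum_coinWeight_mul_pow {x : ι → ℝ} (hx : ∀ k, |x k| ≤ 1) (a : ι → ℝ)
    {p : ℕ} (hp : Even p) :
    (∑ k, a k * x k) ^ p ≤ ∑ ε, coinWeight x ε * signedSum a ε ^ p := by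
  simpa [sum_coinWeight_mul_signedSum] using hp.convexOn_pow.map_sum_le
    (fun ε _ => coinWeight_nonneg hx ε) (sum_coinWeight x) fun ε _ => Set.mem_univ (signedSum a ε)

def oddFiber {p : ℕ} (t : Fin p → ι) : Finset ι := {k | Odd #{i | t i = k}}

lemma card_oddFiber_le {p : ℕ} (t : Fin p → ι) : #(oddFiber t) ≤ p := by
  refine (card_le_card (t := univ.image t) fun k hk => ?_).trans
    (card_image_le.trans (card_fin p).le)
  obtain ⟨i, hi⟩ := card_pos.1 (mem_filter.1 hk).2.pos
  exact mem_image.2 ⟨i, mem_univ i, (mem_filter.1 hi).2⟩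

lemma sum_coinWeight_mul_signedSum_pow (x a : ι → ℝ) (p : ℕ) :
    ∑ ε, coinWeight x ε * signedSum a ε ^ p
      = ∑ t : Fin p → ι, (∏ i, a (t i)) * ∏ k ∈ oddFiber t, x k := by
  have hfiber (ε : ι → Bool) (t : Fin p → ι) :
      ∏ i, sgn (ε (t i)) = ∏ k, sgn (ε k) ^ #{i | t i = k} := by
    rw [← prod_fiberwise univ t]
    refine prod_congr rfl fun k _ => ?_
    rw [prod_congr rfl fun i hi => by rw [(mem_filter.1 hi).2], prod_const]
  simp_rw [signedSum, Fintype.sum_pow, mul_sum, prod_mul_distrib, hfiber,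
    mul_left_comm (coinWeight x _)]
  rw [sum_comm]
  simp_rw [← mul_sum, sum_coinWeight_mul_prod_sgn_pow, oddFiber, prod_filter,
    ← Nat.not_even_iff_odd, ite_not]

lemma expect_eq_expect_update (h : (ι → Bool) → ℝ) (k : ι) :
    𝔼 ε, h ε = 𝔼 ε, (h (update ε k true) + h (update ε k false)) / 2 := by
  have hflip : Involutive fun ε : ι → Bool => update ε k (!ε k) := fun ε => by simp
  have hswap : 𝔼 ε, h ε = 𝔼 ε, h (update ε k (!ε k)) :=
    Fintype.expect_bijective _ hflip.bijective _ _ fun ε => congrArg h (hflip ε).symm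
  calc 𝔼 ε, h ε = (𝔼 ε, h ε + 𝔼 ε, h (update ε k (!ε k))) / 2 := by rw [← hswap]; ring
    _ = 𝔼 ε, (h (update ε k true) + h (update ε k false)) / 2 := by
      rw [← expect_add_distrib, expect_div]
      refine expect_congr rfl fun ε _ => ?_
      nth_rewrite 1 [← update_eq_self k ε]
      cases ε k
      exacts [by rw [Bool.not_false, add_comm], rfl]

lemma signedSum_update (a : ι → ℝ) (ε : ι → Bool) (k : ι) (b : Bool) :
    signedSum a (update ε k b) = signedSum a ε - a k * sgn (ε k) + a k * sgn b := by
  simp only [signedSum]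
  rw [← add_sum_erase _ _ (mem_univ k), ← add_sum_erase _ _ (mem_univ k), update_self]
  rw [sum_congr rfl fun j hj => by rw [update_of_ne (ne_of_mem_erase hj)]]
  ring

lemma pow_mul_pow_add_pow_mul_pow_le {j m : ℕ} (hjm : Even (j + m)) (u v : ℝ) :
    u ^ j * v ^ m + u ^ m * v ^ j ≤ u ^ (j + m) + v ^ (j + m) := by
  have hmono : (u ^ j ≤ v ^ j ∧ u ^ m ≤ v ^ m) ∨ (v ^ j ≤ u ^ j ∧ v ^ m ≤ u ^ m) := by
    rcases Nat.even_or_odd j with hj | hj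
    · have hm : Even m := (Nat.even_add.1 hjm).1 hj
      rw [← hj.pow_abs u, ← hj.pow_abs v, ← hm.pow_abs u, ← hm.pow_abs v]
      rcases le_total |u| |v| with h | h
      · exact Or.inl ⟨by gcongr, by gcongr⟩
      · exact Or.inr ⟨by gcongr, by gcongr⟩
    · have hm : Odd m :=
        Nat.not_even_iff_odd.1 <| (Nat.even_add.1 hjm).not.1 <| Nat.not_even_iff_odd.2 hj
      simp only [hj.pow_le_pow, hm.pow_le_pow]
      exact (le_total u v).imp (fun h => ⟨h, h⟩) (fun h => ⟨h, h⟩)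
  rw [pow_add, pow_add]
  rcases hmono with ⟨h1, h2⟩ | ⟨h1, h2⟩
  · linarith [mul_add_mul_le_mul_add_mul h1 h2]
  · linarith [mul_add_mul_le_mul_add_mul h1 h2]

lemma two_mul_sum_pow_mul_pow_le {q : ℕ} (hq : Even q) (u v : ℝ) :
    2 * ∑ i ∈ range (q + 1), u ^ i * v ^ (q - i) ≤ (q + 1) * (u ^ q + v ^ q) :=
  calc 2 * ∑ i ∈ range (q + 1), u ^ i * v ^ (q - i)
      = ∑ i ∈ range (q + 1), (u ^ i * v ^ (q - i) + u ^ (q - i) * v ^ i) := by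
        rw [two_mul]
        nth_rewrite 2 [← sum_range_reflect]
        rw [← sum_add_distrib]
        refine sum_congr rfl fun i hi => ?_
        rw [Nat.add_sub_cancel, Nat.sub_sub_self (Nat.lt_succ_iff.1 (mem_range.1 hi))]
    _ ≤ ∑ i ∈ range (q + 1), (u ^ q + v ^ q) := sum_le_sum fun i hi => by
        have hiq : i + (q - i) = q := Nat.add_sub_cancel' (Nat.lt_succ_iff.1 (mem_range.1 hi))
        have h := pow_mul_pow_add_pow_mul_pow_le (j := i) (m := q - i) (by rwa [hiq]) u v
        rwa [hiq] at h
    _ = (q + 1) * (u ^ q + v ^ q) := by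
        rw [sum_const, card_range, nsmul_eq_mul]
        push_cast
        ring

lemma mul_sub_pow_succ_le {q : ℕ} (hq : Even q) (u v : ℝ) :
    (u - v) * (u ^ (q + 1) - v ^ (q + 1)) ≤ (q + 1) / 2 * (u - v) ^ 2 * (u ^ q + v ^ q) := by
  have hgeom := geom_sum₂_mul u v (q + 1)
  simp only [Nat.add_sub_cancel] at hgeom
  calc (u - v) * (u ^ (q + 1) - v ^ (q + 1))
      = (u - v) ^ 2 * (2 * ∑ i ∈ range (q + 1), u ^ i * v ^ (q - i)) / 2 := by
        rw [← hgeom]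
        ring
    _ ≤ (u - v) ^ 2 * ((q + 1) * (u ^ q + v ^ q)) / 2 := by
        gcongr (u - v) ^ 2 * ?_ / 2
        exact two_mul_sum_pow_mul_pow_le hq u v
    _ = (q + 1) / 2 * (u - v) ^ 2 * (u ^ q + v ^ q) := by ring

lemma expect_signedSum_pow_add_two_le (a : ι → ℝ) {q : ℕ} (hq : Even q) :
    𝔼 ε, signedSum a ε ^ (q + 2) ≤ (q + 1) * (∑ k, a k ^ 2) * 𝔼 ε, signedSum a ε ^ q := by
  have hsplit : 𝔼 ε, signedSum a ε ^ (q + 2)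
      = ∑ k, 𝔼 ε, a k * sgn (ε k) * signedSum a ε ^ (q + 1) := by
    rw [← expect_sum_comm]
    refine expect_congr rfl fun ε _ => ?_
    rw [← sum_mul, pow_succ']
    rfl
  rw [hsplit, mul_sum, sum_mul]
  refine sum_le_sum fun k _ => ?_
  rw [expect_eq_expect_update (fun ε => a k * sgn (ε k) * signedSum a ε ^ (q + 1)) k,
    expect_eq_expect_update (fun ε => signedSum a ε ^ q) k, mul_expect]
  refine expect_le_expect fun ε _ => ?_
  -- the two flips of `ε k` give `signedSum a = y ± a k`
  simp only [update_self, signedSum_update, sgn_true, sgn_false, mul_one, mul_neg_one,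
    ← sub_eq_add_neg]
  set y := signedSum a ε - a k * sgn (ε k)
  linear_combination mul_sub_pow_succ_le hq (y + a k) (y - a k) / 4

lemma expect_signedSum_pow_two_mul_le (a : ι → ℝ) (m : ℕ) :
    𝔼 ε, signedSum a ε ^ (2 * m) ≤ (2 * m - 1).doubleFactorial * (∑ k, a k ^ 2) ^ m := by
  induction m with
  | zero => simp
  | succ m ih =>
    calc 𝔼 ε, signedSum a ε ^ (2 * (m + 1))
        ≤ (2 * m + 1) * (∑ k, a k ^ 2) * 𝔼 ε, signedSum a ε ^ (2 * m) :=
          mod_cast expect_signedSum_pow_add_two_le a (even_two_mul m)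
      _ ≤ (2 * m + 1) * (∑ k, a k ^ 2) * ((2 * m - 1).doubleFactorial * (∑ k, a k ^ 2) ^ m) :=
          by gcongr
      _ = (2 * (m + 1) - 1).doubleFactorial * (∑ k, a k ^ 2) ^ (m + 1) := by
          rw [show 2 * (m + 1) - 1 = 2 * m + 1 by omega, Nat.doubleFactorial_add_one]
          push_cast
          ring

lemma sum_coinWeight_zero_mul (g : (ι → Bool) → ℝ) :
    ∑ ε, coinWeight 0 ε * g ε = 𝔼 ε, g ε := by
  simp [coinWeight, Fintype.expect_eq_sum_div_card, mul_sum, div_eq_inv_mul]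

theorem integral_pow_sum_mul_le_expect_signedSum_pow {Ω : Type*} [MeasurableSpace Ω]
    (P : Measure Ω) [IsProbabilityMeasure P] {p : ℕ} (hp : Even p) (φ : ι → Ω → ℝ)
    (hφm : ∀ k, Measurable (φ k)) (hφb : ∀ k, ∀ᵐ ω ∂P, |φ k ω| ≤ 1)
    (hmult : ∀ S : Finset ι, S.Nonempty → #S ≤ p → ∫ ω, ∏ j ∈ S, φ j ω ∂P = 0) (a : ι → ℝ) :
    ∫ ω, (∑ k, a k * φ k ω) ^ p ∂P ≤ 𝔼 ε, signedSum a ε ^ p := by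
  have hbdd : ∀ᵐ ω ∂P, ∀ k, |φ k ω| ≤ 1 := ae_all_iff.2 hφb
  have hint (S : Finset ι) : Integrable (fun ω => ∏ k ∈ S, φ k ω) P := by
    refine .of_bound (Finset.measurable_prod _ fun k _ => hφm k).aestronglyMeasurable 1 ?_
    filter_upwards [hbdd] with ω hω
    rw [Real.norm_eq_abs, abs_prod]
    exact prod_le_one (fun k _ => abs_nonneg _) fun k _ => hω k
  have hmoment (S : Finset ι) (hS : #S ≤ p) :
      ∫ ω, ∏ k ∈ S, φ k ω ∂P = ∏ k ∈ S, (0 : ι → ℝ) k := by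
    rcases S.eq_empty_or_nonempty with rfl | hS0
    · simp
    · obtain ⟨k, hk⟩ := hS0
      rw [hmult S ⟨k, hk⟩ hS, prod_eq_zero hk rfl]
  calc ∫ ω, (∑ k, a k * φ k ω) ^ p ∂P
      ≤ ∫ ω, ∑ t : Fin p → ι, (∏ i, a (t i)) * ∏ k ∈ oddFiber t, φ k ω ∂P := by
        refine integral_mono_of_nonneg (ae_of_all _ fun ω => hp.pow_nonneg _)
          (integrable_finsetSum _ fun t _ => (hint _).const_mul _) ?_
        filter_upwards [hbdd] with ω hω
        rw [← sum_coinWeight_mul_signedSum_pow (fun k => φ k ω)]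
        exact pow_sum_mul_le_sum_coinWeight_mul_pow hω a hp
    _ = ∑ t : Fin p → ι, (∏ i, a (t i)) * ∏ k ∈ oddFiber t, (0 : ι → ℝ) k := by
        rw [integral_finsetSum _ fun t _ => (hint _).const_mul _]
        simp_rw [integral_const_mul, hmoment _ (card_oddFiber_le _)]
    _ = 𝔼 ε, signedSum a ε ^ p := by
        rw [← sum_coinWeight_mul_signedSum_pow, sum_coinWeight_zero_mul]

end Khintchine

open Khintchine

theorem stmt_3_general {Ω : Type*} [MeasurableSpace Ω] (P : Measure Ω) [IsProbabilityMeasure P]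
    (n p : ℕ) (hp2 : 2 ≤ p) (hpeven : Even p)
    (φ : Fin n → Ω → ℝ) (hφm : ∀ k, Measurable (φ k))
    (hφb : ∀ k, ∀ᵐ ω ∂P, |φ k ω| ≤ 1)
    (hmult : ∀ S : Finset (Fin n), S.Nonempty → S.card ≤ p →
      ∫ ω, ∏ j ∈ S, φ j ω ∂P = 0)
    (a : Fin n → ℝ) :
    (∫ ω, |∑ k, a k * φ k ω| ^ (p : ℝ) ∂P) ^ (1 / (p : ℝ)) ≤
      ((Nat.doubleFactorial (p - 1) : ℕ) : ℝ) ^ (1 / (p : ℝ)) * Real.sqrt (∑ k, (a k) ^ 2) := by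
  obtain ⟨m, hm⟩ := hpeven.two_dvd
  have hmoment :
      ∫ ω, |∑ k, a k * φ k ω| ^ (p : ℝ) ∂P ≤ (p - 1).doubleFactorial * √(∑ k, a k ^ 2) ^ p :=
    calc ∫ ω, |∑ k, a k * φ k ω| ^ (p : ℝ) ∂P = ∫ ω, (∑ k, a k * φ k ω) ^ p ∂P := by
          simp_rw [Real.rpow_natCast, hpeven.pow_abs]
      _ ≤ 𝔼 ε, signedSum a ε ^ p :=
          integral_pow_sum_mul_le_expect_signedSum_pow P hpeven φ hφm hφb hmult a
      _ ≤ (p - 1).doubleFactorial * (∑ k, a k ^ 2) ^ m := hm ▸ expect_signedSum_pow_two_mul_le a m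
      _ = (p - 1).doubleFactorial * √(∑ k, a k ^ 2) ^ p := by
          rw [hm, pow_mul, Real.sq_sqrt (by positivity)]
  calc _ ≤ ((p - 1).doubleFactorial * √(∑ k, a k ^ 2) ^ p) ^ (1 / (p : ℝ)) := by gcongr
    _ = _ := by
        rw [Real.mul_rpow (by positivity) (by positivity), one_div,
          Real.pow_rpow_inv_natCast (Real.sqrt_nonneg _) (by omega)]

theorem stmt_3 {Ω : Type*} [MeasurableSpace Ω] (P : Measure Ω) [IsProbabilityMeasure P]
    (n p : ℕ) (hp2 : 2 ≤ p) (hpn : p ≤ n) (hpeven : Even p)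
    (φ : Fin n → Ω → ℝ) (hφm : ∀ k, Measurable (φ k))
    (hφb : ∀ k, ∀ᵐ ω ∂P, |φ k ω| ≤ 1)
    (hmult : ∀ S : Finset (Fin n), S.Nonempty → S.card ≤ p →
      ∫ ω, ∏ j ∈ S, φ j ω ∂P = 0)
    (a : Fin n → ℝ) :
    (∫ ω, |∑ k, a k * φ k ω| ^ (p : ℝ) ∂P) ^ (1 / (p : ℝ)) ≤
      ((Nat.doubleFactorial (p - 1) : ℕ) : ℝ) ^ (1 / (p : ℝ)) * Real.sqrt (∑ k, (a k) ^ 2) :=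
  stmt_3_general P n p hp2 hpeven φ hφm hφb hmult a
end

section
/- Let φ_1,…,φ_n be random variables on a probability space with A_k ≤ φ_k ≤ B_k almost surely, where A_k < 0 < B_k. Then for every λ > 0 one has P(∑_{k=1}^n φ_k > λ) ≤ (1 + μ(φ,𝔐_n)) · exp(−2λ² / ∑_{k=1}^n (B_k − A_k)²), where 𝔐_n is the family of all nonempty subsets of {1,…,n}. -/
/-!
On `[A, B]` the convex function `x ↦ exp (t x)` lies below its chord `b x + a`, so
`E exp (t ∑ φ_k) ≤ E ∏ (b_k φ_k + a_k)`. Expanding the product, the empty set contributes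
`∏ a_k`, and a nonempty `S` contributes `∏_S b_j ∏_{Sᶜ} a_j E ∏_S φ_j`, which is at most
`∏ a_k · |E ∏_S φ_j| / ∏_S C_j` because `b_k C_k ≤ a_k`. The intercept `a_k` is the moment
generating function at `t` of the centred two-point law on `{A_k, B_k}`, so Hoeffding's lemma gives
`a_k ≤ exp (t² (B_k - A_k)² / 8)`, and Chernoff's bound with `t = 4λ / ∑ (B_k - A_k)²` concludes.
-/

open MeasureTheory

/-- The multiplicative error `μ(φ, 𝔐_n)` of a system `φ` over the family of all nonempty
subsets of `{1,…,n}`. -/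
noncomputable def multErrorAll {Ω : Type*} [MeasurableSpace Ω] (P : Measure Ω) {n : ℕ}
    (A B : Fin n → ℝ) (φ : Fin n → Ω → ℝ) : ℝ :=
  ∑ S ∈ Finset.univ.powerset.filter (fun S : Finset (Fin n) => S.Nonempty),
    (∏ j ∈ S, min (-(A j)) (B j))⁻¹ * |∫ ω, ∏ j ∈ S, φ j ω ∂P|

open Real ProbabilityTheory Finset

section ExpChord

noncomputable def expChordSlope (A B t : ℝ) : ℝ := (exp (t * B) - exp (t * A)) / (B - A)

noncomputable def expChordIntercept (A B t : ℝ) : ℝ := (B * exp (t * A) - A * exp (t * B)) / (B - A)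

variable {A B : ℝ}

lemma exp_mul_le_expChord (t : ℝ) (hAB : A < B) {x : ℝ} (hx : x ∈ Set.Icc A B) :
    exp (t * x) ≤ expChordSlope A B t * x + expChordIntercept A B t := by
  have hBA : 0 < B - A := sub_pos.2 hAB
  have hs0 : 0 ≤ (B - x) / (B - A) := div_nonneg (by linarith [hx.2]) hBA.le
  have hs1 : 0 ≤ (x - A) / (B - A) := div_nonneg (by linarith [hx.1]) hBA.le
  have hsum : (B - x) / (B - A) + (x - A) / (B - A) = 1 := by field_simp; ring
  have hconv := convexOn_exp.2 (Set.mem_univ (t * A)) (Set.mem_univ (t * B)) hs0 hs1 hsum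
  simp only [smul_eq_mul] at hconv
  refine (congrArg exp ?_).trans_le (hconv.trans_eq ?_)
  · field_simp; ring
  · rw [expChordSlope, expChordIntercept]; field_simp; ring

lemma one_le_expChordIntercept (t : ℝ) (hA : A < 0) (hB : 0 < B) : 1 ≤ expChordIntercept A B t := by
  simpa using exp_mul_le_expChord t (hA.trans hB) ⟨hA.le, hB.le⟩

lemma expChordSlope_nonneg {t : ℝ} (hAB : A ≤ B) (ht : 0 ≤ t) : 0 ≤ expChordSlope A B t :=
  div_nonneg (sub_nonneg.2 (exp_le_exp.2 (mul_le_mul_of_nonneg_left hAB ht))) (sub_nonneg.2 hAB)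

lemma expChordSlope_mul_min_le (t : ℝ) (hA : A < 0) (hB : 0 < B) :
    expChordSlope A B t * min (-A) B ≤ expChordIntercept A B t := by
  rw [expChordSlope, expChordIntercept, div_mul_eq_mul_div,
    div_le_div_iff_of_pos_right (by linarith)]
  nlinarith [exp_pos (t * A), exp_pos (t * B), min_le_left (-A) B, min_le_right (-A) B,
    lt_min (neg_pos.2 hA) hB]

lemma integral_add_smul_dirac {α : Type*} [MeasurableSpace α] [MeasurableSingletonClass α]
    {p q : ℝ} (hp : 0 ≤ p) (hq : 0 ≤ q) (x y : α) (f : α → ℝ) :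
    ∫ z, f z ∂(ENNReal.ofReal p • Measure.dirac x + ENNReal.ofReal q • Measure.dirac y)
      = p * f x + q * f y := by
  rw [integral_add_measure, integral_smul_measure, integral_smul_measure, integral_dirac,
    integral_dirac, ENNReal.toReal_ofReal hp, ENNReal.toReal_ofReal hq, smul_eq_mul, smul_eq_mul]
  all_goals exact (integrable_dirac (by simp)).smul_measure ENNReal.ofReal_ne_top

/-- `expChordIntercept A B t` is the moment generating function at `t` of the centred law
`B / (B - A) • δ_A + (-A) / (B - A) • δ_B`, so this is Hoeffding's lemma for that law. -/
lemma expChordIntercept_le (t : ℝ) (hA : A < 0) (hB : 0 < B) :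
    expChordIntercept A B t ≤ exp (t ^ 2 * (B - A) ^ 2 / 8) := by
  have hBA : 0 < B - A := by linarith
  have hpA : 0 ≤ B / (B - A) := by positivity
  have hpB : 0 ≤ -A / (B - A) := div_nonneg (by linarith) hBA.le
  set ν : Measure ℝ := ENNReal.ofReal (B / (B - A)) • Measure.dirac A
    + ENNReal.ofReal (-A / (B - A)) • Measure.dirac B
  have hν_integral (f : ℝ → ℝ) : ∫ z, f z ∂ν = B / (B - A) * f A + -A / (B - A) * f B :=
    integral_add_smul_dirac hpA hpB A B f
  have : IsProbabilityMeasure ν := by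
    constructor
    simp only [ν, Measure.add_apply, Measure.smul_apply, measure_univ, smul_eq_mul, mul_one]
    rw [← ENNReal.ofReal_add hpA hpB, ← add_div, ← sub_eq_add_neg, div_self hBA.ne',
      ENNReal.ofReal_one]
  have hν_Icc : ∀ᵐ z ∂ν, z ∈ Set.Icc A B := by
    simp only [ν, ae_add_measure_iff]
    constructor <;> refine Measure.ae_smul_measure ((ae_dirac_iff measurableSet_Icc).2 ?_) _ <;>
      simp [hA.le.trans hB.le]
  have hν_mean : ν[fun z => z] = 0 := by
    rw [hν_integral]; field_simp; ring
  have hmgf :=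
    (hasSubgaussianMGF_of_mem_Icc_of_integral_eq_zero aemeasurable_id' hν_Icc hν_mean).mgf_le t
  rw [mgf, hν_integral] at hmgf
  convert hmgf using 2
  · rw [expChordIntercept]; field_simp; ring
  · simp only [NNReal.coe_pow, NNReal.coe_div, coe_nnnorm, norm_eq_abs, abs_of_pos hBA]
    norm_num
    ring

end ExpChord

section ProductExpansion

variable {ι : Type*} [Fintype ι] [DecidableEq ι]

lemma prod_mul_prod_sdiff_le {a b C : ι → ℝ} (hb : ∀ k, 0 ≤ b k) (hC : ∀ k, 0 < C k)
    (hbC : ∀ k, b k * C k ≤ a k) (S : Finset ι) :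
    (∏ j ∈ S, b j) * ∏ j ∈ univ \ S, a j ≤ (∏ k, a k) * (∏ j ∈ S, C j)⁻¹ := by
  have ha (k : ι) : 0 ≤ a k := (mul_nonneg (hb k) (hC k).le).trans (hbC k)
  calc (∏ j ∈ S, b j) * ∏ j ∈ univ \ S, a j
      ≤ (∏ j ∈ S, a j * (C j)⁻¹) * ∏ j ∈ univ \ S, a j :=
        mul_le_mul_of_nonneg_right
          (prod_le_prod (fun j _ => hb j) fun j _ => (le_mul_inv_iff₀ (hC j)).2 (hbC j))
          (prod_nonneg fun j _ => ha j)
    _ = (∏ k, a k) * (∏ j ∈ S, C j)⁻¹ := by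
        rw [prod_mul_distrib, prod_inv_distrib, mul_right_comm, mul_comm (∏ j ∈ S, a j),
          prod_sdiff (subset_univ S)]

variable {Ω : Type*} [MeasurableSpace Ω] {P : Measure Ω}

lemma integral_prod_mul_add_eq (a b : ι → ℝ) {φ : ι → Ω → ℝ}
    (hφ : ∀ S : Finset ι, Integrable (fun ω => ∏ j ∈ S, φ j ω) P) :
    ∫ ω, ∏ k, (b k * φ k ω + a k) ∂P
      = ∑ S ∈ univ.powerset, (∏ j ∈ S, b j) * (∏ j ∈ univ \ S, a j) * ∫ ω, ∏ j ∈ S, φ j ω ∂P := by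
  simp_rw [prod_add, prod_mul_distrib]
  rw [integral_finsetSum _ fun S _ => ((hφ S).const_mul _).mul_const _]
  refine sum_congr rfl fun S _ => ?_
  rw [integral_mul_const, integral_const_mul]
  ring

lemma integral_prod_mul_add_le [IsProbabilityMeasure P] {a b C : ι → ℝ} (hb : ∀ k, 0 ≤ b k)
    (hC : ∀ k, 0 < C k) (hbC : ∀ k, b k * C k ≤ a k) {φ : ι → Ω → ℝ}
    (hφ : ∀ S : Finset ι, Integrable (fun ω => ∏ j ∈ S, φ j ω) P) :
    ∫ ω, ∏ k, (b k * φ k ω + a k) ∂P ≤ (∏ k, a k) * (1 + ∑ S ∈ univ.powerset.filter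
      (fun S : Finset ι => S.Nonempty), (∏ j ∈ S, C j)⁻¹ * |∫ ω, ∏ j ∈ S, φ j ω ∂P|) := by
  have hempty : univ.powerset.filter (fun S : Finset ι => ¬S.Nonempty) = {∅} := by
    ext S; simp [not_nonempty_iff_eq_empty]
  rw [integral_prod_mul_add_eq a b hφ, ← sum_filter_add_sum_filter_not _ (·.Nonempty), hempty,
    sum_singleton, mul_add, mul_one, add_comm, mul_sum]
  simp only [prod_empty, one_mul, sdiff_empty, integral_const, probReal_univ, smul_eq_mul,
    mul_one, add_le_add_iff_left]
  refine sum_le_sum fun S _ => ?_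
  have hba : 0 ≤ (∏ j ∈ S, b j) * ∏ j ∈ univ \ S, a j :=
    mul_nonneg (prod_nonneg fun j _ => hb j)
      (prod_nonneg fun j _ => (mul_nonneg (hb j) (hC j).le).trans (hbC j))
  calc (∏ j ∈ S, b j) * (∏ j ∈ univ \ S, a j) * ∫ ω, ∏ j ∈ S, φ j ω ∂P
      ≤ (∏ j ∈ S, b j) * (∏ j ∈ univ \ S, a j) * |∫ ω, ∏ j ∈ S, φ j ω ∂P| :=
        mul_le_mul_of_nonneg_left (le_abs_self _) hba
    _ ≤ (∏ k, a k) * (∏ j ∈ S, C j)⁻¹ * |∫ ω, ∏ j ∈ S, φ j ω ∂P| :=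
        mul_le_mul_of_nonneg_right (prod_mul_prod_sdiff_le hb hC hbC S) (abs_nonneg _)
    _ = _ := mul_assoc _ _ _

end ProductExpansion

section BoundedVariables

variable {Ω : Type*} [MeasurableSpace Ω] {P : Measure Ω}

lemma integrable_prod_of_ae_mem_Icc [IsFiniteMeasure P] {ι : Type*} {f : ι → Ω → ℝ}
    {l u : ι → ℝ} (hf : ∀ k, Measurable (f k)) (hfb : ∀ k, ∀ᵐ ω ∂P, f k ω ∈ Set.Icc (l k) (u k))
    (S : Finset ι) : Integrable (fun ω => ∏ k ∈ S, f k ω) P := by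
  refine .of_bound (Finset.measurable_prod S fun k _ => hf k).aestronglyMeasurable
    (∏ k ∈ S, max |l k| |u k|) ?_
  filter_upwards [(Filter.eventually_all_finset S).2 fun k _ => hfb k] with ω hω
  rw [norm_eq_abs, abs_prod]
  exact prod_le_prod (fun k _ => abs_nonneg _)
    fun k hk => abs_le_max_abs_abs (hω k hk).1 (hω k hk).2

lemma integrable_exp_mul_sum [IsFiniteMeasure P] {ι : Type*} [Fintype ι] {φ : ι → Ω → ℝ}
    {A B : ι → ℝ} (hφm : ∀ k, Measurable (φ k))
    (hφb : ∀ k, ∀ᵐ ω ∂P, φ k ω ∈ Set.Icc (A k) (B k)) (t : ℝ) :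
    Integrable (fun ω => exp (t * ∑ k, φ k ω)) P := by
  refine integrable_exp_mul_of_mem_Icc (a := ∑ k, A k) (b := ∑ k, B k)
    (Finset.measurable_sum univ fun k _ => hφm k).aemeasurable ?_
  filter_upwards [Filter.eventually_all.2 hφb] with ω hω
  exact ⟨sum_le_sum fun k _ => (hω k).1, sum_le_sum fun k _ => (hω k).2⟩

lemma multErrorAll_nonneg {n : ℕ} {A B : Fin n → ℝ} (hA : ∀ k, A k ≤ 0) (hB : ∀ k, 0 ≤ B k)
    (φ : Fin n → Ω → ℝ) : 0 ≤ multErrorAll P A B φ :=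
  sum_nonneg fun _ _ => mul_nonneg
    (inv_nonneg.2 (prod_nonneg fun j _ => le_min (neg_nonneg.2 (hA j)) (hB j))) (abs_nonneg _)

lemma mgf_sum_le_mul_multErrorAll [IsProbabilityMeasure P] {n : ℕ} {A B : Fin n → ℝ}
    (hA : ∀ k, A k < 0) (hB : ∀ k, 0 < B k) {φ : Fin n → Ω → ℝ} (hφm : ∀ k, Measurable (φ k))
    (hφb : ∀ k, ∀ᵐ ω ∂P, φ k ω ∈ Set.Icc (A k) (B k)) {t : ℝ} (ht : 0 ≤ t) :
    mgf (fun ω => ∑ k, φ k ω) P t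
      ≤ exp (t ^ 2 * (∑ k, (B k - A k) ^ 2) / 8) * (1 + multErrorAll P A B φ) := by
  set a := fun k => expChordIntercept (A k) (B k) t
  set b := fun k => expChordSlope (A k) (B k) t
  have hb (k : Fin n) : 0 ≤ b k := expChordSlope_nonneg ((hA k).trans (hB k)).le ht
  have hchord_int : Integrable (fun ω => ∏ k, (b k * φ k ω + a k)) P := by
    refine integrable_prod_of_ae_mem_Icc (l := fun k => b k * A k + a k)
      (u := fun k => b k * B k + a k) (fun k => ((hφm k).const_mul _).add_const _) (fun k => ?_) _
    filter_upwards [hφb k] with ω hω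
    exact ⟨by gcongr; exacts [hb k, hω.1], by gcongr; exacts [hb k, hω.2]⟩
  have hmgf_le_chord : mgf (fun ω => ∑ k, φ k ω) P t ≤ ∫ ω, ∏ k, (b k * φ k ω + a k) ∂P := by
    refine integral_mono_ae (integrable_exp_mul_sum hφm hφb t) hchord_int ?_
    filter_upwards [Filter.eventually_all.2 hφb] with ω hω
    rw [mul_sum, exp_sum]
    exact prod_le_prod (fun k _ => (exp_pos _).le)
      fun k _ => exp_mul_le_expChord t ((hA k).trans (hB k)) (hω k)
  have hprod_a : ∏ k, a k ≤ exp (t ^ 2 * (∑ k, (B k - A k) ^ 2) / 8) := by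
    rw [mul_sum, sum_div, exp_sum]
    exact prod_le_prod (fun k _ => zero_le_one.trans (one_le_expChordIntercept t (hA k) (hB k)))
      fun k _ => expChordIntercept_le t (hA k) (hB k)
  calc mgf (fun ω => ∑ k, φ k ω) P t
      ≤ ∫ ω, ∏ k, (b k * φ k ω + a k) ∂P := hmgf_le_chord
    _ ≤ (∏ k, a k) * (1 + multErrorAll P A B φ) :=
        integral_prod_mul_add_le (C := fun k => min (-(A k)) (B k)) hb
          (fun k => lt_min (neg_pos.2 (hA k)) (hB k))
          (fun k => expChordSlope_mul_min_le t (hA k) (hB k))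
          (integrable_prod_of_ae_mem_Icc hφm hφb)
    _ ≤ _ := mul_le_mul_of_nonneg_right hprod_a
        (by linarith [multErrorAll_nonneg (P := P) (fun k => (hA k).le) (fun k => (hB k).le) φ])

end BoundedVariables

theorem stmt_4 {Ω : Type*} [MeasurableSpace Ω] (P : Measure Ω) [IsProbabilityMeasure P]
    (n : ℕ) (A B : Fin n → ℝ) (hA : ∀ k, A k < 0) (hB : ∀ k, 0 < B k)
    (φ : Fin n → Ω → ℝ) (hφm : ∀ k, Measurable (φ k))
    (hφb : ∀ k, ∀ᵐ ω ∂P, A k ≤ φ k ω ∧ φ k ω ≤ B k)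
    (lam : ℝ) (hlam : 0 < lam) :
    (P {ω | lam < ∑ k, φ k ω}).toReal ≤
      (1 + multErrorAll P A B φ) *
        Real.exp (-(2 * lam ^ 2) / ∑ k, (B k - A k) ^ 2) := by
  set σ2 := ∑ k, (B k - A k) ^ 2
  have hμ := multErrorAll_nonneg (P := P) (fun k => (hA k).le) (fun k => (hB k).le) φ
  have hσ : 0 ≤ σ2 := sum_nonneg fun k _ => sq_nonneg (B k - A k)
  rcases hσ.eq_or_lt with hσ | hσ
  · rw [← hσ, div_zero, exp_zero, mul_one]
    exact le_add_of_le_of_nonneg measureReal_le_one hμ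
  set t := 4 * lam / σ2
  have ht : 0 ≤ t := by positivity
  calc P.real {ω | lam < ∑ k, φ k ω}
      ≤ P.real {ω | lam ≤ ∑ k, φ k ω} := measureReal_mono fun ω (hω : lam < _) => hω.le
    _ ≤ exp (-t * lam) * mgf (fun ω => ∑ k, φ k ω) P t :=
        measure_ge_le_exp_mul_mgf lam ht (integrable_exp_mul_sum hφm hφb t)
    _ ≤ exp (-t * lam) * (exp (t ^ 2 * σ2 / 8) * (1 + multErrorAll P A B φ)) := by
        gcongr; exact mgf_sum_le_mul_multErrorAll hA hB hφm hφb ht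
    _ = (1 + multErrorAll P A B φ) * exp (-(2 * lam ^ 2) / σ2) := by
        rw [← mul_assoc, ← exp_add, mul_comm]
        congr 2
        simp only [t]
        field_simp
        ring
end

section
/- Let φ_1,…,φ_n be a multiplicative system of random variables with A_k ≤ φ_k ≤ B_k almost surely, where A_k < 0 < B_k. Then for every λ > 0 one has P(∑_{k=1}^n φ_k > λ) ≤ exp(−2λ² / ∑_{k=1}^n (B_k − A_k)²). -/
/-!
On `[a, b]` the convex function `x ↦ exp (t * x)` lies below its chord `α + β * x`, so
`exp (t * ∑ φ k) ≤ ∏ (α k + β k * φ k)`. Expanding the product, multiplicativity kills every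
term but `∏ α k`. The intercept `α k` is the moment generating function of the centred law on
`{a k, b k}`, hence at most `exp (t ^ 2 * (b k - a k) ^ 2 / 8)` by Hoeffding's lemma. Thus
`∑ φ k` is sub-Gaussian with parameter `∑ (b k - a k) ^ 2 / 4`, and the Chernoff bound concludes.
-/

open MeasureTheory ProbabilityTheory Real

lemma exp_mul_le_chord {a b x : ℝ} (hab : a < b) (hx : x ∈ Set.Icc a b) (t : ℝ) :
    exp (t * x) ≤ (b * exp (t * a) - a * exp (t * b)) / (b - a)
      + (exp (t * b) - exp (t * a)) / (b - a) * x := by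
  have hba : 0 < b - a := sub_pos.2 hab
  have hcvx := convexOn_exp.2 (Set.mem_univ (t * a)) (Set.mem_univ (t * b))
    (div_nonneg (sub_nonneg.2 hx.2) hba.le) (div_nonneg (sub_nonneg.2 hx.1) hba.le)
    (by field_simp; ring)
  simp only [smul_eq_mul] at hcvx
  calc exp (t * x) = exp ((b - x) / (b - a) * (t * a) + (x - a) / (b - a) * (t * b)) := by
        congr 1; field_simp; ring
    _ ≤ _ := hcvx
    _ = _ := by field_simp; ring

lemma chord_intercept_le_exp {a b : ℝ} (ha : a ≤ 0) (hb : 0 ≤ b) (hab : a < b) (t : ℝ) :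
    (b * exp (t * a) - a * exp (t * b)) / (b - a) ≤
      exp (((‖b - a‖₊ / 2) ^ 2 : NNReal) * t ^ 2 / 2) := by
  have hba : 0 < b - a := sub_pos.2 hab
  set μ : Measure ℝ := ENNReal.ofReal (b / (b - a)) • Measure.dirac a
    + ENNReal.ofReal (-a / (b - a)) • Measure.dirac b
  have hp : 0 ≤ b / (b - a) := div_nonneg hb hba.le
  have hq : 0 ≤ -a / (b - a) := div_nonneg (neg_nonneg.2 ha) hba.le
  have integral_eq (f : ℝ → ℝ) : ∫ x, f x ∂μ = b / (b - a) * f a + -a / (b - a) * f b := by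
    rw [integral_add_measure, integral_smul_measure, integral_smul_measure, integral_dirac,
      integral_dirac, ENNReal.toReal_ofReal hp, ENNReal.toReal_ofReal hq, smul_eq_mul, smul_eq_mul]
    all_goals exact (integrable_dirac enorm_lt_top).smul_measure ENNReal.ofReal_ne_top
  have : IsProbabilityMeasure μ := ⟨by
    simp only [μ, Measure.coe_add, Measure.coe_smul, Pi.add_apply, Pi.smul_apply, measure_univ,
      smul_eq_mul, mul_one]
    rw [← ENNReal.ofReal_add hp hq, ← add_div, ← sub_eq_add_neg, div_self hba.ne',
      ENNReal.ofReal_one]⟩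
  have hsupp : ∀ᵐ x ∂μ, id x ∈ Set.Icc a b := by
    refine ae_add_measure_iff.2 ⟨Measure.ae_smul_measure ?_ _, Measure.ae_smul_measure ?_ _⟩ <;>
      simp [ae_dirac_eq, hab.le]
  have hmean : μ[id] = 0 := by
    rw [integral_eq]; field_simp; simp only [id]; ring
  convert (hasSubgaussianMGF_of_mem_Icc_of_integral_eq_zero aemeasurable_id hsupp hmean).mgf_le t
    using 1
  rw [mgf, integral_eq]; field_simp; simp only [id]; ring_nf

lemma memLp_top_finset_prod {ι Ω : Type*} [MeasurableSpace Ω] {μ : Measure Ω}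
    {f : ι → Ω → ℝ} (s : Finset ι) (hf : ∀ i ∈ s, MemLp (f i) ⊤ μ) :
    MemLp (fun ω ↦ ∏ i ∈ s, f i ω) ⊤ μ := by
  simpa only [Finset.prod_fn] using
    Finset.prod_induction f (fun g ↦ MemLp g ⊤ μ) (fun _ _ hg hh ↦ hh.mul hg) (memLp_top_const 1) hf

section Multiplicative

variable {ι Ω : Type*} [Fintype ι] [MeasurableSpace Ω] {P : Measure Ω} [IsProbabilityMeasure P]
  {φ : ι → Ω → ℝ}

lemma integral_prod_add_mul_of_multiplicative
    (hint : ∀ S : Finset ι, Integrable (fun ω ↦ ∏ j ∈ S, φ j ω) P)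
    (hmult : ∀ S : Finset ι, S.Nonempty → ∫ ω, ∏ j ∈ S, φ j ω ∂P = 0) (α β : ι → ℝ) :
    ∫ ω, ∏ k, (α k + β k * φ k ω) ∂P = ∏ k, α k := by
  classical
  simp_rw [add_comm (α _), Finset.prod_add, Finset.prod_mul_distrib]
  rw [integral_finsetSum _ fun S _ ↦ ((hint S).const_mul _).mul_const _,
    Finset.sum_eq_single ∅]
  · simp
  · intro S _ hS
    rw [integral_mul_const, integral_const_mul, hmult S (Finset.nonempty_iff_ne_empty.2 hS),
      mul_zero, zero_mul]
  · simp

variable {a b : ι → ℝ} (ha : ∀ k, a k < 0) (hb : ∀ k, 0 < b k) (hφm : ∀ k, AEMeasurable (φ k) P)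
  (hφb : ∀ k, ∀ᵐ ω ∂P, φ k ω ∈ Set.Icc (a k) (b k))
include hφm hφb

lemma integrable_exp_mul_sum_of_mem_Icc (t : ℝ) :
    Integrable (fun ω ↦ exp (t * ∑ k, φ k ω)) P := by
  refine integrable_exp_mul_of_mem_Icc (a := ∑ k, a k) (b := ∑ k, b k)
    (Finset.aemeasurable_fun_sum _ fun k _ ↦ hφm k) ?_
  filter_upwards [ae_all_iff.2 hφb] with ω hω
  exact ⟨Finset.sum_le_sum fun k _ ↦ (hω k).1, Finset.sum_le_sum fun k _ ↦ (hω k).2⟩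

include ha hb

lemma mgf_sum_le_of_multiplicative
    (hmult : ∀ S : Finset ι, S.Nonempty → ∫ ω, ∏ j ∈ S, φ j ω ∂P = 0) (t : ℝ) :
    mgf (fun ω ↦ ∑ k, φ k ω) P t ≤
      exp (((∑ k, (‖b k - a k‖₊ / 2) ^ 2 : NNReal) : ℝ) * t ^ 2 / 2) := by
  have hab k : a k < b k := (ha k).trans (hb k)
  let α : ι → ℝ := fun k ↦ (b k * exp (t * a k) - a k * exp (t * b k)) / (b k - a k)
  let β : ι → ℝ := fun k ↦ (exp (t * b k) - exp (t * a k)) / (b k - a k)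
  have hφLp k : MemLp (φ k) ⊤ P := by
    refine memLp_top_of_bound (hφm k).aestronglyMeasurable (max |a k| |b k|) ?_
    filter_upwards [hφb k] with ω hω
    exact abs_le_max_abs_abs hω.1 hω.2
  have hfac k : MemLp (fun ω ↦ α k + β k * φ k ω) ⊤ P :=
    (memLp_top_const (α k)).add ((hφLp k).const_mul (β k))
  have hchord : ∀ᵐ ω ∂P, exp (t * ∑ k, φ k ω) ≤ ∏ k, (α k + β k * φ k ω) := by
    filter_upwards [ae_all_iff.2 hφb] with ω hω
    rw [Finset.mul_sum, exp_sum]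
    exact Finset.prod_le_prod (fun k _ ↦ (exp_pos _).le)
      fun k _ ↦ exp_mul_le_chord (hab k) (hω k) t
  -- at `x = 0` the chord bound reads `1 ≤ α k`
  have hα_nonneg k : 0 ≤ α k := by
    have := exp_mul_le_chord (hab k) ⟨(ha k).le, (hb k).le⟩ t
    rw [mul_zero, exp_zero, mul_zero, add_zero] at this
    exact zero_le_one.trans this
  calc mgf (fun ω ↦ ∑ k, φ k ω) P t ≤ ∫ ω, ∏ k, (α k + β k * φ k ω) ∂P :=
        integral_mono_ae (integrable_exp_mul_sum_of_mem_Icc hφm hφb t)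
          ((memLp_top_finset_prod _ fun k _ ↦ hfac k).integrable le_top) hchord
    _ = ∏ k, α k := integral_prod_add_mul_of_multiplicative
        (fun S ↦ (memLp_top_finset_prod S fun k _ ↦ hφLp k).integrable le_top) hmult α β
    _ ≤ ∏ k, exp (((‖b k - a k‖₊ / 2) ^ 2 : NNReal) * t ^ 2 / 2) :=
        Finset.prod_le_prod (fun k _ ↦ hα_nonneg k)
          fun k _ ↦ chord_intercept_le_exp (ha k).le (hb k).le (hab k) t
    _ = _ := by rw [← exp_sum, NNReal.coe_sum, Finset.sum_mul, Finset.sum_div]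

theorem hasSubgaussianMGF_sum_of_multiplicative
    (hmult : ∀ S : Finset ι, S.Nonempty → ∫ ω, ∏ j ∈ S, φ j ω ∂P = 0) :
    HasSubgaussianMGF (fun ω ↦ ∑ k, φ k ω) (∑ k, (‖b k - a k‖₊ / 2) ^ 2) P where
  integrable_exp_mul := integrable_exp_mul_sum_of_mem_Icc hφm hφb
  mgf_le := mgf_sum_le_of_multiplicative ha hb hφm hφb hmult

end Multiplicative

theorem stmt_5 {Ω : Type*} [MeasurableSpace Ω] (P : Measure Ω) [IsProbabilityMeasure P]
    (n : ℕ) (A B : Fin n → ℝ) (hA : ∀ k, A k < 0) (hB : ∀ k, 0 < B k)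
    (φ : Fin n → Ω → ℝ) (hφm : ∀ k, Measurable (φ k))
    (hφb : ∀ k, ∀ᵐ ω ∂P, A k ≤ φ k ω ∧ φ k ω ≤ B k)
    (hmult : ∀ S : Finset (Fin n), S.Nonempty → ∫ ω, ∏ j ∈ S, φ j ω ∂P = 0)
    (lam : ℝ) (hlam : 0 < lam) :
    (P {ω | lam < ∑ k, φ k ω}).toReal ≤
      Real.exp (-(2 * lam ^ 2) / ∑ k, (B k - A k) ^ 2) := by
  have hsub := hasSubgaussianMGF_sum_of_multiplicative hA hB (fun k ↦ (hφm k).aemeasurable) hφb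
    hmult
  have hc : ((∑ k, (‖B k - A k‖₊ / 2) ^ 2 : NNReal) : ℝ) = (∑ k, (B k - A k) ^ 2) / 4 := by
    push_cast
    simp only [Real.norm_eq_abs, div_pow, sq_abs, Finset.sum_div]
    norm_num
  calc (P {ω | lam < ∑ k, φ k ω}).toReal ≤ P.real {ω | lam ≤ ∑ k, φ k ω} :=
        measureReal_mono (Set.ofPred_subset_ofPred.2 fun _ ↦ le_of_lt)
    _ ≤ exp (-lam ^ 2 / (2 * ((∑ k, (‖B k - A k‖₊ / 2) ^ 2 : NNReal) : ℝ))) :=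
        hsub.measure_ge_le hlam.le
    _ = _ := by rw [hc]; ring_nf
end

section
/- For any integer n ≥ 2 and any half-open interval I = [a,b) with a < b there exist step functions f_1,…,f_n on I taking only the values +1 and −1 such that ∏_{k=1}^n f_k(x) = 1 for all x ∈ I, and ∫_I ∏_{k∈U} f_k(x) dx = 0 for every nonempty proper subset U of {1,…,n}. -/
open MeasureTheory

/-- `f` is a step function on `[a, b)`: on `[a, b)` it coincides with a finite linear
combination of indicator functions of subintervals `[α, β) ⊆ [a, b)`. -/
def IsStepOn (f : ℝ → ℝ) (a b : ℝ) : Prop :=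
  ∃ (m : ℕ) (c α β : Fin m → ℝ),
    (∀ i, a ≤ α i ∧ β i ≤ b) ∧
    ∀ x ∈ Set.Ico a b,
      f x = ∑ i, c i * (Set.Ico (α i) (β i)).indicator (fun _ => (1 : ℝ)) x

/-!
Cut `[a, b)` into equal cells indexed by the sign vectors `σ ∈ {±1}ⁿ` with `∏ₖ σₖ = 1`, and let
`fₖ` read off the `k`-th sign of the cell's vector. Then `∫ ∏_{k ∈ U} fₖ` is the cell length times
the sum of the character `χ_U σ = ∏_{k ∈ U} σₖ` over these vectors. As the indicator of
`χ_univ = 1` is `(1 + χ_univ) / 2` and `χ_U χ_univ = χ_Uᶜ`, that sum is half the sum of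
`χ_U + χ_Uᶜ` over all sign vectors, and a character with nonempty support sums to zero.
-/

open Finset

def Bool.toSign (b : Bool) : ℝ := if b then -1 else 1

lemma Bool.toSign_mul_self (b : Bool) : b.toSign * b.toSign = 1 := by
  cases b <;> simp [Bool.toSign]

lemma Bool.toSign_eq_one_or (b : Bool) : b.toSign = 1 ∨ b.toSign = -1 := by
  cases b <;> simp [Bool.toSign]

lemma Bool.sum_toSign : ∑ b : Bool, b.toSign = 0 := by
  simp [Bool.toSign]

section SignProd

variable {ι : Type*}

def signProd (U : Finset ι) (σ : ι → Bool) : ℝ := ∏ k ∈ U, (σ k).toSign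

lemma signProd_mul_self (U : Finset ι) (σ : ι → Bool) : signProd U σ * signProd U σ = 1 := by
  rw [signProd, ← prod_mul_distrib]
  exact prod_eq_one fun k _ => (σ k).toSign_mul_self

variable [Fintype ι] [DecidableEq ι]

lemma signProd_mul_signProd_compl (U : Finset ι) (σ : ι → Bool) :
    signProd U σ * signProd Uᶜ σ = signProd univ σ :=
  prod_mul_prod_compl U _

lemma sum_signProd_eq_zero {U : Finset ι} (hU : U.Nonempty) :
    ∑ σ : ι → Bool, signProd U σ = 0 := by
  obtain ⟨k, hk⟩ := hU
  calc ∑ σ : ι → Bool, signProd U σ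
      = ∑ σ : ι → Bool, ∏ i, if i ∈ U then (σ i).toSign else 1 := by
        simp only [prod_ite_mem, univ_inter, signProd]
    _ = ∏ i, ∑ b : Bool, if i ∈ U then b.toSign else 1 :=
        (Fintype.prod_sum fun i (b : Bool) => if i ∈ U then b.toSign else 1).symm
    _ = 0 := prod_eq_zero (mem_univ k) (by simp only [hk, if_true, Bool.sum_toSign])

lemma sum_signProd_filter_eq_zero {U : Finset ι} (hU : U.Nonempty) (hU' : U ≠ univ) :
    ∑ σ with signProd univ σ = 1, signProd U σ = 0 := by
  have hUc : Uᶜ.Nonempty := (compl_ne_univ_iff_nonempty Uᶜ).1 (by rwa [compl_compl])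
  have halve : ∀ σ : ι → Bool,
      (if signProd univ σ = 1 then signProd U σ else 0) = (signProd U σ + signProd Uᶜ σ) / 2 := by
    intro σ
    have hcompl : signProd Uᶜ σ = signProd U σ * signProd univ σ := by
      rw [← signProd_mul_signProd_compl U, ← mul_assoc, signProd_mul_self, one_mul]
    split_ifs with h
    · rw [hcompl, h]; ring
    · have : signProd univ σ = -1 :=
        (mul_self_eq_one_iff.1 (signProd_mul_self univ σ)).resolve_left h
      rw [hcompl, this]; ring
  rw [sum_filter, Fintype.sum_congr _ _ halve, ← sum_div, sum_add_distrib,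
    sum_signProd_eq_zero hU, sum_signProd_eq_zero hUc, add_zero, zero_div]

end SignProd

section Equipartition

variable {a δ x : ℝ} {N : ℕ}

def cell (a δ : ℝ) (j : ℕ) : Set ℝ := Set.Ico (a + j * δ) (a + (j + 1) * δ)

lemma floor_div_eq_iff_mem_cell (hδ : 0 < δ) (hx : a ≤ x) (j : ℕ) :
    ⌊(x - a) / δ⌋₊ = j ↔ x ∈ cell a δ j := by
  rw [Nat.floor_eq_iff (div_nonneg (sub_nonneg.2 hx) hδ.le), le_div_iff₀ hδ, div_lt_iff₀ hδ,
    cell, Set.mem_Ico]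
  constructor <;> rintro ⟨h₁, h₂⟩ <;> constructor <;> linarith

lemma cell_bounds (hδ : 0 < δ) {j : ℕ} (hj : j < N) :
    a ≤ a + j * δ ∧ a + (j + 1) * δ ≤ a + N * δ := by
  have hj' : (j : ℝ) + 1 ≤ N := by exact_mod_cast hj
  constructor <;> nlinarith [j.cast_nonneg (α := ℝ)]

lemma cell_subset (hδ : 0 < δ) {j : ℕ} (hj : j < N) : cell a δ j ⊆ Set.Ico a (a + N * δ) :=
  Set.Ico_subset_Ico (cell_bounds hδ hj).1 (cell_bounds hδ hj).2

lemma volume_cell (hδ : 0 < δ) (j : ℕ) : volume.real (cell a δ j) = δ := by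
  rw [cell, Real.volume_real_Ico_of_le (by nlinarith)]
  ring

lemma measurableSet_cell (j : ℕ) : MeasurableSet (cell a δ j) := measurableSet_Ico

variable [NeZero N]

-- The floor is reduced mod `N`, so this is the cell of `x` only for `x ∈ [a, a + N δ)`.
noncomputable def cellIndex (a δ : ℝ) (N : ℕ) [NeZero N] (x : ℝ) : Fin N :=
  Fin.ofNat N ⌊(x - a) / δ⌋₊

lemma cellIndex_eq_iff (hδ : 0 < δ) (hx : x ∈ Set.Ico a (a + N * δ)) (j : Fin N) :
    cellIndex a δ N x = j ↔ x ∈ cell a δ j := by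
  have hlt : ⌊(x - a) / δ⌋₊ < N := by
    rw [Nat.floor_lt (div_nonneg (sub_nonneg.2 hx.1) hδ.le), div_lt_iff₀ hδ]
    linarith [hx.2]
  rw [cellIndex, Fin.ext_iff, Fin.val_ofNat, Nat.mod_eq_of_lt hlt,
    floor_div_eq_iff_mem_cell hδ hx.1]

lemma comp_cellIndex_eq_sum (hδ : 0 < δ) (c : Fin N → ℝ) (hx : x ∈ Set.Ico a (a + N * δ)) :
    c (cellIndex a δ N x) = ∑ j, c j * (cell a δ j).indicator (fun _ => (1 : ℝ)) x := by
  rw [sum_eq_single (cellIndex a δ N x)]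
  · rw [Set.indicator_of_mem ((cellIndex_eq_iff hδ hx _).1 rfl), mul_one]
  · intro j _ hj
    rw [Set.indicator_of_notMem (fun h => hj ((cellIndex_eq_iff hδ hx j).2 h).symm), mul_zero]
  · exact fun h => absurd (mem_univ _) h

lemma isStepOn_comp_cellIndex (hδ : 0 < δ) (c : Fin N → ℝ) :
    IsStepOn (fun x => c (cellIndex a δ N x)) a (a + N * δ) :=
  ⟨N, c, fun j => a + j * δ, fun j => a + (j + 1) * δ,
    fun j => cell_bounds hδ j.2, fun _ hx => comp_cellIndex_eq_sum hδ c hx⟩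

lemma setIntegral_comp_cellIndex (hδ : 0 < δ) (c : Fin N → ℝ) :
    ∫ x in Set.Ico a (a + N * δ), c (cellIndex a δ N x) = δ * ∑ j, c j := by
  rw [setIntegral_congr_fun measurableSet_Ico fun x hx => comp_cellIndex_eq_sum hδ c hx,
    integral_finsetSum _ fun j _ =>
      ((integrable_const 1).indicator measurableSet_Ico).const_mul _, mul_sum]
  refine sum_congr rfl fun j _ => ?_
  rw [integral_const_mul, setIntegral_indicator (measurableSet_cell _),
    Set.inter_eq_self_of_subset_right (cell_subset hδ j.2), setIntegral_const, volume_cell hδ,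
    smul_eq_mul, mul_one, mul_comm]

end Equipartition

theorem exists_equipartition {ι : Type*} [Fintype ι] [Nonempty ι] {a b : ℝ} (hab : a < b) :
    ∃ p : ℝ → ι, ∀ c : ι → ℝ, IsStepOn (fun x => c (p x)) a b ∧
      ∫ x in Set.Ico a b, c (p x) = (b - a) / Fintype.card ι * ∑ i, c i := by
  set N := Fintype.card ι
  have : NeZero N := ⟨Fintype.card_ne_zero⟩
  have hδ : 0 < (b - a) / N := div_pos (sub_pos.2 hab) (by positivity)
  have hb : a + N * ((b - a) / N) = b := by
    rw [mul_div_cancel₀ _ (Nat.cast_ne_zero.2 (NeZero.ne N))]; ring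
  let e := Fintype.equivFin ι
  refine ⟨fun x => e.symm (cellIndex a ((b - a) / N) N x), fun c => ⟨?_, ?_⟩⟩
  · simpa only [hb] using isStepOn_comp_cellIndex (a := a) (N := N) hδ (fun j => c (e.symm j))
  · rw [← e.symm.sum_comp]
    simpa only [hb] using setIntegral_comp_cellIndex (a := a) (N := N) hδ (fun j => c (e.symm j))

theorem stmt_6_general (n : ℕ) (a b : ℝ) (hab : a < b) :
    ∃ f : Fin n → ℝ → ℝ,
      (∀ k, IsStepOn (f k) a b) ∧
      (∀ k, ∀ x ∈ Set.Ico a b, f k x = 1 ∨ f k x = -1) ∧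
      (∀ x ∈ Set.Ico a b, ∏ k, f k x = 1) ∧
      ∀ U : Finset (Fin n), U.Nonempty → U ≠ Finset.univ →
        ∫ x in Set.Ico a b, ∏ k ∈ U, f k x = 0 := by
  classical
  let ι := {σ : Fin n → Bool // signProd univ σ = 1}
  have : Nonempty ι := ⟨⟨fun _ => false, prod_eq_one fun _ _ => rfl⟩⟩
  obtain ⟨p, hp⟩ := exists_equipartition (ι := ι) hab
  refine ⟨fun k x => ((p x).1 k).toSign, fun k => (hp fun σ => (σ.1 k).toSign).1,
    fun k x _ => Bool.toSign_eq_one_or _, fun x _ => (p x).2, fun U hU hU' => ?_⟩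
  change ∫ x in Set.Ico a b, signProd U (p x).1 = 0
  rw [(hp fun σ => signProd U σ.1).2, ← sum_subtype _ (fun σ => mem_filter_univ σ),
    sum_signProd_filter_eq_zero hU hU', mul_zero]

theorem stmt_6 (n : ℕ) (hn : 2 ≤ n) (a b : ℝ) (hab : a < b) :
    ∃ f : Fin n → ℝ → ℝ,
      (∀ k, IsStepOn (f k) a b) ∧
      (∀ k, ∀ x ∈ Set.Ico a b, f k x = 1 ∨ f k x = -1) ∧
      (∀ x ∈ Set.Ico a b, ∏ k, f k x = 1) ∧
      ∀ U : Finset (Fin n), U.Nonempty → U ≠ Finset.univ →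
        ∫ x in Set.Ico a b, ∏ k ∈ U, f k x = 0 :=
  stmt_6_general n a b hab
end

section
/- Let φ_1,…,φ_n be Lebesgue-measurable functions on [0,1) with A_k ≤ φ_k(x) ≤ B_k for all x, where A_k < 0 < B_k, let 𝔐 be an arbitrary family of nonempty subsets of {1,…,n}, and let μ = μ(φ,𝔐) be the multiplicative error of φ over 𝔐 (with integrals over [0,1)). Then there exist Lebesgue-measurable functions φ̃_1,…,φ̃_n on [0,1+μ) such that φ̃_k(x) = φ_k(x) for x ∈ [0,1), A_k ≤ φ̃_k(x) ≤ B_k for all x ∈ [0,1+μ), each φ̃_k restricted to [1,1+μ) is a step function, and ∫_0^{1+μ} ∏_{j∈S} φ̃_j(x) dx = 0 for every S ∈ 𝔐. -/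
open MeasureTheory

/-- The multiplicative error `μ(φ, 𝔐)` of a system of functions on `[0, 1)` over a family
`𝔐` of index sets, with integrals taken over `[0, 1)` with respect to Lebesgue measure. -/
noncomputable def multErrorFam {n : ℕ} (𝔐 : Finset (Finset (Fin n)))
    (A B : Fin n → ℝ) (φ : Fin n → ℝ → ℝ) : ℝ :=
  ∑ S ∈ 𝔐, (∏ j ∈ S, min (-(A j)) (B j))⁻¹ *
    |∫ x in Set.Ico (0 : ℝ) 1, ∏ j ∈ S, φ j x|

/-!
For each `S ∈ 𝔐` we append to `[0, 1)` a block of total length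
`μ_S = |∫₀¹ ∏_{j ∈ S} φ_j| / ∏_{j ∈ S} C_j`, so the blocks fill `[1, 1 + μ)`. The block of `S`
consists of `2ⁿ` cells of equal length, one for each sign pattern `ε ∈ {±1}ⁿ`; on the cell of `ε`
coordinate `j` takes the value `C_j ε_j`, except at a pivot `j₀ ∈ S`, where it takes
`σ C_{j₀} ε_{j₀} ∏_{i ∈ S} ε_i` with `σ = -sign (∫₀¹ ∏_{j ∈ S} φ_j)`. All values lie in
`[-C_j, C_j] ⊆ [A_j, B_j]`. For a nonempty `T`, the product over `T` of these values is
`∏_{j ∈ T} C_j` times the Walsh character `ε_T`, or `σ ε_T ε_S` when `j₀ ∈ T`; its mean over `ε`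
vanishes unless `T = S`. So the block of `S` adds exactly `-∫₀¹ ∏_{j ∈ S} φ_j` to the integral of
`∏_{j ∈ S} ψ_j` and nothing to the integral of `∏_{j ∈ T} ψ_j` for `T ≠ S`.
-/

theorem integrableOn_finset_prod_of_abs_le {β ι : Type*} [MeasurableSpace β] {μ : Measure β}
    {s : Set β} (hsm : MeasurableSet s) (hs : μ s ≠ ⊤) {f : ι → β → ℝ}
    (hf : ∀ j, Measurable (f j)) {M : ι → ℝ} (hfM : ∀ j, ∀ x ∈ s, |f j x| ≤ M j)
    (S : Finset ι) : IntegrableOn (fun x => ∏ j ∈ S, f j x) s μ := by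
  refine Measure.integrableOn_of_bounded (M := ∏ j ∈ S, M j) hs
    (Finset.measurable_prod S fun j _ => hf j).aestronglyMeasurable
    (ae_restrict_of_forall_mem hsm fun x hx => ?_)
  rw [norm_prod]
  exact Finset.prod_le_prod (fun _ _ => norm_nonneg _) fun j _ => hfM j x hx

section

open Set

theorem setIntegral_Ico_eq_add {f : ℝ → ℝ} {a b c : ℝ} (hab : a ≤ b) (hbc : b ≤ c)
    (h₁ : IntegrableOn f (Ico a b)) (h₂ : IntegrableOn f (Ico b c)) :
    ∫ x in Ico a c, f x = (∫ x in Ico a b, f x) + ∫ x in Ico b c, f x := by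
  rw [← Ico_union_Ico_eq_Ico hab hbc]
  exact setIntegral_union Ico_disjoint_Ico_same measurableSet_Ico h₁ h₂

theorem isStepOn_of_eqOn_const {f : ℝ → ℝ} {a b : ℝ} (c : ℝ) (h : EqOn f (fun _ => c) (Ico a b)) :
    IsStepOn f a b :=
  ⟨1, fun _ => c, fun _ => a, fun _ => b, fun _ => ⟨le_rfl, le_rfl⟩, fun x hx => by
    simp [h hx, indicator_of_mem hx]⟩

theorem IsStepOn.congr {f g : ℝ → ℝ} {a b : ℝ} (hf : IsStepOn f a b) (h : EqOn f g (Ico a b)) :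
    IsStepOn g a b := by
  obtain ⟨m, c, α, β, hαβ, hrepr⟩ := hf
  exact ⟨m, c, α, β, hαβ, fun x hx => (h hx).symm.trans (hrepr x hx)⟩

theorem IsStepOn.append {f : ℝ → ℝ} {a b c : ℝ} (hab : a ≤ b) (hbc : b ≤ c)
    (h₁ : IsStepOn f a b) (h₂ : IsStepOn f b c) : IsStepOn f a c := by
  obtain ⟨m₁, c₁, α₁, β₁, hαβ₁, hrepr₁⟩ := h₁
  obtain ⟨m₂, c₂, α₂, β₂, hαβ₂, hrepr₂⟩ := h₂
  have hvanish₁ : ∀ x, b ≤ x → ∑ i, c₁ i * (Ico (α₁ i) (β₁ i)).indicator (fun _ => (1 : ℝ)) x = 0 :=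
    fun x hx => Finset.sum_eq_zero fun i _ => by
      rw [indicator_of_notMem fun hi => (hi.2.trans_le ((hαβ₁ i).2.trans hx)).false, mul_zero]
  have hvanish₂ : ∀ x, x < b → ∑ i, c₂ i * (Ico (α₂ i) (β₂ i)).indicator (fun _ => (1 : ℝ)) x = 0 :=
    fun x hx => Finset.sum_eq_zero fun i _ => by
      rw [indicator_of_notMem fun hi => (hx.trans_le ((hαβ₂ i).1.trans hi.1)).false, mul_zero]
  refine ⟨m₁ + m₂, Fin.append c₁ c₂, Fin.append α₁ α₂, Fin.append β₁ β₂, ?_, fun x hx => ?_⟩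
  · refine Fin.addCases (fun i => ?_) (fun i => ?_)
    · simpa using ⟨(hαβ₁ i).1, (hαβ₁ i).2.trans hbc⟩
    · simpa using ⟨hab.trans (hαβ₂ i).1, (hαβ₂ i).2⟩
  · rw [Fin.sum_univ_add]
    simp only [Fin.append_left, Fin.append_right]
    rcases lt_or_ge x b with hxb | hxb
    · rw [hvanish₂ x hxb, add_zero, hrepr₁ x ⟨hx.1, hxb⟩]
    · rw [hvanish₁ x hxb, zero_add, hrepr₂ x ⟨hxb, hx.2⟩]

end

namespace CellLayout

open Set

variable {α : Type*}

noncomputable def place (d : α) : List (ℝ × α) → ℝ → ℝ → α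
  | [], _, _ => d
  | p :: P, a, x => if x < a + p.1 then p.2 else place d P (a + p.1) x

def totalLength (P : List (ℝ × α)) : ℝ := (P.map Prod.fst).sum

@[simp] theorem totalLength_nil : totalLength ([] : List (ℝ × α)) = 0 := rfl

@[simp] theorem totalLength_cons (p : ℝ × α) (P : List (ℝ × α)) :
    totalLength (p :: P) = p.1 + totalLength P := by
  simp [totalLength]

theorem totalLength_nonneg {P : List (ℝ × α)} (hP : ∀ p ∈ P, 0 ≤ p.1) : 0 ≤ totalLength P :=
  List.sum_nonneg (by simpa using hP)

theorem measurable_place [MeasurableSpace α] (d : α) (P : List (ℝ × α)) (a : ℝ) :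
    Measurable (place d P a) := by
  induction P generalizing a with
  | nil => exact measurable_const
  | cons p P ih => exact Measurable.ite measurableSet_Iio measurable_const (ih _)

theorem place_cons_of_lt (d : α) {p : ℝ × α} (P : List (ℝ × α)) {a x : ℝ} (hx : x < a + p.1) :
    place d (p :: P) a x = p.2 :=
  if_pos hx

theorem place_cons_of_le (d : α) {p : ℝ × α} (P : List (ℝ × α)) {a x : ℝ} (hx : a + p.1 ≤ x) :
    place d (p :: P) a x = place d P (a + p.1) x :=
  if_neg (not_lt.2 hx)

theorem place_eq_default_or_mem (d : α) (P : List (ℝ × α)) (a x : ℝ) :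
    place d P a x = d ∨ ∃ p ∈ P, p.2 = place d P a x := by
  induction P generalizing a with
  | nil => exact Or.inl rfl
  | cons p P ih =>
    by_cases hx : x < a + p.1
    · exact Or.inr ⟨p, List.mem_cons_self, (place_cons_of_lt d P hx).symm⟩
    · rw [place_cons_of_le d P (not_lt.1 hx)]
      rcases ih (a + p.1) with h | ⟨q, hq, h⟩
      · exact Or.inl h
      · exact Or.inr ⟨q, List.mem_cons_of_mem _ hq, h⟩

theorem abs_place_apply_le {ι : Type*} {C : ι → ℝ} (hC : ∀ j, 0 ≤ C j)
    {P : List (ℝ × (ι → ℝ))} (hP : ∀ p ∈ P, ∀ j, |p.2 j| ≤ C j) (a x : ℝ) (j : ι) :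
    |place 0 P a x j| ≤ C j := by
  rcases place_eq_default_or_mem 0 P a x with h | ⟨p, hp, h⟩
  · simpa [h] using hC j
  · exact h ▸ hP p hp j

theorem integrableOn_comp_place_and_setIntegral (d : α) (g : α → ℝ) (P : List (ℝ × α))
    (hP : ∀ p ∈ P, 0 ≤ p.1) (a : ℝ) :
    IntegrableOn (fun x => g (place d P a x)) (Ico a (a + totalLength P)) ∧
      ∫ x in Ico a (a + totalLength P), g (place d P a x) = (P.map fun p => p.1 * g p.2).sum := by
  induction P generalizing a with
  | nil => simp
  | cons p P ih =>
    have hp : 0 ≤ p.1 := hP p List.mem_cons_self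
    have hP' : ∀ q ∈ P, 0 ≤ q.1 := fun q hq => hP q (List.mem_cons_of_mem _ hq)
    obtain ⟨hint, heq⟩ := ih hP' (a + p.1)
    have hhead : EqOn (fun x => g (place d (p :: P) a x)) (fun _ => g p.2) (Ico a (a + p.1)) :=
      fun x hx => congrArg g (place_cons_of_lt d P hx.2)
    have htail : EqOn (fun x => g (place d (p :: P) a x)) (fun x => g (place d P (a + p.1) x))
        (Ico (a + p.1) (a + p.1 + totalLength P)) :=
      fun x hx => congrArg g (place_cons_of_le d P hx.1)
    have i₁ : IntegrableOn (fun x => g (place d (p :: P) a x)) (Ico a (a + p.1)) :=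
      (integrableOn_congr_fun hhead measurableSet_Ico).2 (integrableOn_const measure_Ico_lt_top.ne)
    have i₂ := (integrableOn_congr_fun htail measurableSet_Ico).2 hint
    have hab : a ≤ a + p.1 := le_add_of_nonneg_right hp
    have hbc : a + p.1 ≤ a + p.1 + totalLength P := le_add_of_nonneg_right (totalLength_nonneg hP')
    rw [totalLength_cons, ← add_assoc]
    refine ⟨Ico_union_Ico_eq_Ico hab hbc ▸ i₁.union i₂, ?_⟩
    rw [setIntegral_Ico_eq_add hab hbc i₁ i₂, setIntegral_congr_fun measurableSet_Ico hhead,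
      setIntegral_congr_fun measurableSet_Ico htail]
    simp [heq, hp]

theorem isStepOn_comp_place (d : α) (π : α → ℝ) (P : List (ℝ × α)) (hP : ∀ p ∈ P, 0 ≤ p.1)
    (a : ℝ) : IsStepOn (fun x => π (place d P a x)) a (a + totalLength P) := by
  induction P generalizing a with
  | nil => exact isStepOn_of_eqOn_const 0 (by simp)
  | cons p P ih =>
    have hp : 0 ≤ p.1 := hP p List.mem_cons_self
    have hP' : ∀ q ∈ P, 0 ≤ q.1 := fun q hq => hP q (List.mem_cons_of_mem _ hq)
    rw [totalLength_cons, ← add_assoc]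
    refine (isStepOn_of_eqOn_const (π p.2) fun _ hx => ?_).append (le_add_of_nonneg_right hp)
      (le_add_of_nonneg_right (totalLength_nonneg hP')) ((ih hP' _).congr fun _ hx => ?_)
    · exact congrArg π (place_cons_of_lt d P hx.2)
    · exact congrArg π (place_cons_of_le d P hx.1).symm

section Extension

variable {ι : Type*} (φ : ι → ℝ → ℝ) (P : List (ℝ × (ι → ℝ))) (a : ℝ)

noncomputable def extendByCells (k : ι) (x : ℝ) : ℝ :=
  if x < a then φ k x else place 0 P a x k

variable {φ P a}

theorem extendByCells_of_lt {x : ℝ} (hx : x < a) (k : ι) : extendByCells φ P a k x = φ k x :=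
  if_pos hx

theorem extendByCells_of_le {x : ℝ} (hx : a ≤ x) (k : ι) :
    extendByCells φ P a k x = place 0 P a x k :=
  if_neg (not_lt.2 hx)

theorem measurable_extendByCells (hφ : ∀ k, Measurable (φ k)) (k : ι) :
    Measurable (extendByCells φ P a k) :=
  Measurable.ite measurableSet_Iio (hφ k) ((measurable_pi_apply k).comp (measurable_place 0 P a))

theorem setIntegral_prod_extendByCells {a₀ : ℝ} (ha₀ : a₀ ≤ a) (hP : ∀ p ∈ P, 0 ≤ p.1)
    (S : Finset ι)
    (hint : IntegrableOn (fun x => ∏ j ∈ S, extendByCells φ P a j x) (Ico a₀ (a + totalLength P))) :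
    ∫ x in Ico a₀ (a + totalLength P), ∏ j ∈ S, extendByCells φ P a j x =
      (∫ x in Ico a₀ a, ∏ j ∈ S, φ j x) + (P.map fun p => p.1 * ∏ j ∈ S, p.2 j).sum := by
  have ha : a ≤ a + totalLength P := le_add_of_nonneg_right (totalLength_nonneg hP)
  rw [setIntegral_Ico_eq_add ha₀ ha (hint.mono_set (Ico_subset_Ico_right ha))
      (hint.mono_set (Ico_subset_Ico_left ha₀)),
    ← (integrableOn_comp_place_and_setIntegral 0 (fun v => ∏ j ∈ S, v j) P hP a).2]
  congr 1
  · exact setIntegral_congr_fun measurableSet_Ico fun x hx =>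
      Finset.prod_congr rfl fun j _ => extendByCells_of_lt hx.2 j
  · exact setIntegral_congr_fun measurableSet_Ico fun x hx =>
      Finset.prod_congr rfl fun j _ => extendByCells_of_le hx.1 j

end Extension

open Finset

def boolSign (b : Bool) : ℝ := if b then -1 else 1

@[simp] theorem abs_boolSign (b : Bool) : |boolSign b| = 1 := by cases b <;> simp [boolSign]

variable {ι : Type*} [DecidableEq ι]

theorem sum_prod_boolSign_mul_prod_boolSign [Fintype ι] (S T : Finset ι) :
    ∑ b : ι → Bool, (∏ i ∈ S, boolSign (b i)) * ∏ i ∈ T, boolSign (b i) =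
      if S = T then 2 ^ Fintype.card ι else 0 := by
  have hfactor : ∀ i, ∑ β : Bool, (if i ∈ S then boolSign β else 1) *
      (if i ∈ T then boolSign β else 1) = if (i ∈ S ↔ i ∈ T) then 2 else 0 := by
    intro i
    by_cases hS : i ∈ S <;> by_cases hT : i ∈ T <;> norm_num [hS, hT, boolSign]
  calc _ = ∑ b : ι → Bool, ∏ i, (if i ∈ S then boolSign (b i) else 1) *
        (if i ∈ T then boolSign (b i) else 1) := by
        simp only [prod_mul_distrib, prod_ite_mem, Finset.univ_inter]
    _ = ∏ i, ∑ β : Bool, (if i ∈ S then boolSign β else 1) *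
        (if i ∈ T then boolSign β else 1) := (Fintype.prod_sum fun i β =>
          (if i ∈ S then boolSign β else 1) * (if i ∈ T then boolSign β else 1)).symm
    _ = ∏ i, if (i ∈ S ↔ i ∈ T) then (2 : ℝ) else 0 := prod_congr rfl fun i _ => hfactor i
    _ = _ := by
        split_ifs with h
        · simp [h]
        · obtain ⟨i, hi⟩ : ∃ i, ¬(i ∈ S ↔ i ∈ T) := by simpa [Finset.ext_iff] using h
          exact prod_eq_zero (mem_univ i) (if_neg hi)

def cellValue (C : ι → ℝ) (S : Finset ι) (j₀ : ι) (σ : ℝ) (b : ι → Bool) (j : ι) : ℝ :=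
  C j * boolSign (b j) * if j = j₀ then σ * ∏ i ∈ S, boolSign (b i) else 1

theorem abs_cellValue_le {C : ι → ℝ} (hC : ∀ j, 0 ≤ C j) (S : Finset ι) (j₀ : ι) {σ : ℝ}
    (hσ : |σ| ≤ 1) (b : ι → Bool) (j : ι) : |cellValue C S j₀ σ b j| ≤ C j := by
  have hfactor : |if j = j₀ then σ * ∏ i ∈ S, boolSign (b i) else 1| ≤ 1 := by
    split_ifs <;> simp [abs_prod, hσ]
  rw [cellValue, abs_mul, abs_mul, abs_boolSign, mul_one, abs_of_nonneg (hC j)]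
  exact mul_le_of_le_one_right (hC j) hfactor

theorem prod_cellValue (C : ι → ℝ) (S : Finset ι) (j₀ : ι) (σ : ℝ) (b : ι → Bool)
    (T : Finset ι) : ∏ j ∈ T, cellValue C S j₀ σ b j =
      (∏ j ∈ T, C j) * ((∏ j ∈ T, boolSign (b j)) *
        if j₀ ∈ T then σ * ∏ i ∈ S, boolSign (b i) else 1) := by
  simp only [cellValue, prod_mul_distrib, prod_ite_eq', mul_assoc]

theorem sum_prod_cellValue [Fintype ι] (C : ι → ℝ) {S : Finset ι} {j₀ : ι} (hj₀ : j₀ ∈ S) (σ : ℝ)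
    {T : Finset ι} (hT : T.Nonempty) :
    ∑ b : ι → Bool, ∏ j ∈ T, cellValue C S j₀ σ b j =
      if T = S then (∏ j ∈ T, C j) * σ * 2 ^ Fintype.card ι else 0 := by
  simp only [prod_cellValue]
  by_cases hj : j₀ ∈ T
  · calc ∑ b : ι → Bool, (∏ j ∈ T, C j) *
          ((∏ j ∈ T, boolSign (b j)) * if j₀ ∈ T then σ * ∏ i ∈ S, boolSign (b i) else 1)
        = (∏ j ∈ T, C j) * σ *
          ∑ b : ι → Bool, (∏ j ∈ T, boolSign (b j)) * ∏ i ∈ S, boolSign (b i) := by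
          rw [mul_sum]
          exact sum_congr rfl fun b _ => by rw [if_pos hj]; ring
      _ = _ := by rw [sum_prod_boolSign_mul_prod_boolSign]; split_ifs <;> simp
  · have hTS : T ≠ S := fun h => hj (h ▸ hj₀)
    calc ∑ b : ι → Bool, (∏ j ∈ T, C j) *
          ((∏ j ∈ T, boolSign (b j)) * if j₀ ∈ T then σ * ∏ i ∈ S, boolSign (b i) else 1)
        = (∏ j ∈ T, C j) *
          ∑ b : ι → Bool, (∏ j ∈ T, boolSign (b j)) * ∏ i ∈ ∅, boolSign (b i) := by
          simp [hj, mul_sum]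
      _ = _ := by
          rw [sum_prod_boolSign_mul_prod_boolSign, if_neg hT.ne_empty, if_neg hTS, mul_zero]

theorem exists_cells_sum_prod_eq_neg [Fintype ι] (𝔐 : Finset (Finset ι))
    (h𝔐 : ∀ S ∈ 𝔐, S.Nonempty) {C : ι → ℝ} (hC : ∀ j, 0 < C j) (t : Finset ι → ℝ) :
    ∃ P : List (ℝ × (ι → ℝ)), (∀ p ∈ P, 0 ≤ p.1 ∧ ∀ j, |p.2 j| ≤ C j) ∧
      totalLength P = ∑ S ∈ 𝔐, (∏ j ∈ S, C j)⁻¹ * |t S| ∧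
      ∀ S ∈ 𝔐, (P.map fun p => p.1 * ∏ j ∈ S, p.2 j).sum = -t S := by
  choose j₀ hj₀ using h𝔐
  have hCS : ∀ S, 0 < ∏ j ∈ S, C j := fun S => prod_pos fun j _ => hC j
  have hN : (0 : ℝ) < 2 ^ Fintype.card ι := by positivity
  let cell : 𝔐 × (ι → Bool) → ℝ × (ι → ℝ) := fun q =>
    ((∏ j ∈ q.1.1, C j)⁻¹ * |t q.1| / 2 ^ Fintype.card ι,
      cellValue C q.1 (j₀ q.1 q.1.2) (-SignType.sign (t q.1)) q.2)
  have hsum_cells : ∀ f : ℝ × (ι → ℝ) → ℝ,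
      (((univ : Finset (𝔐 × (ι → Bool))).toList.map cell).map f).sum =
        ∑ S : 𝔐, ∑ b, f (cell (S, b)) := by
    intro f
    rw [List.map_map, sum_map_toList, Fintype.sum_prod_type]
    rfl
  refine ⟨(univ : Finset (𝔐 × (ι → Bool))).toList.map cell, ?_, ?_, fun S hS => ?_⟩
  · simp only [List.mem_map]
    rintro _ ⟨q, -, rfl⟩
    refine ⟨div_nonneg (mul_nonneg (inv_nonneg.2 (hCS _).le) (abs_nonneg _)) hN.le,
      abs_cellValue_le (fun j => (hC j).le) _ _ ?_ _⟩
    rcases lt_trichotomy (t q.1) 0 with h | h | h <;> simp [h]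
  · rw [totalLength, hsum_cells, ← sum_coe_sort 𝔐]
    refine sum_congr rfl fun S _ => ?_
    simp only [cell, sum_const, card_univ, Fintype.card_fun, Fintype.card_bool, nsmul_eq_mul]
    push_cast
    field_simp
  · have hcell : ∀ S' : 𝔐, ∑ b, (cell (S', b)).1 * ∏ j ∈ S, (cell (S', b)).2 j =
        if S = S' then -t S else 0 := by
      intro S'
      simp only [cell]
      rw [← mul_sum, sum_prod_cellValue C (hj₀ S'.1 S'.2) _ ⟨j₀ S hS, hj₀ S hS⟩]
      split_ifs with h
      · rw [← h]
        calc _ = -(SignType.sign (t S) * |t S|) := by field_simp [(hCS S).ne', hN.ne']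
          _ = -t S := by rw [sign_mul_abs]
      · rw [mul_zero]
    rw [hsum_cells, sum_congr rfl fun S' _ => hcell S',
      sum_coe_sort 𝔐 (fun S' => if S = S' then -t S else 0), sum_ite_eq 𝔐 S, if_pos hS]

end CellLayout

theorem stmt_7 (n : ℕ) (A B : Fin n → ℝ) (hA : ∀ k, A k < 0) (hB : ∀ k, 0 < B k)
    (φ : Fin n → ℝ → ℝ) (hφm : ∀ k, Measurable (φ k))
    (hφb : ∀ k, ∀ x ∈ Set.Ico (0 : ℝ) 1, A k ≤ φ k x ∧ φ k x ≤ B k)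
    (𝔐 : Finset (Finset (Fin n))) (h𝔐 : ∀ S ∈ 𝔐, S.Nonempty) :
    ∃ ψ : Fin n → ℝ → ℝ,
      (∀ k, Measurable (ψ k)) ∧
      (∀ k, ∀ x ∈ Set.Ico (0 : ℝ) 1, ψ k x = φ k x) ∧
      (∀ k, ∀ x ∈ Set.Ico (0 : ℝ) (1 + multErrorFam 𝔐 A B φ),
        A k ≤ ψ k x ∧ ψ k x ≤ B k) ∧
      (∀ k, IsStepOn (ψ k) 1 (1 + multErrorFam 𝔐 A B φ)) ∧
      ∀ S ∈ 𝔐, ∫ x in Set.Ico (0 : ℝ) (1 + multErrorFam 𝔐 A B φ), ∏ j ∈ S, ψ j x = 0 := by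
  open CellLayout in
  have hC : ∀ j, 0 < min (-A j) (B j) := fun j => lt_min (neg_pos.2 (hA j)) (hB j)
  set t : Finset (Fin n) → ℝ := fun S => ∫ x in Set.Ico (0 : ℝ) 1, ∏ j ∈ S, φ j x
  obtain ⟨P, hP, hlen, hsum⟩ := exists_cells_sum_prod_eq_neg 𝔐 h𝔐 hC t
  change totalLength P = multErrorFam 𝔐 A B φ at hlen
  rw [← hlen]
  have hP₀ : ∀ p ∈ P, 0 ≤ p.1 := fun p hp => (hP p hp).1
  have hbounds : ∀ k, ∀ x ∈ Set.Ico (0 : ℝ) (1 + totalLength P),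
      A k ≤ extendByCells φ P 1 k x ∧ extendByCells φ P 1 k x ≤ B k := by
    intro k x hx
    rcases lt_or_ge x 1 with hx1 | hx1
    · exact (extendByCells_of_lt hx1 k) ▸ hφb k x ⟨hx.1, hx1⟩
    · have h := abs_le.1 (abs_place_apply_le (fun j => (hC j).le) (fun p hp => (hP p hp).2) 1 x k)
      rw [extendByCells_of_le hx1]
      exact ⟨by linarith [min_le_left (-A k) (B k)], by linarith [min_le_right (-A k) (B k)]⟩
  refine ⟨extendByCells φ P 1, measurable_extendByCells hφm,
    fun k x hx => extendByCells_of_lt hx.2 k, hbounds, fun k => ?_, fun S hS => ?_⟩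
  · exact (isStepOn_comp_place 0 (fun v => v k) P hP₀ 1).congr
      fun x hx => (extendByCells_of_le hx.1 k).symm
  · have hint : IntegrableOn (fun x => ∏ j ∈ S, extendByCells φ P 1 j x)
        (Set.Ico 0 (1 + totalLength P)) :=
      integrableOn_finset_prod_of_abs_le measurableSet_Ico measure_Ico_lt_top.ne
        (measurable_extendByCells hφm)
        (fun k x hx => abs_le_max_abs_abs (hbounds k x hx).1 (hbounds k x hx).2) S
    rw [setIntegral_prod_extendByCells zero_le_one hP₀ S hint, hsum S hS, add_neg_cancel]
end

section
/- Let f_1,…,f_n be step functions on [a,b) with A_k ≤ f_k(x) ≤ B_k for all x, where A_k < B_k. Then there exist step functions g_1,…,g_n on [a,b) such that each g_k takes only the values A_k and B_k, ∫_a^b ∏_{j∈S} g_j(x) dx = ∫_a^b ∏_{j∈S} f_j(x) dx for every nonempty subset S of {1,…,n}, and for every convex function Φ : ℝ → [0,∞) and all real coefficients a_1,…,a_n one has ∫_a^b Φ(∑_{k=1}^n a_k f_k(x)) dx ≤ ∫_a^b Φ(∑_{k=1}^n a_k g_k(x)) dx. -/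
open MeasureTheory

/-!
On an interval where every `f k` is a constant `t k`, write `t 0 = p * A 0 + q * B 0` as a convex
combination, let `g 0` be `B 0` on the first `q`-fraction of the interval and `A 0` on the rest,
and recurse on both parts for the remaining functions. The `g k` then behave like independent
random variables with means `t k`: the integral of `∏ j ∈ S, g j` is the length of the interval
times `∏ j ∈ S, t j`, and Jensen's inequality for `∑ k, c k * g k`, whose mean is
`∑ k, c k * t k`, gives the convex inequality. In general the `f k` are all constant between
consecutive breakpoints, and an induction on the set of breakpoints splits `[a, b)` at one of them
and glues the two replacements.
-/

open Set

def stepSpace (a b : ℝ) : Submodule ℝ (ℝ → ℝ) :=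
  Submodule.span ℝ {φ | ∃ α β, a ≤ α ∧ β ≤ b ∧ φ = (Ico α β).indicator fun _ => 1}

/-- `f` is constant on each of the pieces into which the points of `D` cut `[a, b)`. -/
def IsPiecewiseConstOn (D : Finset ℝ) (f : ℝ → ℝ) (a b : ℝ) : Prop :=
  ∀ x ∈ Ico a b, ∀ y ∈ Ico a b, x ≤ y → (∀ d ∈ D, d ∉ Ioc x y) → f x = f y

namespace IsPiecewiseConstOn

variable {D : Finset ℝ} {f : ℝ → ℝ} {a b : ℝ}

theorem mono {D' : Finset ℝ} (h : IsPiecewiseConstOn D f a b) (hD : D ⊆ D') :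
    IsPiecewiseConstOn D' f a b :=
  fun x hx y hy hxy hD' => h x hx y hy hxy fun d hd => hD' d (hD hd)

theorem of_insert {d a' b' : ℝ} (h : IsPiecewiseConstOn (insert d D) f a b) (ha : a ≤ a')
    (hb : b' ≤ b) (hd : d ∉ Ioo a' b') : IsPiecewiseConstOn D f a' b' := by
  refine fun x hx y hy hxy hD => h x ⟨ha.trans hx.1, hx.2.trans_le hb⟩ y
    ⟨ha.trans hy.1, hy.2.trans_le hb⟩ hxy fun e he => ?_
  rcases Finset.mem_insert.1 he with rfl | he
  · exact fun hex => hd ⟨hx.1.trans_lt hex.1, hex.2.trans_lt hy.2⟩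
  · exact hD e he

theorem eq_left_of_empty (h : IsPiecewiseConstOn ∅ f a b) {x : ℝ} (hx : x ∈ Ico a b) :
    f x = f a :=
  (h a ⟨le_rfl, hx.1.trans_lt hx.2⟩ x hx hx.1 fun _ hd => absurd hd (Finset.notMem_empty _)).symm

end IsPiecewiseConstOn

namespace stepSpace

variable {a b : ℝ} {F : ℝ → ℝ}

theorem indicator_mem {α β : ℝ} (hα : a ≤ α) (hβ : β ≤ b) :
    (Ico α β).indicator (fun _ => 1) ∈ stepSpace a b :=
  Submodule.subset_span ⟨α, β, hα, hβ, rfl⟩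

theorem mono {a' b' : ℝ} (ha : a ≤ a') (hb : b' ≤ b) : stepSpace a' b' ≤ stepSpace a b :=
  Submodule.span_mono fun _ ⟨α, β, hα, hβ, h⟩ => ⟨α, β, ha.trans hα, hβ.trans hb, h⟩

theorem eq_zero_of_notMem (hF : F ∈ stepSpace a b) {x : ℝ} (hx : x ∉ Ico a b) : F x = 0 := by
  induction hF using Submodule.span_induction with
  | mem φ hφ =>
    obtain ⟨α, β, hα, hβ, rfl⟩ := hφ
    exact indicator_of_notMem (fun h => hx ⟨hα.trans h.1, h.2.trans_le hβ⟩) _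
  | zero => rfl
  | add _ _ _ _ h₁ h₂ => simp [h₁, h₂]
  | smul c _ _ h => simp [h]

theorem measurable (hF : F ∈ stepSpace a b) : Measurable F := by
  induction hF using Submodule.span_induction with
  | mem φ hφ =>
    obtain ⟨α, β, -, -, rfl⟩ := hφ
    exact measurable_const.indicator measurableSet_Ico
  | zero => exact measurable_const
  | add _ _ _ _ h₁ h₂ => exact h₁.add h₂
  | smul c _ _ h => exact h.const_smul c

theorem exists_isPiecewiseConstOn (hF : F ∈ stepSpace a b) :
    ∃ D, IsPiecewiseConstOn D F a b := by
  induction hF using Submodule.span_induction with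
  | mem φ hφ =>
    obtain ⟨α, β, -, -, rfl⟩ := hφ
    refine ⟨{α, β}, fun x _ y _ hxy hD => ?_⟩
    have hα := hD α (by simp)
    have hβ := hD β (by simp)
    have hmem : x ∈ Ico α β ↔ y ∈ Ico α β := by
      simp only [mem_Ioc, not_and, not_le] at hα hβ
      simp only [mem_Ico]
      constructor
      · exact fun h => ⟨h.1.trans hxy, not_le.1 fun hy => (hβ h.2).not_ge hy⟩
      · exact fun h => ⟨not_lt.1 fun hx => (hα hx).not_ge h.1, hxy.trans_lt h.2⟩
    by_cases hx : x ∈ Ico α β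
    · simp [indicator_of_mem hx, indicator_of_mem (hmem.1 hx)]
    · simp [indicator_of_notMem hx, indicator_of_notMem (mt hmem.2 hx)]
  | zero => exact ⟨∅, fun _ _ _ _ _ _ => rfl⟩
  | add _ _ _ _ h₁ h₂ =>
    obtain ⟨D₁, h₁⟩ := h₁
    obtain ⟨D₂, h₂⟩ := h₂
    refine ⟨D₁ ∪ D₂, fun x hx y hy hxy hD => ?_⟩
    simp only [Pi.add_apply,
      (h₁.mono Finset.subset_union_left) x hx y hy hxy hD,
      (h₂.mono Finset.subset_union_right) x hx y hy hxy hD]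
  | smul c _ _ h =>
    obtain ⟨D, h⟩ := h
    exact ⟨D, fun x hx y hy hxy hD => by simp [h x hx y hy hxy hD]⟩

end stepSpace

theorem isStepOn_iff_exists_mem_stepSpace {f : ℝ → ℝ} {a b : ℝ} :
    IsStepOn f a b ↔ ∃ F ∈ stepSpace a b, EqOn f F (Ico a b) := by
  constructor
  · rintro ⟨m, c, α, β, hαβ, hf⟩
    refine ⟨∑ i, c i • (Ico (α i) (β i)).indicator fun _ => 1,
      Submodule.sum_mem _ fun i _ =>
        Submodule.smul_mem _ _ (stepSpace.indicator_mem (hαβ i).1 (hαβ i).2),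
      fun x hx => ?_⟩
    simp [hf x hx]
  · rintro ⟨F, hF, hfF⟩
    obtain ⟨m, c, φ, rfl⟩ := Submodule.mem_span_set'.1 hF
    choose α β hα hβ hφ using fun i => (φ i).2
    exact ⟨m, c, α, β, fun i => ⟨hα i, hβ i⟩, fun x hx => by simp [hfF hx, hφ]⟩

theorem integrableOn_comp_of_forall_mem_Icc {ι α : Type*} [Fintype ι] [MeasurableSpace α]
    {μ : Measure α} {s : Set α} (hs : MeasurableSet s) (hμs : μ s ≠ ⊤) {h : ι → α → ℝ}
    (hh : ∀ k, Measurable (h k)) {L U : ι → ℝ} (hb : ∀ x ∈ s, ∀ k, h k x ∈ Icc (L k) (U k))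
    {G : (ι → ℝ) → ℝ} (hG : Continuous G) : IntegrableOn (fun x => G fun k => h k x) s μ := by
  obtain ⟨C, hC⟩ := (isCompact_Icc : IsCompact (Icc L U)).exists_bound_of_continuousOn
    hG.continuousOn
  refine Measure.integrableOn_of_bounded (M := C) hμs
    (hG.measurable.comp (measurable_pi_lambda _ hh)).aestronglyMeasurable ?_
  filter_upwards [ae_restrict_mem hs] with x hx
  exact hC _ ⟨fun k => (hb x hx k).1, fun k => (hb x hx k).2⟩

theorem setIntegral_Ico_eq_add_s9 {F : ℝ → ℝ} {a m b : ℝ} (ham : a ≤ m) (hmb : m ≤ b)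
    (hF : IntegrableOn F (Ico a b)) :
    ∫ x in Ico a b, F x = (∫ x in Ico a m, F x) + ∫ x in Ico m b, F x := by
  rw [← Ico_union_Ico_eq_Ico ham hmb] at hF ⊢
  exact setIntegral_union Ico_disjoint_Ico_same measurableSet_Ico
    (hF.mono_set subset_union_left) (hF.mono_set subset_union_right)

theorem ConvexOn.mul_map_le_setIntegral_Ico {Φ : ℝ → ℝ} (hΦ : ConvexOn ℝ univ Φ) {u v s : ℝ}
    (huv : u < v) {h : ℝ → ℝ} (hh : IntegrableOn h (Ico u v))
    (hΦh : IntegrableOn (Φ ∘ h) (Ico u v)) (hs : ∫ x in Ico u v, h x = (v - u) * s) :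
    (v - u) * Φ s ≤ ∫ x in Ico u v, Φ (h x) := by
  have hvu : 0 < v - u := sub_pos.2 huv
  have hJ := hΦ.map_set_average_le (hΦ.continuousOn isOpen_univ)
    isClosed_univ (by simp [huv]) (by simp) (by simp) hh hΦh
  rw [setAverage_eq, setAverage_eq, Real.volume_real_Ico_of_le huv.le, hs, smul_eq_mul,
    inv_mul_cancel_left₀ hvu.ne', smul_eq_mul] at hJ
  rwa [le_inv_mul_iff₀ hvu] at hJ

theorem prod_finset_fin_succ {M : Type*} [CommMonoid M] {n : ℕ} (S : Finset (Fin (n + 1)))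
    (h : Fin (n + 1) → M) :
    ∏ j ∈ S, h j = (if 0 ∈ S then h 0 else 1) * ∏ j ∈ {j : Fin n | j.succ ∈ S}, h j.succ := by
  rw [Finset.prod_filter, ← Fin.prod_univ_succ (fun j => if j ∈ S then h j else 1),
    Finset.prod_ite_mem, Finset.univ_inter]

theorem setIntegral_prod_fin_cons {n : ℕ} {g : Fin (n + 1) → ℝ → ℝ} {h : Fin n → ℝ → ℝ} {c : ℝ}
    (S : Finset (Fin (n + 1))) {s : Set ℝ} (hs : MeasurableSet s)
    (hg : ∀ x ∈ s, g 0 x = c ∧ ∀ j, g j.succ x = h j x) :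
    ∫ x in s, ∏ j ∈ S, g j x =
      (if 0 ∈ S then c else 1) * ∫ x in s, ∏ j ∈ {j : Fin n | j.succ ∈ S}, h j x := by
  rw [← integral_const_mul]
  refine setIntegral_congr_fun hs fun x hx => ?_
  simp only [prod_finset_fin_succ S, (hg x hx).1, (hg x hx).2]

theorem mem_Icc_inf_sup_of_eq_or_eq {x A B : ℝ} (h : x = A ∨ x = B) : x ∈ Icc (A ⊓ B) (A ⊔ B) :=
  h.elim (· ▸ left_mem_uIcc) (· ▸ right_mem_uIcc)

theorem exists_mem_Icc_mul_add_mul_eq {A B t : ℝ} (ht : t ∈ Icc A B) {u v : ℝ} (huv : u ≤ v) :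
    ∃ m ∈ Icc u v, (m - u) * B + (v - m) * A = (v - u) * t := by
  obtain ⟨p, q, hp, hq, hpq, hpqt⟩ : t ∈ segment ℝ A B := by
    rwa [segment_eq_Icc (ht.1.trans ht.2)]
  obtain rfl : p = 1 - q := by linarith
  have hvu : 0 ≤ v - u := sub_nonneg.2 huv
  refine ⟨(1 - q) * u + q * v, ⟨by nlinarith [mul_nonneg hq hvu], by nlinarith [mul_nonneg hp hvu]⟩,
    ?_⟩
  rw [← hpqt, smul_eq_mul, smul_eq_mul]
  ring

theorem exists_twoValued_setIntegral_prod_eq {n : ℕ} {A B t : Fin n → ℝ}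
    (ht : ∀ k, t k ∈ Icc (A k) (B k)) {u v : ℝ} (huv : u ≤ v) :
    ∃ g : Fin n → ℝ → ℝ, (∀ k, g k ∈ stepSpace u v) ∧
      (∀ k, ∀ x ∈ Ico u v, g k x = A k ∨ g k x = B k) ∧
      ∀ S : Finset (Fin n), ∫ x in Ico u v, ∏ j ∈ S, g j x = (v - u) * ∏ j ∈ S, t j := by
  induction n generalizing u v with
  | zero =>
    refine ⟨0, finZeroElim, finZeroElim, fun S => ?_⟩
    simp [Finset.eq_empty_of_isEmpty S, Real.volume_real_Ico_of_le huv]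
  | succ n ih =>
    obtain ⟨m, ⟨hum, hmv⟩, hm⟩ := exists_mem_Icc_mul_add_mul_eq (ht 0) huv
    obtain ⟨g₁, hg₁, hg₁AB, hg₁S⟩ := ih (fun k => ht k.succ) hum
    obtain ⟨g₂, hg₂, hg₂AB, hg₂S⟩ := ih (fun k => ht k.succ) hmv
    let g : Fin (n + 1) → ℝ → ℝ :=
      Fin.cons (B 0 • (Ico u m).indicator (fun _ => 1) + A 0 • (Ico m v).indicator (fun _ => 1))
        (g₁ + g₂)
    have hleft : ∀ x ∈ Ico u m, g 0 x = B 0 ∧ ∀ j, g j.succ x = g₁ j x := by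
      intro x hx
      have hx' : x ∉ Ico m v := fun h => h.1.not_gt hx.2
      simp [g, hx, hx', fun j => stepSpace.eq_zero_of_notMem (hg₂ j) hx']
    have hright : ∀ x ∈ Ico m v, g 0 x = A 0 ∧ ∀ j, g j.succ x = g₂ j x := by
      intro x hx
      have hx' : x ∉ Ico u m := fun h => h.2.not_ge hx.1
      simp [g, hx, hx', fun j => stepSpace.eq_zero_of_notMem (hg₁ j) hx']
    have hgAB : ∀ k, ∀ x ∈ Ico u v, g k x = A k ∨ g k x = B k := by
      intro k x hx
      rcases lt_or_ge x m with hxm | hxm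
      · have hl := hleft x ⟨hx.1, hxm⟩
        cases k using Fin.cases with
        | zero => exact Or.inr hl.1
        | succ j => rw [hl.2]; exact hg₁AB j x ⟨hx.1, hxm⟩
      · have hr := hright x ⟨hxm, hx.2⟩
        cases k using Fin.cases with
        | zero => exact Or.inl hr.1
        | succ j => rw [hr.2]; exact hg₂AB j x ⟨hxm, hx.2⟩
    have hmem : ∀ k, g k ∈ stepSpace u v := by
      intro k
      cases k using Fin.cases with
      | zero =>
        exact add_mem (Submodule.smul_mem _ _ (stepSpace.indicator_mem le_rfl hmv))
          (Submodule.smul_mem _ _ (stepSpace.indicator_mem hum le_rfl))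
      | succ j =>
        exact add_mem (stepSpace.mono le_rfl hmv (hg₁ j)) (stepSpace.mono hum le_rfl (hg₂ j))
    refine ⟨g, hmem, hgAB, fun S => ?_⟩
    have hint : IntegrableOn (fun x => ∏ j ∈ S, g j x) (Ico u v) :=
      integrableOn_comp_of_forall_mem_Icc measurableSet_Ico (by simp)
        (fun k => stepSpace.measurable (hmem k))
        (fun x hx k => mem_Icc_inf_sup_of_eq_or_eq (hgAB k x hx)) (by fun_prop)
    rw [setIntegral_Ico_eq_add_s9 hum hmv hint, setIntegral_prod_fin_cons S measurableSet_Ico hleft,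
      setIntegral_prod_fin_cons S measurableSet_Ico hright, hg₁S, hg₂S, prod_finset_fin_succ S t]
    split_ifs
    · linear_combination (∏ j ∈ {j : Fin n | j.succ ∈ S}, t j.succ) * hm
    · ring

structure IsTwoValuedReplacement {n : ℕ} (A B : Fin n → ℝ) (f g : Fin n → ℝ → ℝ) (a b : ℝ) :
    Prop where
  mem_stepSpace : ∀ k, g k ∈ stepSpace a b
  eq_or_eq : ∀ k, ∀ x ∈ Ico a b, g k x = A k ∨ g k x = B k
  setIntegral_prod : ∀ S : Finset (Fin n),
    ∫ x in Ico a b, ∏ j ∈ S, g j x = ∫ x in Ico a b, ∏ j ∈ S, f j x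
  setIntegral_convexOn_le : ∀ Φ : ℝ → ℝ, ConvexOn ℝ univ Φ → ∀ c : Fin n → ℝ,
    ∫ x in Ico a b, Φ (∑ k, c k * f k x) ≤ ∫ x in Ico a b, Φ (∑ k, c k * g k x)

theorem IsTwoValuedReplacement.congr {n : ℕ} {A B : Fin n → ℝ} {f f' g : Fin n → ℝ → ℝ}
    {a b : ℝ} (hg : IsTwoValuedReplacement A B f g a b)
    (hf : ∀ k, EqOn (f k) (f' k) (Ico a b)) : IsTwoValuedReplacement A B f' g a b where
  mem_stepSpace := hg.mem_stepSpace
  eq_or_eq := hg.eq_or_eq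
  setIntegral_prod S := by
    rw [hg.setIntegral_prod S]
    exact setIntegral_congr_fun measurableSet_Ico fun x hx => by simp only [hf _ hx]
  setIntegral_convexOn_le Φ hΦ c := by
    refine le_of_eq_of_le (setIntegral_congr_fun measurableSet_Ico fun x hx => ?_)
      (hg.setIntegral_convexOn_le Φ hΦ c)
    simp only [hf _ hx]

theorem exists_isTwoValuedReplacement_of_eqOn_const {n : ℕ} {A B t : Fin n → ℝ}
    (ht : ∀ k, t k ∈ Icc (A k) (B k)) {f : Fin n → ℝ → ℝ} {u v : ℝ} (huv : u < v)
    (hf : ∀ k, ∀ x ∈ Ico u v, f k x = t k) : ∃ g, IsTwoValuedReplacement A B f g u v := by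
  obtain ⟨g, hg, hgAB, hgS⟩ := exists_twoValued_setIntegral_prod_eq ht huv.le
  have hfG : ∀ G : (Fin n → ℝ) → ℝ, ∫ x in Ico u v, G (fun k => f k x) = (v - u) * G t := by
    intro G
    rw [setIntegral_congr_fun (g := fun _ => G t) measurableSet_Ico fun x hx => by
      simp only [funext fun k => hf k x hx], setIntegral_const, Real.volume_real_Ico_of_le huv.le,
      smul_eq_mul]
  refine ⟨g, hg, hgAB, fun S => (hgS S).trans (hfG fun w => ∏ j ∈ S, w j).symm,
    fun Φ hΦ c => ?_⟩
  have hΦc : Continuous Φ := continuousOn_univ.1 (hΦ.continuousOn isOpen_univ)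
  have hgm : ∀ k, Measurable (g k) := fun k => stepSpace.measurable (hg k)
  have hint : ∀ {G : (Fin n → ℝ) → ℝ}, Continuous G →
      IntegrableOn (fun x => G fun k => g k x) (Ico u v) := fun hG =>
    integrableOn_comp_of_forall_mem_Icc measurableSet_Ico (by simp) hgm
      (fun x hx k => mem_Icc_inf_sup_of_eq_or_eq (hgAB k x hx)) hG
  have hmean : ∫ x in Ico u v, ∑ k, c k * g k x = (v - u) * ∑ k, c k * t k := by
    rw [integral_finsetSum _ fun k _ => hint (G := fun w => c k * w k) (by fun_prop),
      Finset.mul_sum]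
    refine Finset.sum_congr rfl fun k _ => ?_
    simpa [integral_const_mul, mul_left_comm] using congrArg (c k * ·) (hgS {k})
  calc ∫ x in Ico u v, Φ (∑ k, c k * f k x)
      = (v - u) * Φ (∑ k, c k * t k) := hfG fun w => Φ (∑ k, c k * w k)
    _ ≤ ∫ x in Ico u v, Φ (∑ k, c k * g k x) :=
        hΦ.mul_map_le_setIntegral_Ico huv (hint (G := fun w => ∑ k, c k * w k) (by fun_prop))
          (hint (G := fun w => Φ (∑ k, c k * w k)) (by fun_prop)) hmean

theorem IsTwoValuedReplacement.add {n : ℕ} {A B : Fin n → ℝ} {f g₁ g₂ : Fin n → ℝ → ℝ}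
    {a m b : ℝ} (hf : ∀ k, Measurable (f k)) (hfAB : ∀ k, ∀ x ∈ Ico a b, f k x ∈ Icc (A k) (B k))
    (ham : a ≤ m) (hmb : m ≤ b) (h₁ : IsTwoValuedReplacement A B f g₁ a m)
    (h₂ : IsTwoValuedReplacement A B f g₂ m b) :
    IsTwoValuedReplacement A B f (g₁ + g₂) a b := by
  have hleft : ∀ x ∈ Ico a m, ∀ k, (g₁ + g₂) k x = g₁ k x := fun x hx k => by
    simp [stepSpace.eq_zero_of_notMem (h₂.mem_stepSpace k) fun h => h.1.not_gt hx.2]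
  have hright : ∀ x ∈ Ico m b, ∀ k, (g₁ + g₂) k x = g₂ k x := fun x hx k => by
    simp [stepSpace.eq_zero_of_notMem (h₁.mem_stepSpace k) fun h => h.2.not_ge hx.1]
  have hAB : ∀ k, ∀ x ∈ Ico a b, (g₁ + g₂) k x = A k ∨ (g₁ + g₂) k x = B k := by
    intro k x hx
    rcases lt_or_ge x m with hxm | hxm
    · rw [hleft x ⟨hx.1, hxm⟩]; exact h₁.eq_or_eq k x ⟨hx.1, hxm⟩
    · rw [hright x ⟨hxm, hx.2⟩]; exact h₂.eq_or_eq k x ⟨hxm, hx.2⟩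
  have hmem : ∀ k, (g₁ + g₂) k ∈ stepSpace a b := fun k =>
    add_mem (stepSpace.mono le_rfl hmb (h₁.mem_stepSpace k))
      (stepSpace.mono ham le_rfl (h₂.mem_stepSpace k))
  have hsplit_f : ∀ {G : (Fin n → ℝ) → ℝ}, Continuous G →
      ∫ x in Ico a b, G (fun k => f k x) =
        (∫ x in Ico a m, G fun k => f k x) + ∫ x in Ico m b, G fun k => f k x := fun hG =>
    setIntegral_Ico_eq_add_s9 ham hmb
      (integrableOn_comp_of_forall_mem_Icc measurableSet_Ico (by simp) hf
        (fun x hx k => hfAB k x hx) hG)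
  have hsplit_g : ∀ {G : (Fin n → ℝ) → ℝ}, Continuous G →
      ∫ x in Ico a b, G (fun k => (g₁ + g₂) k x) =
        (∫ x in Ico a m, G fun k => g₁ k x) + ∫ x in Ico m b, G fun k => g₂ k x := by
    intro G hG
    rw [setIntegral_Ico_eq_add_s9 ham hmb (integrableOn_comp_of_forall_mem_Icc measurableSet_Ico
        (by simp) (fun k => stepSpace.measurable (hmem k))
        (fun x hx k => mem_Icc_inf_sup_of_eq_or_eq (hAB k x hx)) hG)]
    congr 1
    · exact setIntegral_congr_fun measurableSet_Ico fun x hx => by simp only [hleft x hx]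
    · exact setIntegral_congr_fun measurableSet_Ico fun x hx => by simp only [hright x hx]
  refine ⟨hmem, hAB, fun S => ?_, fun Φ hΦ c => ?_⟩
  · have hg := hsplit_g (G := fun w => ∏ j ∈ S, w j) (by fun_prop)
    have hf := hsplit_f (G := fun w => ∏ j ∈ S, w j) (by fun_prop)
    beta_reduce at hg hf
    rw [hg, hf, h₁.setIntegral_prod, h₂.setIntegral_prod]
  · have hΦc : Continuous Φ := continuousOn_univ.1 (hΦ.continuousOn isOpen_univ)
    have hg := hsplit_g (G := fun w => Φ (∑ k, c k * w k)) (by fun_prop)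
    have hf := hsplit_f (G := fun w => Φ (∑ k, c k * w k)) (by fun_prop)
    beta_reduce at hg hf
    rw [hg, hf]
    exact add_le_add (h₁.setIntegral_convexOn_le Φ hΦ c) (h₂.setIntegral_convexOn_le Φ hΦ c)

theorem exists_isTwoValuedReplacement_of_isPiecewiseConstOn {n : ℕ} {A B : Fin n → ℝ}
    {f : Fin n → ℝ → ℝ} (hf : ∀ k, Measurable (f k)) (D : Finset ℝ) {a b : ℝ} (hab : a < b)
    (hD : ∀ k, IsPiecewiseConstOn D (f k) a b)
    (hfAB : ∀ k, ∀ x ∈ Ico a b, f k x ∈ Icc (A k) (B k)) :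
    ∃ g, IsTwoValuedReplacement A B f g a b := by
  induction D using Finset.induction_on generalizing a b with
  | empty =>
    exact exists_isTwoValuedReplacement_of_eqOn_const (fun k => hfAB k a ⟨le_rfl, hab⟩) hab
      fun k x hx => (hD k).eq_left_of_empty hx
  | insert d D _ ih =>
    by_cases hd : d ∈ Ioo a b
    · obtain ⟨g₁, h₁⟩ := ih hd.1 (fun k => (hD k).of_insert le_rfl hd.2.le (by simp))
        fun k x hx => hfAB k x ⟨hx.1, hx.2.trans hd.2⟩
      obtain ⟨g₂, h₂⟩ := ih hd.2 (fun k => (hD k).of_insert hd.1.le le_rfl (by simp))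
        fun k x hx => hfAB k x ⟨hd.1.le.trans hx.1, hx.2⟩
      exact ⟨g₁ + g₂, h₁.add hf hfAB hd.1.le hd.2.le h₂⟩
    · exact ih hab (fun k => (hD k).of_insert le_rfl le_rfl hd) hfAB

theorem stmt_9_general (n : ℕ) (a b : ℝ) (hab : a < b)
    (A B : Fin n → ℝ)
    (f : Fin n → ℝ → ℝ) (hf : ∀ k, IsStepOn (f k) a b)
    (hfb : ∀ k, ∀ x ∈ Set.Ico a b, A k ≤ f k x ∧ f k x ≤ B k) :
    ∃ g : Fin n → ℝ → ℝ,
      (∀ k, IsStepOn (g k) a b) ∧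
      (∀ k, ∀ x ∈ Set.Ico a b, g k x = A k ∨ g k x = B k) ∧
      (∀ S : Finset (Fin n), S.Nonempty →
        (∫ x in Set.Ico a b, ∏ j ∈ S, g j x) = ∫ x in Set.Ico a b, ∏ j ∈ S, f j x) ∧
      ∀ (Φ : ℝ → ℝ), ConvexOn ℝ Set.univ Φ → (∀ x, 0 ≤ Φ x) →
        ∀ c : Fin n → ℝ,
          (∫ x in Set.Ico a b, Φ (∑ k, c k * f k x)) ≤
            ∫ x in Set.Ico a b, Φ (∑ k, c k * g k x) := by
  choose F hF hfF using fun k => isStepOn_iff_exists_mem_stepSpace.1 (hf k)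
  choose D hD using fun k => stepSpace.exists_isPiecewiseConstOn (hF k)
  obtain ⟨g, hg⟩ := exists_isTwoValuedReplacement_of_isPiecewiseConstOn
    (fun k => stepSpace.measurable (hF k)) (Finset.univ.biUnion D) hab
    (fun k => (hD k).mono (Finset.subset_biUnion_of_mem D (Finset.mem_univ k)))
    (fun k x hx => hfF k hx ▸ hfb k x hx)
  have hgf := hg.congr fun k => (hfF k).symm
  exact ⟨g, fun k => isStepOn_iff_exists_mem_stepSpace.2 ⟨g k, hgf.mem_stepSpace k, eqOn_refl _ _⟩,
    hgf.eq_or_eq, fun S _ => hgf.setIntegral_prod S,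
    fun Φ hΦ _ c => hgf.setIntegral_convexOn_le Φ hΦ c⟩

theorem stmt_9 (n : ℕ) (a b : ℝ) (hab : a < b)
    (A B : Fin n → ℝ) (hAB : ∀ k, A k < B k)
    (f : Fin n → ℝ → ℝ) (hf : ∀ k, IsStepOn (f k) a b)
    (hfb : ∀ k, ∀ x ∈ Set.Ico a b, A k ≤ f k x ∧ f k x ≤ B k) :
    ∃ g : Fin n → ℝ → ℝ,
      (∀ k, IsStepOn (g k) a b) ∧
      (∀ k, ∀ x ∈ Set.Ico a b, g k x = A k ∨ g k x = B k) ∧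
      (∀ S : Finset (Fin n), S.Nonempty →
        (∫ x in Set.Ico a b, ∏ j ∈ S, g j x) = ∫ x in Set.Ico a b, ∏ j ∈ S, f j x) ∧
      ∀ (Φ : ℝ → ℝ), ConvexOn ℝ Set.univ Φ → (∀ x, 0 ≤ Φ x) →
        ∀ c : Fin n → ℝ,
          (∫ x in Set.Ico a b, Φ (∑ k, c k * f k x)) ≤
            ∫ x in Set.Ico a b, Φ (∑ k, c k * g k x) :=
  stmt_9_general n a b hab A B f hf hfb
end

section
/- Let l ≤ n be a positive integer and let g_1,…,g_n be random variables such that each g_k takes exactly two distinct nonzero values, each with positive probability, and such that the system g_1,…,g_n is 𝔐_l-multiplicative. Then g_1,…,g_n are 𝔐_l-independent, i.e., for every subset S of {1,…,n} with 1 ≤ |S| ≤ l, the random variables {g_j : j ∈ S} are mutually independent. -/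
/-!
For a variable taking the two values `a ≠ b`, the indicator of `{g = a}` is the affine function
`(g - b) / (a - b)` of `g`. Hence the indicator of `⋂ i ∈ T, {gᵢ = aᵢ}` is a product of affine
functions of the `gᵢ`; expanding it, multiplicativity kills every nonconstant monomial, so its
expectation is `∏ i ∈ T, -bᵢ / (aᵢ - bᵢ)`, and the case `T = {i}` identifies each factor with
`P {gᵢ = aᵢ}`. The events `{gᵢ = aᵢ}` are therefore independent, and each `gᵢ` is a function of
the indicator of its event.
-/

open MeasureTheory ProbabilityTheory Finset

section TwoValued

variable {Ω ι : Type*} [MeasurableSpace Ω] {P : Measure Ω} {g : ι → Ω → ℝ} {a b : ι → ℝ}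

lemma integrable_prod_of_forall_eq_or_eq [IsFiniteMeasure P] (hgm : ∀ i, Measurable (g i))
    (hval : ∀ i ω, g i ω = a i ∨ g i ω = b i) (s : Finset ι) :
    Integrable (fun ω => ∏ i ∈ s, g i ω) P := by
  refine (integrable_const (∏ i ∈ s, max |a i| |b i|)).mono'
    (Finset.measurable_prod s fun i _ => hgm i).aestronglyMeasurable (ae_of_all _ fun ω => ?_)
  rw [Real.norm_eq_abs, abs_prod]
  refine prod_le_prod (fun i _ => abs_nonneg _) fun i _ => ?_
  rcases hval i ω with h | h <;> simp [h]

lemma integral_prod_sub_const [IsProbabilityMeasure P]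
    (hint : ∀ s : Finset ι, Integrable (fun ω => ∏ i ∈ s, g i ω) P)
    (hmult : ∀ s : Finset ι, s.Nonempty → ∫ ω, ∏ i ∈ s, g i ω ∂P = 0) (c : ι → ℝ)
    (T : Finset ι) : ∫ ω, ∏ i ∈ T, (g i ω - c i) ∂P = ∏ i ∈ T, -c i := by
  classical
  simp_rw [sub_eq_add_neg, prod_add]
  rw [integral_finsetSum _ fun U _ => (hint U).mul_const _,
    sum_eq_single_of_mem ∅ (empty_mem_powerset T)]
  · simp
  · intro U _ hU
    rw [integral_mul_const, hmult U (nonempty_iff_ne_empty.2 hU), zero_mul]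

lemma ite_eq_sub_div_sub {x a b : ℝ} (hab : a ≠ b) (hx : x = a ∨ x = b) :
    (if x = a then 1 else 0 : ℝ) = (x - b) / (a - b) := by
  rcases hx with rfl | rfl
  · rw [if_pos rfl, div_self (sub_ne_zero.2 hab)]
  · rw [if_neg hab.symm, sub_self, zero_div]

variable [IsProbabilityMeasure P] (hgm : ∀ i, Measurable (g i)) (hab : ∀ i, a i ≠ b i)
  (hval : ∀ i ω, g i ω = a i ∨ g i ω = b i)
  (hmult : ∀ s : Finset ι, s.Nonempty → ∫ ω, ∏ i ∈ s, g i ω ∂P = 0)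
include hgm hab hval hmult

lemma measureReal_biInter_setOf_eq (T : Finset ι) :
    P.real (⋂ i ∈ T, {ω | g i ω = a i}) = ∏ i ∈ T, -b i / (a i - b i) := by
  classical
  have hmeas : MeasurableSet (⋂ i ∈ T, {ω | g i ω = a i}) :=
    .biInter T.countable_toSet fun i _ => measurableSet_eq_fun (hgm i) measurable_const
  have hind : ∀ ω, (⋂ i ∈ T, {ω | g i ω = a i}).indicator 1 ω
      = ∏ i ∈ T, (g i ω - b i) / (a i - b i) := fun ω => by
    rw [← prod_congr rfl fun i _ => ite_eq_sub_div_sub (hab i) (hval i ω), prod_boole]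
    simp [Set.indicator_apply]
  rw [← integral_indicator_one hmeas, integral_congr_ae (ae_of_all _ hind)]
  simp_rw [prod_div_distrib]
  rw [integral_div, integral_prod_sub_const (integrable_prod_of_forall_eq_or_eq hgm hval) hmult]

theorem iIndepSet_setOf_eq : iIndepSet (fun i => {ω | g i ω = a i}) P := by
  rw [iIndepSet_iff_meas_biInter fun i => measurableSet_eq_fun (hgm i) measurable_const]
  intro T
  have hsingle : ∀ i, P.real {ω | g i ω = a i} = -b i / (a i - b i) := fun i => by
    simpa using measureReal_biInter_setOf_eq hgm hab hval hmult {i}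
  rw [← ENNReal.toReal_eq_toReal_iff' (measure_ne_top _ _)
    (ENNReal.prod_ne_top fun i _ => measure_ne_top _ _), ENNReal.toReal_prod]
  simp_rw [← measureReal_def, hsingle]
  exact measureReal_biInter_setOf_eq hgm hab hval hmult T

theorem iIndepFun_of_integral_prod_eq_zero : iIndepFun g P := by
  refine (((iIndepSet_setOf_eq hgm hab hval hmult).iIndepFun_indicator (β := ℝ)).comp
    (fun i x => b i + (a i - b i) * x) fun i => by fun_prop).congr fun i => ae_of_all _ fun ω => ?_
  rcases hval i ω with h | h <;> simp [h, (hab i).symm]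

end TwoValued

theorem stmt_10_general {Ω : Type*} [MeasurableSpace Ω] (P : Measure Ω) [IsProbabilityMeasure P]
    (n l : ℕ)
    (g : Fin n → Ω → ℝ) (hgm : ∀ k, Measurable (g k))
    (A B : Fin n → ℝ) (hAB : ∀ k, A k ≠ B k)
    (hval : ∀ k, ∀ ω, g k ω = A k ∨ g k ω = B k)
    (hmult : ∀ S : Finset (Fin n), S.Nonempty → S.card ≤ l →
      ∫ ω, ∏ j ∈ S, g j ω ∂P = 0) :
    ∀ S : Finset (Fin n), S.Nonempty → S.card ≤ l →
      iIndepFun (fun j : S => g j) P := by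
  intro S _ hS
  refine iIndepFun_of_integral_prod_eq_zero (a := fun j : S => A j) (b := fun j : S => B j)
    (fun j => hgm j) (fun j => hAB j) (fun j => hval j) fun U hU => ?_
  simpa using hmult (U.map (.subtype _)) hU.map
    ((card_map _).trans_le ((card_le_univ U).trans (by simpa using hS)))

theorem stmt_10 {Ω : Type*} [MeasurableSpace Ω] (P : Measure Ω) [IsProbabilityMeasure P]
    (n l : ℕ) (hl : 1 ≤ l) (hln : l ≤ n)
    (g : Fin n → Ω → ℝ) (hgm : ∀ k, Measurable (g k))
    (A B : Fin n → ℝ) (hAB : ∀ k, A k ≠ B k) (hA0 : ∀ k, A k ≠ 0) (hB0 : ∀ k, B k ≠ 0)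
    (hval : ∀ k, ∀ ω, g k ω = A k ∨ g k ω = B k)
    (hposA : ∀ k, 0 < P {ω | g k ω = A k}) (hposB : ∀ k, 0 < P {ω | g k ω = B k})
    (hmult : ∀ S : Finset (Fin n), S.Nonempty → S.card ≤ l →
      ∫ ω, ∏ j ∈ S, g j ω ∂P = 0) :
    ∀ S : Finset (Fin n), S.Nonempty → S.card ≤ l →
      iIndepFun (fun j : S => g j) P :=
  stmt_10_general P n l g hgm A B hAB hval hmult
end

section
/- Every quasi-multiplicative sequence of random variables is sub-Gaussian: if (φ_k)_{k≥1} is a sequence of random variables with ‖φ_k‖_∞ ≤ 1 whose multiplicative error ∑_S |E[∏_{j∈S} φ_j]| over all finite nonempty subsets S of the positive integers is finite, then there exist constants c₁, c₂ > 0 such that E[exp(c₁ · (∑_{k=1}^n a_k φ_k)² / ∑_{k=1}^n a_k²)] ≤ c₂ for every n and all real coefficients a_1,…,a_n not all zero. -/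
/-!
For `|x| ≤ 1`, convexity of `exp` gives `exp (t x) ≤ sinh t · x + cosh t`. Multiplying these bounds
over `k` and expanding the product over subsets `T`, the moment generating function of
`X = ∑ aₖ φₖ` at `l` is at most `∏ cosh (l aₖ) · ∑_T |E ∏_{k ∈ T} φₖ| ≤ (1 + μ) exp (l² ∑ aₖ² / 2)`,
since `|sinh| ≤ cosh`. Such a Gaussian bound on the moment generating function of `Y = X / ‖a‖`
bounds `E exp (Y² / 8)`: with `m = ⌊|Y|⌋`, `exp (Y² / 8)` is dominated by one term of the series
`∑ₘ exp ((m + 1)² / 8 - m²) (exp (m Y) + exp (-m Y))`, whose expectations decay geometrically.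
-/

open MeasureTheory ProbabilityTheory Real

lemma exp_mul_le_sinh_mul_add_cosh (t : ℝ) {x : ℝ} (hx : |x| ≤ 1) :
    exp (t * x) ≤ sinh t * x + cosh t := by
  obtain ⟨hx₁, hx₂⟩ := abs_le.1 hx
  have h := convexOn_exp.2 (Set.mem_univ t) (Set.mem_univ (-t))
    (by linarith : 0 ≤ (1 + x) / 2) (by linarith : 0 ≤ (1 - x) / 2) (by ring)
  simp only [smul_eq_mul] at h
  rw [sinh_eq, cosh_eq]
  calc exp (t * x) = exp ((1 + x) / 2 * t + (1 - x) / 2 * -t) := by ring_nf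
    _ ≤ _ := h
    _ = _ := by ring

lemma abs_sinh_le_cosh (x : ℝ) : |sinh x| ≤ cosh x := by
  rw [abs_sinh, ← cosh_abs]
  exact (sinh_lt_cosh _).le

lemma exists_exp_sq_div_eight_le (y : ℝ) :
    ∃ m : ℕ, exp (y ^ 2 / 8) ≤
      exp (((m : ℝ) + 1) ^ 2 / 8 - m ^ 2) * (exp (m * y) + exp (-m * y)) := by
  refine ⟨⌊|y|⌋₊, ?_⟩
  set m : ℕ := ⌊|y|⌋₊
  have hlt : |y| < m + 1 := Nat.lt_floor_add_one _
  have hle : (m : ℝ) ≤ |y| := Nat.floor_le (abs_nonneg y)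
  have h_abs : exp (m * |y|) ≤ exp (m * y) + exp (-m * y) := by
    rcases abs_cases y with ⟨h, _⟩ | ⟨h, _⟩ <;> rw [h]
    · linarith [exp_pos (-m * y)]
    · rw [mul_neg, ← neg_mul]; linarith [exp_pos (m * y)]
  calc exp (y ^ 2 / 8) ≤ exp ((((m : ℝ) + 1) ^ 2 / 8 - m ^ 2) + m * |y|) := by
        gcongr
        nlinarith [sq_abs y, abs_nonneg y]
    _ ≤ exp (((m : ℝ) + 1) ^ 2 / 8 - m ^ 2) * (exp (m * y) + exp (-m * y)) := by
        rw [exp_add]; gcongr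

lemma exp_sq_div_eight_mul_exp_le (m : ℕ) :
    exp (((m : ℝ) + 1) ^ 2 / 8 - m ^ 2) * exp (m ^ 2 / 2) ≤ exp (1 / 8) * exp (-(1 / 8)) ^ m := by
  rw [← exp_add, ← exp_nat_mul, ← exp_add, exp_le_exp]
  rcases Nat.eq_zero_or_pos m with rfl | hm
  · norm_num
  · have : (1 : ℝ) ≤ m := by exact_mod_cast hm
    nlinarith

section SubGaussian

variable {Ω : Type*} [MeasurableSpace Ω] {μ : Measure Ω}

lemma lintegral_exp_sq_div_eight_le_of_mgf_le {Y : Ω → ℝ} (hY : Measurable Y) {C : ℝ}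
    (hC : 0 ≤ C) (hint : ∀ t, Integrable (fun ω => exp (t * Y ω)) μ)
    (hmgf : ∀ t, mgf Y μ t ≤ C * exp (t ^ 2 / 2)) :
    ∫⁻ ω, ENNReal.ofReal (exp (Y ω ^ 2 / 8)) ∂μ ≤
      ENNReal.ofReal (2 * C * exp (1 / 8) / (1 - exp (-(1 / 8)))) := by
  set w : ℕ → ℝ := fun m => exp (((m : ℝ) + 1) ^ 2 / 8 - m ^ 2)
  set r : ℝ := exp (-(1 / 8))
  have hr₀ : 0 ≤ r := exp_nonneg _
  have hr₁ : r < 1 := exp_lt_one_iff.2 (by norm_num)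
  have h_term (m : ℕ) : w m * (mgf Y μ m + mgf Y μ (-m)) ≤ 2 * C * exp (1 / 8) * r ^ m := by
    calc w m * (mgf Y μ m + mgf Y μ (-m)) ≤ w m * (2 * C * exp ((m : ℝ) ^ 2 / 2)) := by
          gcongr
          have h₁ := hmgf m
          have h₂ := hmgf (-m)
          rw [neg_sq] at h₂
          linarith
      _ = 2 * C * (w m * exp ((m : ℝ) ^ 2 / 2)) := by ring
      _ ≤ 2 * C * (exp (1 / 8) * r ^ m) :=
          mul_le_mul_of_nonneg_left (exp_sq_div_eight_mul_exp_le m) (by linarith)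
      _ = 2 * C * exp (1 / 8) * r ^ m := by ring
  calc ∫⁻ ω, ENNReal.ofReal (exp (Y ω ^ 2 / 8)) ∂μ
      ≤ ∫⁻ ω, ∑' m : ℕ, ENNReal.ofReal (w m * (exp (m * Y ω) + exp (-m * Y ω))) ∂μ := by
        refine lintegral_mono fun ω => ?_
        obtain ⟨m, hm⟩ := exists_exp_sq_div_eight_le (Y ω)
        exact (ENNReal.ofReal_le_ofReal hm).trans (ENNReal.le_tsum m)
    _ = ∑' m : ℕ, ENNReal.ofReal (w m * (mgf Y μ m + mgf Y μ (-m))) := by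
        rw [lintegral_tsum fun m => by fun_prop]
        congr 1 with m
        rw [mgf, mgf, ← integral_add (hint _) (hint _), ← integral_const_mul]
        exact (ofReal_integral_eq_lintegral_ofReal (((hint _).add (hint _)).const_mul (w m))
          (.of_forall fun ω => by dsimp; positivity)).symm
    _ ≤ ∑' m : ℕ, ENNReal.ofReal (2 * C * exp (1 / 8) * r ^ m) :=
        ENNReal.tsum_le_tsum fun m => ENNReal.ofReal_le_ofReal (h_term m)
    _ = ENNReal.ofReal (2 * C * exp (1 / 8) / (1 - r)) := by
        rw [← ENNReal.ofReal_tsum_of_nonneg (fun m => by positivity)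
          ((summable_geometric_of_lt_one hr₀ hr₁).mul_left _), tsum_mul_left,
          tsum_geometric_of_lt_one hr₀ hr₁, div_eq_mul_inv (2 * C * exp (1 / 8))]

lemma integral_exp_sq_div_le_of_mgf_le {X : Ω → ℝ} (hX : Measurable X) {C v : ℝ}
    (hC : 0 ≤ C) (hv : 0 < v) (hint : ∀ t, Integrable (fun ω => exp (t * X ω)) μ)
    (hmgf : ∀ t, mgf X μ t ≤ C * exp (v * t ^ 2 / 2)) :
    ∫ ω, exp (X ω ^ 2 / (8 * v)) ∂μ ≤ 2 * C * exp (1 / 8) / (1 - exp (-(1 / 8))) := by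
  have hsqrt : √v ^ 2 = v := sq_sqrt hv.le
  have h_std := lintegral_exp_sq_div_eight_le_of_mgf_le (μ := μ) (hX.const_mul (√v)⁻¹) hC
    (fun t => by simpa only [mul_assoc] using hint (t * (√v)⁻¹))
    (fun t => by
      rw [mgf_const_mul]
      convert hmgf ((√v)⁻¹ * t) using 4
      field_simp
      rw [hsqrt])
  have h_sq (ω : Ω) : ((√v)⁻¹ * X ω) ^ 2 / 8 = X ω ^ 2 / (8 * v) := by
    rw [mul_pow, inv_pow, hsqrt]
    ring
  simp only [h_sq] at h_std
  rw [integral_eq_lintegral_of_nonneg_ae (.of_forall fun ω => by positivity) (by fun_prop)]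
  have hr : exp (-(1 / 8)) < 1 := exp_lt_one_iff.2 (by norm_num)
  exact ENNReal.toReal_le_of_le_ofReal (div_nonneg (by positivity) (by linarith)) h_std

end SubGaussian

lemma prod_mul_add_eq_sum {ι R : Type*} [Fintype ι] [DecidableEq ι] [CommRing R]
    (s c x : ι → R) :
    ∏ i, (s i * x i + c i) = ∑ t : Finset ι, ((∏ i ∈ t, s i) * ∏ i ∈ tᶜ, c i) * ∏ i ∈ t, x i := by
  rw [Fintype.prod_add]
  refine Finset.sum_congr rfl fun t _ => ?_
  rw [Finset.prod_mul_distrib]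
  ring

lemma abs_prod_mul_prod_compl_le {ι : Type*} [Fintype ι] [DecidableEq ι] {s c : ι → ℝ}
    (hsc : ∀ i, |s i| ≤ c i) (t : Finset ι) :
    |(∏ i ∈ t, s i) * ∏ i ∈ tᶜ, c i| ≤ ∏ i, c i := by
  have hc (i : ι) : 0 ≤ c i := (abs_nonneg _).trans (hsc i)
  rw [← Finset.prod_mul_prod_compl t c, abs_mul, Finset.abs_prod,
    abs_of_nonneg (Finset.prod_nonneg fun i _ => hc i)]
  gcongr with i
  · exact Finset.prod_nonneg fun i _ => hc i
  · exact hsc i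

section Products

variable {Ω ι : Type*} [MeasurableSpace Ω] {μ : Measure Ω} {f : ι → Ω → ℝ}

lemma ae_abs_sum_mul_le [Fintype ι] (hfb : ∀ᵐ ω ∂μ, ∀ i, |f i ω| ≤ 1) (a : ι → ℝ) :
    ∀ᵐ ω ∂μ, |∑ i, a i * f i ω| ≤ ∑ i, |a i| := by
  filter_upwards [hfb] with ω hω
  refine (Finset.abs_sum_le_sum_abs _ _).trans (Finset.sum_le_sum fun i _ => ?_)
  rw [abs_mul]
  exact mul_le_of_le_one_right (abs_nonneg _) (hω i)

variable [IsFiniteMeasure μ]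

lemma integrable_prod_of_abs_le_one (hf : ∀ i, Measurable (f i))
    (hfb : ∀ᵐ ω ∂μ, ∀ i, |f i ω| ≤ 1) (t : Finset ι) :
    Integrable (fun ω => ∏ i ∈ t, f i ω) μ := by
  refine .of_bound (by fun_prop) 1 ?_
  filter_upwards [hfb] with ω hω
  rw [norm_eq_abs, Finset.abs_prod]
  exact Finset.prod_le_one (fun i _ => abs_nonneg _) fun i _ => hω i

variable [Fintype ι]

lemma integrable_prod_mul_add (hf : ∀ i, Measurable (f i))
    (hfb : ∀ᵐ ω ∂μ, ∀ i, |f i ω| ≤ 1) (s c : ι → ℝ) :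
    Integrable (fun ω => ∏ i, (s i * f i ω + c i)) μ := by
  classical
  simp only [prod_mul_add_eq_sum]
  exact integrable_finsetSum _ fun t _ =>
    (integrable_prod_of_abs_le_one hf hfb t).const_mul _

lemma integral_prod_mul_add_le_s11 (hf : ∀ i, Measurable (f i))
    (hfb : ∀ᵐ ω ∂μ, ∀ i, |f i ω| ≤ 1) {s c : ι → ℝ} (hsc : ∀ i, |s i| ≤ c i) :
    ∫ ω, ∏ i, (s i * f i ω + c i) ∂μ ≤
      (∏ i, c i) * ∑ t : Finset ι, |∫ ω, ∏ i ∈ t, f i ω ∂μ| := by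
  classical
  simp only [prod_mul_add_eq_sum]
  rw [integral_finsetSum _ fun t _ => (integrable_prod_of_abs_le_one hf hfb t).const_mul _,
    Finset.mul_sum]
  gcongr with t
  rw [integral_const_mul]
  calc _ ≤ |(∏ i ∈ t, s i) * ∏ i ∈ tᶜ, c i| * |∫ ω, ∏ i ∈ t, f i ω ∂μ| :=
        (le_abs_self _).trans (abs_mul _ _).le
    _ ≤ (∏ i, c i) * |∫ ω, ∏ i ∈ t, f i ω ∂μ| := by
        gcongr
        exact abs_prod_mul_prod_compl_le hsc t

lemma integrable_exp_mul_sum_mul (hf : ∀ i, Measurable (f i))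
    (hfb : ∀ᵐ ω ∂μ, ∀ i, |f i ω| ≤ 1) (a : ι → ℝ) (l : ℝ) :
    Integrable (fun ω => exp (l * ∑ i, a i * f i ω)) μ := by
  refine integrable_exp_mul_of_mem_Icc (a := -∑ i, |a i|) (b := ∑ i, |a i|) (by fun_prop) ?_
  filter_upwards [ae_abs_sum_mul_le hfb a] with ω hω
  exact abs_le.1 hω

lemma mgf_sum_mul_le (hf : ∀ i, Measurable (f i))
    (hfb : ∀ᵐ ω ∂μ, ∀ i, |f i ω| ≤ 1) (a : ι → ℝ) (l : ℝ) :
    mgf (fun ω => ∑ i, a i * f i ω) μ l ≤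
      (∑ t : Finset ι, |∫ ω, ∏ i ∈ t, f i ω ∂μ|) * exp ((∑ i, a i ^ 2) * l ^ 2 / 2) := by
  have h_pointwise : ∀ᵐ ω ∂μ, exp (l * ∑ i, a i * f i ω) ≤
      ∏ i, (sinh (l * a i) * f i ω + cosh (l * a i)) := by
    filter_upwards [hfb] with ω hω
    rw [Finset.mul_sum, exp_sum]
    gcongr with i
    rw [← mul_assoc]
    exact exp_mul_le_sinh_mul_add_cosh _ (hω i)
  have h_cosh : ∏ i, cosh (l * a i) ≤ exp ((∑ i, a i ^ 2) * l ^ 2 / 2) := by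
    calc ∏ i, cosh (l * a i) ≤ ∏ i, exp ((l * a i) ^ 2 / 2) := by
          gcongr with i
          exact cosh_le_exp_half_sq _
      _ = exp ((∑ i, a i ^ 2) * l ^ 2 / 2) := by
          rw [← exp_sum]
          congr 1
          rw [Finset.sum_mul, Finset.sum_div]
          exact Finset.sum_congr rfl fun i _ => by ring
  calc mgf (fun ω => ∑ i, a i * f i ω) μ l
      ≤ ∫ ω, ∏ i, (sinh (l * a i) * f i ω + cosh (l * a i)) ∂μ :=
        integral_mono_ae (integrable_exp_mul_sum_mul hf hfb a l)
          (integrable_prod_mul_add hf hfb _ _) h_pointwise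
    _ ≤ (∏ i, cosh (l * a i)) * ∑ t : Finset ι, |∫ ω, ∏ i ∈ t, f i ω ∂μ| :=
        integral_prod_mul_add_le_s11 hf hfb fun i => abs_sinh_le_cosh _
    _ ≤ _ := by
        rw [mul_comm]
        gcongr

end Products

lemma sum_abs_integral_prod_le_one_add_tsum {Ω : Type*} [MeasurableSpace Ω] (P : Measure Ω)
    [IsProbabilityMeasure P] (φ : ℕ → Ω → ℝ)
    (hquasi : Summable (fun S : {S : Finset ℕ // S.Nonempty} =>
      |∫ ω, ∏ j ∈ S.1, φ j ω ∂P|)) (n : ℕ) :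
    ∑ t : Finset (Fin n), |∫ ω, ∏ i ∈ t, φ (i : ℕ) ω ∂P| ≤
      1 + ∑' S : {S : Finset ℕ // S.Nonempty}, |∫ ω, ∏ j ∈ S.1, φ j ω ∂P| := by
  classical
  let e : {t : Finset (Fin n) // t.Nonempty} → {S : Finset ℕ // S.Nonempty} :=
    fun t => ⟨t.1.map Fin.valEmbedding, t.2.map⟩
  have he : Function.Injective e := fun t t' h =>
    Subtype.ext (Finset.map_injective _ (congrArg Subtype.val h))
  calc ∑ t : Finset (Fin n), |∫ ω, ∏ i ∈ t, φ (i : ℕ) ω ∂P|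
      = 1 + ∑ t ∈ (Finset.univ : Finset (Finset (Fin n))).erase ∅,
          |∫ ω, ∏ i ∈ t, φ (i : ℕ) ω ∂P| := by
        rw [← Finset.add_sum_erase _ _ (Finset.mem_univ ∅)]
        simp
    _ = 1 + ∑' t, |∫ ω, ∏ j ∈ (e t).1, φ j ω ∂P| := by
        rw [tsum_fintype, Finset.sum_subtype (p := Finset.Nonempty) (F := inferInstance) _
          fun t => by simp [Finset.nonempty_iff_ne_empty]]
        simp [e, Finset.prod_map]
    _ ≤ _ := by
        gcongr
        exact tsum_comp_le_tsum_of_inj hquasi (fun _ => abs_nonneg _) he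

theorem stmt_11 {Ω : Type*} [MeasurableSpace Ω] (P : Measure Ω) [IsProbabilityMeasure P]
    (φ : ℕ → Ω → ℝ) (hφm : ∀ k, Measurable (φ k))
    (hφb : ∀ k, ∀ᵐ ω ∂P, |φ k ω| ≤ 1)
    (hquasi : Summable (fun S : {S : Finset ℕ // S.Nonempty} =>
      |∫ ω, ∏ j ∈ S.1, φ j ω ∂P|)) :
    ∃ c₁ c₂ : ℝ, 0 < c₁ ∧ 0 < c₂ ∧
      ∀ (n : ℕ) (a : Fin n → ℝ), a ≠ 0 →
        ∫ ω, Real.exp (c₁ * (∑ k, a k * φ k ω) ^ 2 / ∑ k, (a k) ^ 2) ∂P ≤ c₂ := by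
  set μ₀ := ∑' S : {S : Finset ℕ // S.Nonempty}, |∫ ω, ∏ j ∈ S.1, φ j ω ∂P|
  have hμ₀ : 0 ≤ μ₀ := tsum_nonneg fun _ => abs_nonneg _
  have hr : exp (-(1 / 8)) < 1 := exp_lt_one_iff.2 (by norm_num)
  refine ⟨1 / 8, 2 * (1 + μ₀) * exp (1 / 8) / (1 - exp (-(1 / 8))), by norm_num,
    div_pos (mul_pos (mul_pos two_pos (by linarith)) (exp_pos _)) (by linarith), fun n a ha => ?_⟩
  have hb : ∀ᵐ ω ∂P, ∀ k : Fin n, |φ k ω| ≤ 1 := by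
    filter_upwards [ae_all_iff.2 hφb] with ω hω k using hω k
  have hv : 0 < ∑ k, a k ^ 2 := by
    obtain ⟨k, hk⟩ := Function.ne_iff.1 ha
    exact Finset.sum_pos' (fun k _ => sq_nonneg _)
      ⟨k, Finset.mem_univ k, pow_two_pos_of_ne_zero hk⟩
  have hf : ∀ k : Fin n, Measurable (φ k) := fun k => hφm k
  have h := integral_exp_sq_div_le_of_mgf_le (C := 1 + μ₀) (by fun_prop) (by linarith) hv
    (integrable_exp_mul_sum_mul hf hb a) fun l =>
      (mgf_sum_mul_le hf hb a l).trans
        (by gcongr; exact sum_abs_integral_prod_le_one_add_tsum P φ hquasi n)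
  convert h using 4 with ω
  ring
end

section
/- Let λ > 2 and let τ : ℕ → ℝ satisfy τ(1) ≥ 1 and τ(k+1) > λ·τ(k) for all k ≥ 1. Then the sequence t_k(x) = sin(2π τ(k) x) on the probability space [0,1) with Lebesgue measure is quasi-multiplicative, and its multiplicative error satisfies μ = ∑_S |∫_0^1 ∏_{j∈S} sin(2π τ(j) x) dx| ≤ λ(λ−1)/(π(λ−2)²), the sum taken over all finite nonempty subsets S of the positive integers. -/
/-!
Expanding each sine as `(e^{iθx} - e^{-iθx}) / 2i` writes `∏_{j ∈ S} sin(2π τ_j x)` as `2^{-|S|}`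
times a signed sum of `2^{|S|}` exponentials with frequencies `2π (∑_T τ_j - ∑_{S∖T} τ_j)`.
With `m = max S`, lacunarity gives `∑_{j < m} τ_j ≤ τ_m / (λ - 1)`, so every such frequency is at
least `2π τ_m (λ - 2)/(λ - 1)` in absolute value, and each exponential integrates to at most
`2 / |frequency|`. Hence the integral for `S` is at most `(λ - 1) / (π (λ - 2) λ^{m-1})`. There
are `2^{m-1}` sets with maximum `m`, and summing the geometric series in `2/λ` gives the bound.
-/

open Finset

section Exponentials

open Complex

theorem Complex.sin_eq_mul_exp_add_neg_exp (z : ℂ) :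
    sin z = (2 * I)⁻¹ * (exp (z * I) + -exp (-z * I)) := by
  rw [Complex.sin]; field_simp; ring_nf; rw [I_sq]; ring

theorem prod_sin_mul_eq_sum_exp {ι : Type*} [DecidableEq ι] (S : Finset ι) (ω : ι → ℝ) (x : ℝ) :
    ((∏ j ∈ S, Real.sin (ω j * x) : ℝ) : ℂ) = ∑ T ∈ S.powerset,
      (2 * I)⁻¹ ^ #S * (-1) ^ #(S \ T) *
        exp (((∑ j ∈ T, ω j - ∑ j ∈ S \ T, ω j : ℝ) : ℂ) * I * x) := by
  have hexp (U : Finset ι) (c : ℂ) :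
      ∏ j ∈ U, exp (c * (ω j * x) * I) = exp (c * (∑ j ∈ U, (ω j : ℂ)) * I * x) := by
    rw [← exp_sum, mul_sum, sum_mul, sum_mul]
    exact congrArg exp (sum_congr rfl fun j _ => by ring)
  push_cast [Complex.sin_eq_mul_exp_add_neg_exp, prod_mul_distrib, prod_add, mul_sum]
  refine sum_congr rfl fun T _ => ?_
  have hT := hexp T 1
  have hST := hexp (S \ T) (-1)
  simp only [one_mul, neg_one_mul] at hT hST
  rw [prod_neg, hT, hST, prod_const, sub_mul, sub_mul, sub_eq_add_neg, exp_add, neg_mul, neg_mul]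
  ring

theorem norm_intervalIntegral_exp_le (a b : ℝ) {θ : ℝ} (hθ : θ ≠ 0) :
    ‖∫ x in a..b, exp (θ * I * x)‖ ≤ 2 / |θ| := by
  have hc : (θ : ℂ) * I ≠ 0 := by simp [hθ]
  rw [integral_exp_mul_complex hc, norm_div, norm_mul, norm_I, mul_one, norm_real, Real.norm_eq_abs]
  gcongr
  refine (norm_sub_le _ _).trans_eq ?_
  rw [mul_comm _ (b : ℂ), mul_comm _ (a : ℂ), ← mul_assoc, ← mul_assoc]
  push_cast [← ofReal_mul, norm_exp_ofReal_mul_I]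
  norm_num

theorem abs_intervalIntegral_prod_sin_le {ι : Type*} [DecidableEq ι] (S : Finset ι) (ω : ι → ℝ)
    (a b : ℝ) {δ : ℝ} (hδ : 0 < δ)
    (hfreq : ∀ T ⊆ S, δ ≤ |∑ j ∈ T, ω j - ∑ j ∈ S \ T, ω j|) :
    |∫ x in a..b, ∏ j ∈ S, Real.sin (ω j * x)| ≤ 2 / δ := by
  rw [← Real.norm_eq_abs, ← norm_real, ← intervalIntegral.integral_ofReal]
  simp_rw [prod_sin_mul_eq_sum_exp]
  rw [intervalIntegral.integral_finsetSum fun T _ =>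
    Continuous.intervalIntegrable (by fun_prop) _ _]
  calc _ ≤ ∑ T ∈ S.powerset, 2⁻¹ ^ #S * (2 / δ) := by
        refine norm_sum_le_of_le _ fun T hT => ?_
        have hθ := hfreq T (mem_powerset.mp hT)
        rw [intervalIntegral.integral_const_mul, norm_mul]
        simp only [norm_mul, norm_pow, norm_inv, norm_neg, norm_one, one_pow, mul_one, norm_I,
          Complex.norm_ofNat]
        gcongr
        exact (norm_intervalIntegral_exp_le a b (abs_pos.mp (hδ.trans_le hθ))).trans
          (div_le_div_of_nonneg_left zero_le_two hδ hθ)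
    _ = 2 / δ := by
        rw [sum_const, card_powerset, nsmul_eq_mul, ← mul_assoc, Nat.cast_pow, ← mul_pow]
        norm_num

end Exponentials

theorem abs_sub_sum_erase_le_abs_sum_sub_sum_sdiff {ι : Type*} [DecidableEq ι] {S T : Finset ι}
    (hT : T ⊆ S) (w : ι → ℝ) {m : ι} (hm : m ∈ S) :
    |w m| - ∑ j ∈ S.erase m, |w j| ≤ |∑ j ∈ T, w j - ∑ j ∈ S \ T, w j| := by
  have habs (j : ι) : |if j ∈ T then w j else -w j| = |w j| := by split_ifs <;> simp
  have hsigned : ∑ j ∈ T, w j - ∑ j ∈ S \ T, w j = ∑ j ∈ S, if j ∈ T then w j else -w j := by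
    rw [sum_ite, filter_mem_eq_inter, inter_eq_right.mpr hT, filter_notMem_eq_sdiff,
      sum_neg_distrib, sub_eq_add_neg]
  rw [hsigned, ← add_sum_erase _ _ hm, ← habs m]
  calc _ ≤ |if m ∈ T then w m else -w m| - |∑ j ∈ S.erase m, if j ∈ T then w j else -w j| := by
        gcongr
        exact (abs_sum_le_sum_abs _ _).trans_eq (sum_congr rfl fun j _ => habs j)
    _ ≤ _ := abs_sub_abs_le_abs_add _ _

section Lacunary

variable {lam : ℝ} {τ : ℕ → ℝ}

theorem nonneg_of_lacunary (hlam : 0 ≤ lam) (hτ1 : 0 ≤ τ 1)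
    (hτ : ∀ k, 1 ≤ k → lam * τ k < τ (k + 1)) {m : ℕ} (hm : 1 ≤ m) : 0 ≤ τ m := by
  induction m, hm using Nat.le_induction with
  | base => exact hτ1
  | succ k hk ih => exact (mul_nonneg hlam ih).trans (hτ k hk).le

theorem pow_le_of_lacunary (hlam : 0 ≤ lam) (hτ1 : 1 ≤ τ 1)
    (hτ : ∀ k, 1 ≤ k → lam * τ k < τ (k + 1)) {m : ℕ} (hm : 1 ≤ m) : lam ^ (m - 1) ≤ τ m := by
  induction m, hm using Nat.le_induction with
  | base => simpa using hτ1
  | succ k hk ih =>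
    calc lam ^ (k + 1 - 1) = lam * lam ^ (k - 1) := by
          rw [Nat.add_sub_cancel, ← pow_succ', Nat.sub_add_cancel hk]
      _ ≤ lam * τ k := by gcongr
      _ ≤ τ (k + 1) := (hτ k hk).le

theorem sum_Ico_le_of_lacunary (hlam : 1 < lam) (hτ1 : 0 ≤ τ 1)
    (hτ : ∀ k, 1 ≤ k → lam * τ k < τ (k + 1)) {m : ℕ} (hm : 1 ≤ m) :
    ∑ j ∈ Ico 1 m, τ j ≤ τ m / (lam - 1) := by
  have hlam1 : 0 < lam - 1 := by linarith
  induction m, hm using Nat.le_induction with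
  | base => simpa using div_nonneg hτ1 hlam1.le
  | succ k hk ih =>
    rw [sum_Ico_succ_top hk, le_div_iff₀ hlam1]
    rw [le_div_iff₀ hlam1] at ih
    linarith [hτ k hk]

theorem sum_erase_max'_le_of_lacunary (hlam : 1 < lam) (hτ1 : 0 ≤ τ 1)
    (hτ : ∀ k, 1 ≤ k → lam * τ k < τ (k + 1)) {S : Finset ℕ} (hS : S.Nonempty) (h0 : 0 ∉ S) :
    ∑ j ∈ S.erase (S.max' hS), τ j ≤ τ (S.max' hS) / (lam - 1) := by
  have hpos {j : ℕ} (hj : j ∈ S) : 1 ≤ j := Nat.pos_of_ne_zero (ne_of_mem_of_not_mem hj h0)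
  refine (sum_le_sum_of_subset_of_nonneg (fun j hj => ?_) fun j hj _ => ?_).trans
    (sum_Ico_le_of_lacunary hlam hτ1 hτ (hpos (S.max'_mem hS)))
  · have hjS := mem_of_mem_erase hj
    exact mem_Ico.mpr ⟨hpos hjS, lt_of_le_of_ne (S.le_max' j hjS) (ne_of_mem_erase hj)⟩
  · exact nonneg_of_lacunary (by linarith) hτ1 hτ (mem_Ico.mp hj).1

end Lacunary

open Real

theorem abs_intervalIntegral_prod_sin_lacunary_le {lam : ℝ} {τ : ℕ → ℝ} (hlam : 2 < lam)
    (hτ1 : 1 ≤ τ 1) (hτ : ∀ k, 1 ≤ k → lam * τ k < τ (k + 1)) {S : Finset ℕ} (hS : S.Nonempty)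
    (h0 : 0 ∉ S) :
    |∫ x in (0 : ℝ)..1, ∏ j ∈ S, Real.sin (2 * π * τ j * x)| ≤
      (lam - 1) / (π * (lam - 2)) * lam⁻¹ ^ (S.max' hS - 1) := by
  set m := S.max' hS
  have hpos {j : ℕ} (hj : j ∈ S) : 1 ≤ j := Nat.pos_of_ne_zero (ne_of_mem_of_not_mem hj h0)
  have hm := hpos (S.max'_mem hS)
  have hnonneg {j : ℕ} (hj : j ∈ S) : 0 ≤ τ j :=
    nonneg_of_lacunary (by linarith) (by linarith) hτ (hpos hj)
  have hτm : lam ^ (m - 1) ≤ τ m := pow_le_of_lacunary (by linarith) hτ1 hτ hm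
  have hτm0 : 0 < τ m := (pow_pos (by linarith) _).trans_le hτm
  have hlam1 : 0 < lam - 1 := by linarith
  have hlam2 : 0 < lam - 2 := by linarith
  have htail : ∑ j ∈ S.erase m, τ j ≤ τ m / (lam - 1) :=
    sum_erase_max'_le_of_lacunary (by linarith) (by linarith) hτ hS h0
  have hfreq (T : Finset ℕ) (hT : T ⊆ S) : 2 * π * ((lam - 2) / (lam - 1) * τ m) ≤
      |∑ j ∈ T, 2 * π * τ j - ∑ j ∈ S \ T, 2 * π * τ j| := by
    refine le_trans ?_ (abs_sub_sum_erase_le_abs_sum_sub_sum_sdiff hT _ (S.max'_mem hS))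
    have habs {j : ℕ} (hj : j ∈ S) : |2 * π * τ j| = 2 * π * τ j :=
      abs_of_nonneg (by have := hnonneg hj; positivity)
    rw [habs (S.max'_mem hS), sum_congr rfl fun j hj => habs (mem_of_mem_erase hj),
      ← mul_sum]
    have : (lam - 2) / (lam - 1) * τ m = τ m - τ m / (lam - 1) := by field_simp; ring
    rw [this, mul_sub]
    gcongr
  calc _ ≤ 2 / (2 * π * ((lam - 2) / (lam - 1) * τ m)) :=
        abs_intervalIntegral_prod_sin_le S (fun j => 2 * π * τ j) 0 1 (by positivity) hfreq
    _ = (lam - 1) / (π * (lam - 2)) / τ m := by field_simp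
    _ ≤ (lam - 1) / (π * (lam - 2)) / lam ^ (m - 1) := by gcongr
    _ = _ := by rw [div_eq_mul_inv, inv_pow]

theorem sum_comp_le_tsum_of_card_fiber_le {ι : Type*} (u : Finset ι) (g : ι → ℕ) {f : ℕ → ℝ}
    {N : ℕ → ℕ} (hf : ∀ n, 0 ≤ f n) (hs : Summable fun n => N n * f n)
    (hN : ∀ n, #{i ∈ u | g i = n} ≤ N n) :
    ∑ i ∈ u, f (g i) ≤ ∑' n, N n * f n := by
  rw [sum_comp]
  calc _ ≤ ∑ n ∈ u.image g, N n * f n :=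
        sum_le_sum fun n _ => by
          rw [nsmul_eq_mul]; exact mul_le_mul_of_nonneg_right (by exact_mod_cast hN n) (hf n)
    _ ≤ _ := hs.sum_le_tsum _ fun n _ => mul_nonneg (Nat.cast_nonneg _) (hf n)

theorem card_filter_max'_sub_one_eq_le (u : Finset {S : Finset ℕ // S.Nonempty ∧ 0 ∉ S})
    (n : ℕ) : #{S ∈ u | S.1.max' S.2.1 - 1 = n} ≤ 2 ^ n := by
  have hfiber {S : {S : Finset ℕ // S.Nonempty ∧ 0 ∉ S}} (hS : S.1.max' S.2.1 - 1 = n) :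
      n + 1 ∈ S.1 ∧ S.1.erase (n + 1) ⊆ Icc 1 n := by
    have hpos {j : ℕ} (hj : j ∈ S.1) := Nat.pos_of_ne_zero (ne_of_mem_of_not_mem hj S.2.2)
    have hmax : S.1.max' S.2.1 = n + 1 := by have := hpos (S.1.max'_mem S.2.1); omega
    refine ⟨hmax ▸ S.1.max'_mem S.2.1, fun j hj => ?_⟩
    have hjS := mem_of_mem_erase hj
    have := hmax ▸ S.1.le_max' j hjS
    have := hpos hjS
    have := ne_of_mem_erase hj
    exact mem_Icc.mpr ⟨by omega, by omega⟩
  calc _ ≤ #(Icc 1 n).powerset := by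
        refine card_le_card_of_injOn (fun S => S.1.erase (n + 1)) (fun S hS => ?_)
          fun S hS S' hS' hSS' => ?_
        · exact mem_powerset.mpr (hfiber (mem_filter.mp hS).2).2
        · rw [mem_coe, mem_filter] at hS hS'
          refine Subtype.ext ?_
          rw [← insert_erase (hfiber hS.2).1, ← insert_erase (hfiber hS'.2).1]
          exact congrArg (insert (n + 1)) hSS'
    _ = 2 ^ n := by simp

theorem hasSum_two_pow_mul_inv_pow {lam : ℝ} (hlam : 2 < lam) (C : ℝ) :
    HasSum (fun n => ((2 ^ n : ℕ) : ℝ) * (C * lam⁻¹ ^ n)) (C * lam / (lam - 2)) := by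
  have hr : 2 / lam < 1 := (div_lt_one (by linarith)).mpr hlam
  have hterm : (fun n => ((2 ^ n : ℕ) : ℝ) * (C * lam⁻¹ ^ n)) = fun n => C * (2 / lam) ^ n := by
    ext n; push_cast; rw [div_eq_mul_inv, mul_pow]; ring
  have hsum : C * lam / (lam - 2) = C * (1 - 2 / lam)⁻¹ := by
    have : lam - 2 ≠ 0 := by linarith
    field_simp
  rw [hterm, hsum]
  exact (hasSum_geometric_of_lt_one (by positivity) hr).mul_left C

open MeasureTheory

theorem stmt_12 (lam : ℝ) (hlam : 2 < lam)
    (τ : ℕ → ℝ) (hτ1 : 1 ≤ τ 1) (hτ : ∀ k, 1 ≤ k → lam * τ k < τ (k + 1)) :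
    Summable (fun S : {S : Finset ℕ // S.Nonempty ∧ 0 ∉ S} =>
      |∫ x in Set.Ico (0 : ℝ) 1, ∏ j ∈ S.1, Real.sin (2 * π * τ j * x)|) ∧
    (∑' S : {S : Finset ℕ // S.Nonempty ∧ 0 ∉ S},
      |∫ x in Set.Ico (0 : ℝ) 1, ∏ j ∈ S.1, Real.sin (2 * π * τ j * x)|) ≤
      lam * (lam - 1) / (π * (lam - 2) ^ 2) := by
  set C := (lam - 1) / (π * (lam - 2))
  have hC : 0 ≤ C := div_nonneg (by linarith) (mul_nonneg pi_pos.le (by linarith))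
  have hgeom := hasSum_two_pow_mul_inv_pow hlam C
  have hbound (u : Finset {S : Finset ℕ // S.Nonempty ∧ 0 ∉ S}) :
      ∑ S ∈ u, |∫ x in Set.Ico (0 : ℝ) 1, ∏ j ∈ S.1, Real.sin (2 * π * τ j * x)| ≤
        lam * (lam - 1) / (π * (lam - 2) ^ 2) := calc
    _ ≤ ∑ S ∈ u, C * lam⁻¹ ^ (S.1.max' S.2.1 - 1) := sum_le_sum fun S _ => by
        rw [integral_Ico_eq_integral_Ioo, ← integral_Ioc_eq_integral_Ioo,
          ← intervalIntegral.integral_of_le zero_le_one]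
        exact abs_intervalIntegral_prod_sin_lacunary_le hlam hτ1 hτ S.2.1 S.2.2
    _ ≤ ∑' n, ((2 ^ n : ℕ) : ℝ) * (C * lam⁻¹ ^ n) :=
        sum_comp_le_tsum_of_card_fiber_le u _ (fun n => mul_nonneg hC (by positivity))
          hgeom.summable (card_filter_max'_sub_one_eq_le u)
    _ = _ := by
        rw [hgeom.tsum_eq]
        have : lam - 2 ≠ 0 := by linarith
        simp only [C]
        field_simp
  have hsummable := summable_of_sum_le (fun _ => abs_nonneg _) hbound
  exact ⟨hsummable, hsummable.tsum_le_of_sum_le hbound⟩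
end
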